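/- arXiv:2601.02162 — 10 statements merged into one kernel-verified Lean document; each statement's English description precedes it below -/
import Mathlib

section
/- Let q be a prime power and n ≥ 1. In the multivariate polynomial ring 𝔽_q[X₁,…,Xₙ], the Moore determinant Δ(X₁,…,Xₙ), defined as the determinant of the n×n matrix whose (i,j) entry is X_j^{q^{i−1}}, satisfies the factorization Δ(X₁,…,Xₙ) = ∏_{i=1}^{n} ∏_{(k₁,…,k_{i−1}) ∈ 𝔽_q^{i−1}} ( X_i + k₁X₁ + ⋯ + k_{i−1}X_{i−1} ). -/
set_option maxHeartbeats 2000000 in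
open MvPolynomial Matrix Finset in
theorem moore_aux (Fq : Type*) [Field Fq] [Fintype Fq] (n : ℕ) :
    (Matrix.of fun i j : Fin n =>
        (MvPolynomial.X j : MvPolynomial (Fin n) Fq) ^ (Fintype.card Fq) ^ (i : ℕ)).det =
      ∏ i : Fin n, ∏ k : Fin (i : ℕ) → Fq,
        (MvPolynomial.X i +
          ∑ j : Fin (i : ℕ), MvPolynomial.C (k j) * MvPolynomial.X (Fin.castLE i.isLt.le j)) := by
  induction n with
  | zero => simp
  | succ n ih =>
    classical
    set q := Fintype.card Fq with hq
    set p := ringChar Fq with hpdef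
    haveI hcFq : CharP Fq p := ringChar.charP Fq
    haveI hfact' : Fact (Nat.Prime (ringChar Fq)) := ⟨by
      have := Fintype.one_lt_card (α := Fq)
      exact CharP.char_is_prime Fq (ringChar Fq)⟩
    obtain ⟨e, hp, he⟩ : ∃ e : ℕ+, Nat.Prime p ∧ q = p ^ (e : ℕ) := FiniteField.card Fq p
    have hq1 : 1 < q := Fintype.one_lt_card
    set S := MvPolynomial (Fin n) Fq with hS
    haveI : CharP S p := inferInstance
    set K := FractionRing S with hK
    haveI : CharP K p := charP_of_injective_algebraMap (IsFractionRing.injective S K) p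
    haveI : ExpChar K p := .prime hp
    set ι := algebraMap S K with hι
    have hιinj : Function.Injective ι := IsFractionRing.injective S K
    set Δ : S := (Matrix.of fun i j : Fin n => (X j : S) ^ q ^ (i : ℕ)).det with hΔdef
    -- factors are nonzero
    have factor_ne : ∀ (N : ℕ) (i : Fin N) (k : Fin (i : ℕ) → Fq),
        (X i + ∑ j : Fin (i : ℕ), MvPolynomial.C (k j) * X (Fin.castLE i.isLt.le j)
          : MvPolynomial (Fin N) Fq) ≠ 0 := by
      intro N i k h
      have h2 := congrArg (aeval (Pi.single i (1 : Fq))) h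
      rw [map_add, aeval_X, map_sum, map_zero, Pi.single_eq_same] at h2
      rw [Finset.sum_eq_zero, add_zero] at h2
      · exact one_ne_zero h2
      · intro j _
        have hne : (Fin.castLE i.isLt.le j) ≠ i :=
          Fin.ne_of_val_ne (by simpa using j.isLt.ne)
        simp [Pi.single_eq_of_ne hne]
    have hΔ0 : Δ ≠ 0 := by
      rw [ih]
      exact Finset.prod_ne_zero_iff.2 fun i _ =>
        Finset.prod_ne_zero_iff.2 fun k _ => factor_ne n i k
    set b : Fin (n + 1) → Polynomial S :=
      Fin.lastCases Polynomial.X (fun j => Polynomial.C (X j)) with hb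
    set M' : Matrix (Fin (n+1)) (Fin (n+1)) (Polynomial S) :=
      Matrix.of (fun i j => b j ^ q ^ (i : ℕ)) with hM'
    set f := M'.det with hf
    set Φ : Polynomial S →+* MvPolynomial (Fin (n+1)) Fq :=
      Polynomial.eval₂RingHom
        (MvPolynomial.rename (Fin.castSucc : Fin n → Fin (n+1)) : S →ₐ[Fq] _).toRingHom
        (X (Fin.last n)) with hΦ
    have hΦb : ∀ j : Fin (n+1), Φ (b j) = X j := by
      intro j
      induction j using Fin.lastCases with
      | last => simp [hb, hΦ]
      | cast j =>
        rw [hb, hΦ]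
        simp only [Fin.lastCases_castSucc]
        rw [Polynomial.coe_eval₂RingHom, Polynomial.eval₂_C]
        exact rename_X _ _
    have step1 : (Matrix.of fun i j : Fin (n+1) =>
        (X j : MvPolynomial (Fin (n+1)) Fq) ^ q ^ (i : ℕ)).det = Φ f := by
      rw [hf, RingHom.map_det]
      refine congrArg _ (Matrix.ext fun i j => ?_)
      rw [RingHom.mapMatrix_apply, Matrix.map_apply, hM']
      show _ = Φ (b j ^ q ^ (i:ℕ))
      rw [map_pow, hΦb, Matrix.of_apply]
    have hexpand : f = ∑ i : Fin (n+1),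
        Polynomial.C ((-1) ^ ((i : ℕ) + n) *
          (Matrix.of fun i' j : Fin n => (X j : S) ^ q ^ ((i.succAbove i' : ℕ))).det) *
          Polynomial.X ^ q ^ (i : ℕ) := by
      rw [hf, Matrix.det_succ_column M' (Fin.last n)]
      refine Finset.sum_congr rfl fun i _ => ?_
      have hsub : M'.submatrix i.succAbove (Fin.last n).succAbove =
          (Polynomial.C : S →+* Polynomial S).mapMatrix
            (Matrix.of fun i' j : Fin n => (X j : S) ^ q ^ ((i.succAbove i' : ℕ))) := by
        ext i' j
        simp [hM', hb, Fin.succAbove_last, RingHom.mapMatrix_apply, map_pow]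
      have hlastcol : M' i (Fin.last n) = Polynomial.X ^ q ^ (i : ℕ) := by
        simp [hM', hb]
      rw [hsub, ← RingHom.map_det, hlastcol, Fin.val_last]
      rw [_root_.map_mul Polynomial.C, _root_.map_pow, Polynomial.C_neg, Polynomial.C_1]
      ring
    have hcoef : f.coeff (q ^ n) = Δ := by
      rw [hexpand, Polynomial.finset_sum_coeff]
      rw [Finset.sum_eq_single (Fin.last n)]
      · rw [Polynomial.coeff_C_mul, Polynomial.coeff_X_pow, Fin.val_last, if_pos rfl,
          mul_one, Even.neg_one_pow ⟨n, rfl⟩, one_mul, hΔdef]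
        congr 1
        ext i' j
        simp [Fin.succAbove_last]
      · intro i0 _ hne
        rw [Polynomial.coeff_C_mul, Polynomial.coeff_X_pow, if_neg, mul_zero]
        intro hqe
        exact hne (Fin.ext (by rw [Fin.val_last]; exact (Nat.pow_right_injective hq1 hqe).symm))
      · intro h; exact absurd (Finset.mem_univ _) h
    have hdeg : f.natDegree ≤ q ^ n := by
      rw [hexpand]
      refine Polynomial.natDegree_sum_le_of_forall_le _ _ fun i _ => ?_
      refine (Polynomial.natDegree_C_mul_le _ _).trans ?_
      rw [Polynomial.natDegree_X_pow]
      exact Nat.pow_le_pow_right (Nat.lt_of_lt_of_le Nat.zero_lt_one hq1.le) i.is_le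
    set sc : (Fin n → Fq) → S := fun c => ∑ j : Fin n, MvPolynomial.C (c j) * X j with hsc
    set r : (Fin n → Fq) → K := fun c => ι (sc c) with hr
    set F := f.map ι with hF
    have hcoefF : F.coeff (q ^ n) = ι Δ := by rw [hF, Polynomial.coeff_map, hcoef]
    have hcoefF0 : F.coeff (q ^ n) ≠ 0 := by
      rw [hcoefF]
      intro h0
      exact hΔ0 (hιinj (by rw [h0, map_zero]))
    have hF0 : F ≠ 0 := fun h => hcoefF0 (by rw [h, Polynomial.coeff_zero])
    have hFdeg : F.natDegree = q ^ n :=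
      le_antisymm (Polynomial.natDegree_map_le.trans hdeg)
        (Polynomial.le_natDegree_of_ne_zero hcoefF0)
    have hlead : F.leadingCoeff = ι Δ := by
      rw [Polynomial.leadingCoeff, hFdeg, hcoefF]
    have hqpow : ∀ m : ℕ, q ^ m = p ^ ((e : ℕ) * m) := fun m => by
      rw [he, pow_mul]
    have hneg_pow : ∀ (x : K) (m : ℕ), (-x) ^ p ^ m = -(x ^ p ^ m) := by
      intro x m
      have h0 : ((0 : K) - x) ^ p ^ m = (0 : K) ^ p ^ m - x ^ p ^ m := sub_pow_char_pow _ _ _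
      rw [zero_sub, zero_pow (pow_pos hp.pos m).ne', zero_sub] at h0
      exact h0
    have hroot : ∀ c : Fin n → Fq, F.eval (-(r c)) = 0 := by
      intro c
      have hev : F.eval (-(r c)) = Polynomial.eval₂ ι (-(r c)) f := by
        rw [hF, Polynomial.eval_map]
      rw [hev]
      have : Polynomial.eval₂ ι (-(r c)) f =
          ((Polynomial.eval₂RingHom ι (-(r c))).mapMatrix M').det := by
        rw [hf, ← RingHom.map_det]; rfl
      rw [this, ← Matrix.exists_mulVec_eq_zero_iff]
      refine ⟨Fin.lastCases 1 (fun j => ι (MvPolynomial.C (c j))), ?_, ?_⟩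
      · intro h0
        have := congrFun h0 (Fin.last n)
        rw [Fin.lastCases_last] at this
        exact one_ne_zero this
      · funext i
        simp only [Matrix.mulVec, dotProduct, Pi.zero_apply]
        rw [Fin.sum_univ_castSucc]
        have hentry : ∀ j : Fin n,
            (Polynomial.eval₂RingHom ι (-(r c))).mapMatrix M' i j.castSucc = (ι (X j)) ^ q ^ (i : ℕ) := by
          intro j
          simp [RingHom.mapMatrix_apply, hM', hb, Polynomial.eval₂_pow, Polynomial.eval₂_C]
        have hlastentry :
            (Polynomial.eval₂RingHom ι (-(r c))).mapMatrix M' i (Fin.last n) = (-(r c)) ^ q ^ (i : ℕ) := by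
          simp [RingHom.mapMatrix_apply, hM', hb, Polynomial.eval₂_pow, Polynomial.eval₂_X]
        rw [hlastentry]
        simp only [hentry, Fin.lastCases_castSucc, Fin.lastCases_last, mul_one]
        have hrc : r c = ∑ j : Fin n, ι (MvPolynomial.C (c j)) * ι (X j) := by
          show ι (sc c) = _
          have : sc c = ∑ j : Fin n, MvPolynomial.C (c j) * X j := rfl
          rw [this, map_sum ι]
          exact Finset.sum_congr rfl fun j _ => _root_.map_mul ι _ _
        have hpowsum : (r c) ^ q ^ (i : ℕ) = ∑ j : Fin n, ι (MvPolynomial.C (c j)) * (ι (X j)) ^ q ^ (i : ℕ) := by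
          rw [hrc, hqpow, sum_pow_char_pow]
          refine Finset.sum_congr rfl fun j _ => ?_
          rw [mul_pow, ← hqpow]
          congr 1
          rw [← _root_.map_pow, ← _root_.map_pow, FiniteField.pow_card_pow]
        rw [hqpow, hneg_pow, ← hqpow, hpowsum, add_neg_eq_zero]
        exact Finset.sum_congr rfl fun j _ => mul_comm _ _
    have hinjr : Function.Injective fun c : Fin n → Fq => -(r c) := by
      intro c c' h
      have h2 : r c = r c' := neg_injective h
      have h3 : sc c = sc c' := hιinj h2
      rw [hsc] at h3
      funext j0
      have h4 := congrArg (aeval (Pi.single j0 (1 : Fq))) h3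
      simpa [map_sum, Pi.single_apply, mul_ite, Finset.sum_ite_eq'] using h4
    set T : Finset K := Finset.image (fun c : Fin n → Fq => -(r c)) Finset.univ with hT
    have hTcard : T.card = q ^ n := by
      rw [hT, Finset.card_image_of_injective _ hinjr, Finset.card_univ]
      simp [hq]
    have hTroots : T.val ≤ F.roots := by
      rw [Multiset.le_iff_count]
      intro a
      by_cases ha : a ∈ T
      · rw [Multiset.count_eq_one_of_mem T.nodup ha]
        rw [Multiset.one_le_count_iff_mem, Polynomial.mem_roots hF0]
        obtain ⟨c, -, rfl⟩ := Finset.mem_image.1 ha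
        exact hroot c
      · rw [Multiset.count_eq_zero_of_notMem ha]
        exact Nat.zero_le _
    have hroots_eq : F.roots = T.val := by
      refine (Multiset.eq_of_le_of_card_le hTroots ?_).symm
      calc Multiset.card F.roots ≤ F.natDegree := Polynomial.card_roots' F
        _ = Multiset.card T.val := by rw [hFdeg, ← hTcard]; rfl
    have hsplits : Polynomial.Splits F := by
      rw [Polynomial.splits_iff_card_roots, hroots_eq, hFdeg, ← hTcard]
      rfl
    have hfact : F = Polynomial.C (ι Δ) *
        ∏ c : Fin n → Fq, (Polynomial.X + Polynomial.C (r c)) := by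
      have h1 := hsplits.eq_prod_roots
      rw [hroots_eq, hlead] at h1
      rw [h1]
      congr 1
      rw [Finset.prod_map_val]
      rw [Finset.prod_image (fun a _ b _ h => hinjr h)]
      refine Finset.prod_congr rfl fun c _ => ?_
      rw [Polynomial.C_neg, sub_neg_eq_add]
    set G : Polynomial S := Polynomial.C Δ *
        ∏ c : Fin n → Fq, (Polynomial.X + Polynomial.C (sc c)) with hG
    have hfG : f = G := by
      apply Polynomial.map_injective ι hιinj
      rw [← hF, hfact, hG, Polynomial.map_mul, Polynomial.map_C]
      congr 1
      rw [Polynomial.map_prod]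
      refine Finset.prod_congr rfl fun c _ => ?_
      simp only [Polynomial.map_add, Polynomial.map_X, Polynomial.map_C]
      rfl
    -- now push through Φ
    have hΦC : ∀ s : S, Φ (Polynomial.C s) = rename Fin.castSucc s := fun s => by
      rw [hΦ, Polynomial.coe_eval₂RingHom, Polynomial.eval₂_C]; rfl
    have hΦfac : ∀ c : Fin n → Fq, Φ (Polynomial.X + Polynomial.C (sc c)) =
        X (Fin.last n) + ∑ j : Fin n, MvPolynomial.C (c j) * X j.castSucc := by
      intro c
      rw [_root_.map_add Φ, hΦC]
      have h1 : Φ Polynomial.X = X (Fin.last n) := by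
        rw [hΦ, Polynomial.coe_eval₂RingHom, Polynomial.eval₂_X]
      rw [h1]
      congr 1
      have h2 : sc c = ∑ j : Fin n, MvPolynomial.C (c j) * X j := rfl
      rw [h2, map_sum]
      refine Finset.sum_congr rfl fun j _ => ?_
      rw [_root_.map_mul, rename_C, rename_X]
    have hrenΔ : rename Fin.castSucc Δ = ∏ i : Fin n, ∏ k : Fin (i : ℕ) → Fq,
        (X i.castSucc + ∑ j : Fin (i : ℕ),
          MvPolynomial.C (k j) * X (Fin.castLE i.castSucc.isLt.le j)
          : MvPolynomial (Fin (n+1)) Fq) := by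
      rw [ih, map_prod]
      refine Finset.prod_congr rfl fun i _ => ?_
      rw [map_prod]
      refine Finset.prod_congr rfl fun k _ => ?_
      rw [_root_.map_add, rename_X, map_sum]
      congr 1
      refine Finset.sum_congr rfl fun j _ => ?_
      rw [_root_.map_mul, rename_C, rename_X]
      exact congrArg _ (congrArg X (Fin.ext (by simp)))
    rw [step1, hfG, hG, _root_.map_mul Φ, map_prod Φ, hΦC, hrenΔ]
    simp only [hΦfac]
    rw [Fin.prod_univ_castSucc (f := fun i : Fin (n+1) => ∏ k : Fin (i : ℕ) → Fq,
      (X i + ∑ j : Fin (i : ℕ), MvPolynomial.C (k j) * X (Fin.castLE i.isLt.le j)))]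
    rfl

/-- The Moore determinant `Δ(X₁,…,Xₙ) = det (X_j^{q^{i-1}})` factors as the product of all
polynomials `X_i + k₁X₁ + ⋯ + k_{i-1}X_{i-1}` over tuples `(k₁,…,k_{i-1}) ∈ 𝔽_q^{i-1}`. -/
theorem moore_determinant_factorization
    (Fq : Type*) [Field Fq] [Fintype Fq] (q : ℕ) (hq : Fintype.card Fq = q)
    (n : ℕ) (hn : 1 ≤ n) :
    (Matrix.of fun i j : Fin n =>
        (MvPolynomial.X j : MvPolynomial (Fin n) Fq) ^ q ^ (i : ℕ)).det =
      ∏ i : Fin n, ∏ k : Fin (i : ℕ) → Fq,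
        (MvPolynomial.X i +
          ∑ j : Fin (i : ℕ), MvPolynomial.C (k j) * MvPolynomial.X (Fin.castLE i.isLt.le j)) := by
  subst hq
  exact moore_aux Fq n
end

section
/- Let q be a prime power, F a field which is an 𝔽_q-algebra, n ≥ 1, and x₁,…,xₙ ∈ F. Then the family (x₁,…,xₙ) is linearly dependent over 𝔽_q if and only if the Moore determinant Δ(x₁,…,xₙ) = det((x_j^{q^{i−1}})_{1≤i,j≤n}) vanishes in F. -/
open Polynomial

/-- A family `(x₁,…,xₙ)` of elements of an `𝔽_q`-algebra field `F` is `𝔽_q`-linearly dependent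
if and only if its Moore determinant `det (x_j^{q^(i-1)})` vanishes. -/
theorem moore_determinant_eq_zero_iff_linearDependent
    (Fq : Type*) [Field Fq] [Fintype Fq] (q : ℕ) (hq : Fintype.card Fq = q)
    (F : Type*) [Field F] [Algebra Fq F]
    (n : ℕ) (hn : 1 ≤ n) (x : Fin n → F) :
    ¬ LinearIndependent Fq x ↔
      (Matrix.of fun i j : Fin n => x j ^ q ^ (i : ℕ)).det = 0 := by
  classical
  -- set up the characteristic
  set p := ringChar Fq with hpdef
  haveI : CharP Fq p := ringChar.charP Fq
  obtain ⟨m, hp, hqm⟩ := FiniteField.card Fq p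
  haveI : Fact p.Prime := ⟨hp⟩
  haveI hF : CharP F p := charP_of_injective_algebraMap (algebraMap Fq F).injective p
  haveI : ExpChar F p := ExpChar.prime hp
  have hq2 : 2 ≤ q := hq ▸ Fintype.one_lt_card
  have hqm' : q = p ^ (m : ℕ) := hq ▸ hqm
  -- the key semilinearity lemma
  have key : ∀ (c : Fin n → Fq) (k : ℕ),
      (∑ j, algebraMap Fq F (c j) * x j) ^ q ^ k
        = ∑ j, algebraMap Fq F (c j) * x j ^ q ^ k := by
    intro c k
    have h1 : ∀ y : F, y ^ q ^ k = iterateFrobenius F p ((m : ℕ) * k) y := fun y => by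
      rw [iterateFrobenius_def, hqm', ← pow_mul]
    rw [h1, map_sum]
    refine Finset.sum_congr rfl fun j _ => ?_
    rw [map_mul, ← h1, ← h1, ← map_pow]
    have h2 := FiniteField.pow_card_pow k (c j)
    rw [hq] at h2
    rw [h2]
  constructor
  · -- dependent → det = 0
    intro h
    obtain ⟨g, hg, i0, hi0⟩ := Fintype.not_linearIndependent_iff.mp h
    rw [← Matrix.exists_mulVec_eq_zero_iff]
    refine ⟨fun j => algebraMap Fq F (g j), ?_, ?_⟩
    · intro h0
      exact hi0 ((algebraMap Fq F).injective (by simpa using congrFun h0 i0))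
    · funext i
      have hx0 : (∑ j, algebraMap Fq F (g j) * x j) = 0 := by
        simpa [Algebra.smul_def] using hg
      have : (∑ j, algebraMap Fq F (g j) * x j) ^ q ^ (i : ℕ) = 0 := by
        rw [hx0, zero_pow (pow_ne_zero _ (by omega))]
      rw [key] at this
      simpa [Matrix.mulVec, dotProduct, mul_comm] using this
  · -- det = 0 → dependent
    intro hdet hli
    have hdt : (Matrix.of fun i j : Fin n => x j ^ q ^ (i : ℕ)).transpose.det = 0 := by
      rwa [Matrix.det_transpose]
    obtain ⟨w, hw0, hw⟩ := Matrix.exists_mulVec_eq_zero_iff.mpr hdt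
    -- the additive polynomial with coefficients w
    set P : F[X] := (∑ i : Fin n, C (w i) * X ^ (q ^ (i : ℕ))) with hP
    have hwrow : ∀ j, (∑ i : Fin n, x j ^ q ^ (i : ℕ) * w i) = 0 := by
      intro j
      have := congrFun hw j
      simpa [Matrix.mulVec, dotProduct] using this
    have hPne : P ≠ 0 := by
      obtain ⟨i0, hi0⟩ := Function.ne_iff.mp hw0
      intro h0
      apply hi0
      have hco := congrArg (fun Q : F[X] => Q.coeff (q ^ (i0 : ℕ))) h0
      simp only [hP, finset_sum_coeff, coeff_C_mul, coeff_X_pow, coeff_zero] at hco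
      rw [Finset.sum_eq_single i0] at hco
      · simpa using hco
      · intro i _ hne
        have : ¬ (q ^ (i0 : ℕ) = q ^ (i : ℕ)) := fun h =>
          hne (Fin.ext (Nat.pow_right_injective hq2 h.symm))
        simp [this]
      · simp
    -- every element of the span is a root of P
    have hroot : ∀ c : Fin n → Fq, P.eval (∑ j, algebraMap Fq F (c j) * x j) = 0 := by
      intro c
      rw [hP, eval_finset_sum]
      simp only [eval_mul, eval_C, eval_pow, eval_X]
      calc (∑ i : Fin n, w i * (∑ j, algebraMap Fq F (c j) * x j) ^ q ^ (i : ℕ))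
          = ∑ i : Fin n, ∑ j, algebraMap Fq F (c j) * (x j ^ q ^ (i : ℕ) * w i) := by
            refine Finset.sum_congr rfl fun i _ => ?_
            rw [key, Finset.mul_sum]
            refine Finset.sum_congr rfl fun j _ => ?_
            ring
        _ = ∑ j, algebraMap Fq F (c j) * (∑ i : Fin n, x j ^ q ^ (i : ℕ) * w i) := by
            rw [Finset.sum_comm]
            exact Finset.sum_congr rfl fun j _ => (Finset.mul_sum _ _ _).symm
        _ = 0 := by simp [hwrow]
    -- the evaluation map on coefficients is injective
    set f : (Fin n → Fq) → F := fun c => ∑ j, algebraMap Fq F (c j) * x j with hf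
    have hfinj : Function.Injective f := by
      intro a b hab
      have hzero : (∑ j, (a - b) j • x j) = 0 := by
        have hsub : (∑ j, (a - b) j • x j) = f a - f b := by
          simp [hf, sub_smul, Algebra.smul_def, Finset.sum_sub_distrib, map_sub, sub_mul]
        rw [hsub, hab, sub_self]
      have := Fintype.linearIndependent_iff.mp hli (a - b) hzero
      funext j
      have := this j
      simpa [sub_eq_zero] using this
    -- counting roots
    have himg : (Finset.univ.image f) ⊆ P.roots.toFinset := by
      intro y hy
      obtain ⟨c, _, rfl⟩ := Finset.mem_image.mp hy
      rw [Multiset.mem_toFinset, mem_roots hPne]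
      exact hroot c
    have hcard1 : (Finset.univ.image f).card = q ^ n := by
      rw [Finset.card_image_of_injective _ hfinj, Finset.card_univ, Fintype.card_fun,
        hq, Fintype.card_fin]
    have hcard2 : P.roots.toFinset.card ≤ P.natDegree :=
      le_trans (Multiset.toFinset_card_le _) (P.card_roots')
    have hdeg : P.natDegree ≤ q ^ (n - 1) := by
      refine natDegree_sum_le_of_forall_le _ _ fun i _ => ?_
      refine le_trans (natDegree_C_mul_le _ _) ?_
      rw [natDegree_X_pow]
      exact Nat.pow_le_pow_right (by omega) (by omega)
    have : q ^ n ≤ q ^ (n - 1) := by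
      rw [← hcard1]
      exact le_trans (Finset.card_le_card himg) (le_trans hcard2 hdeg)
    have hlt : q ^ (n - 1) < q ^ n := Nat.pow_lt_pow_right (by omega) (by omega)
    omega
end

section
/- Let q be a prime power, F a field which is an 𝔽_q-algebra, and F^s a separable closure of F. The map sending a polynomial f to its set of roots in F^s is a bijection between the set of q-linearized polynomials f ∈ F[X] whose coefficient of X equals 1, and the set of finite-dimensional 𝔽_q-linear subspaces V ⊆ F^s that are stable under every field automorphism of F^s fixing F pointwise. -/
open Polynomial

section OrepolyAux

variable {Fq : Type*} [Field Fq] [Fintype Fq]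
variable {Fs : Type*} [Field Fs] [Algebra Fq Fs]
variable {q p e : ℕ}

lemma lin_eval [CharP Fs p] (hp : p.Prime) (hq : Fintype.card Fq = q) (hpe : q = p ^ e)
    {f : Fs[X]} (hf : ∀ m ∈ f.support, ∃ i : ℕ, m = q ^ i) (c : Fq) (x y : Fs) :
    f.eval (algebraMap Fq Fs c * x + y)
      = algebraMap Fq Fs c * f.eval x + f.eval y := by
  haveI : Fact p.Prime := ⟨hp⟩
  rw [eval_eq_sum, eval_eq_sum, eval_eq_sum, sum_def, sum_def, sum_def, Finset.mul_sum,
    ← Finset.sum_add_distrib]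
  refine Finset.sum_congr rfl fun m hm => ?_
  obtain ⟨i, rfl⟩ := hf m hm
  have h1 : (algebraMap Fq Fs c * x + y) ^ q ^ i
      = (algebraMap Fq Fs c * x) ^ q ^ i + y ^ q ^ i := by
    rw [hpe, ← pow_mul, add_pow_char_pow, pow_mul]
  have h2 : (algebraMap Fq Fs c) ^ q ^ i = algebraMap Fq Fs c := by
    rw [← map_pow, ← hq, FiniteField.pow_card_pow]
  rw [h1, mul_pow, h2]; ring

lemma lin_zero (hq1 : 1 < q) {f : Fs[X]} (hf : ∀ m ∈ f.support, ∃ i : ℕ, m = q ^ i) :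
    f.eval 0 = 0 := by
  rw [← coeff_zero_eq_eval_zero]
  by_contra h
  obtain ⟨i, hi⟩ := hf 0 (mem_support_iff.2 h)
  exact (pow_pos (lt_trans one_pos hq1) i).ne' hi.symm

lemma lin_deriv [CharP Fs p] (hp : p.Prime) (hpe : q = p ^ e) (hq1 : 1 < q)
    {f : Fs[X]} (hf : ∀ m ∈ f.support, ∃ i : ℕ, m = q ^ i) :
    derivative f = C (f.coeff 1) := by
  have he : e ≠ 0 := by rintro rfl; simp at hpe; omega
  ext n
  rw [coeff_derivative]
  rcases Nat.eq_zero_or_pos n with rfl | hn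
  · simp
  · rw [coeff_C, if_neg hn.ne']
    by_cases h : f.coeff (n + 1) = 0
    · rw [h, zero_mul]
    · obtain ⟨i, hi⟩ := hf (n + 1) (mem_support_iff.2 h)
      have hi0 : i ≠ 0 := by rintro rfl; simp at hi; omega
      have : ((n : Fs) + 1) = 0 := by
        have : (((n + 1 : ℕ)) : Fs) = 0 := by
          rw [hi, hpe, ← pow_mul, CharP.cast_eq_zero_iff Fs p]
          exact dvd_pow_self p (by positivity)
        push_cast at this; exact_mod_cast this
      rw [this, mul_zero]

lemma mem_range_of_pow_card (hq : Fintype.card Fq = q) {u : Fs} (hu : u ^ q = u) :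
    ∃ c : Fq, algebraMap Fq Fs c = u := by
  have hq1 : 1 < q := hq ▸ Fintype.one_lt_card
  classical
  set h : Fs[X] := X ^ q - X with hh
  have hne : h ≠ 0 := FiniteField.X_pow_card_sub_X_ne_zero Fs hq1
  have hdeg : h.natDegree = q := FiniteField.X_pow_card_sub_X_natDegree_eq Fs hq1
  have hroot : ∀ c : Fq, algebraMap Fq Fs c ∈ h.roots.toFinset := by
    intro c
    rw [Multiset.mem_toFinset, mem_roots hne]
    simp only [IsRoot, hh, eval_sub, eval_pow, eval_X, sub_eq_zero, ← map_pow, ← hq,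
      FiniteField.pow_card]
  have himg : (Finset.univ.image fun c : Fq => algebraMap Fq Fs c) ⊆ h.roots.toFinset := by
    intro x hx
    obtain ⟨c, _, rfl⟩ := Finset.mem_image.1 hx
    exact hroot c
  have hcard1 : (Finset.univ.image fun c : Fq => algebraMap Fq Fs c).card = q := by
    rw [Finset.card_image_of_injective _ (algebraMap Fq Fs).injective, Finset.card_univ, hq]
  have hcard2 : h.roots.toFinset.card ≤ q := by
    calc h.roots.toFinset.card ≤ Multiset.card h.roots := Multiset.toFinset_card_le _
      _ ≤ h.natDegree := card_roots' h
      _ = q := hdeg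
  have heq := Finset.eq_of_subset_of_card_le himg (by omega)
  have humem : u ∈ h.roots.toFinset := by
    rw [Multiset.mem_toFinset, mem_roots hne]
    simp [IsRoot, hh, sub_eq_zero, hu]
  rw [← heq] at humem
  obtain ⟨c, _, hc⟩ := Finset.mem_image.1 humem
  exact ⟨c, hc⟩

lemma sep_of_deriv_C {f : Fs[X]} (h : derivative f = C (f.coeff 1)) (h1 : f.coeff 1 ≠ 0) :
    f.Separable := by
  rw [Polynomial.Separable, h]
  exact ⟨0, C (f.coeff 1)⁻¹, by rw [zero_mul, zero_add, ← C_mul, inv_mul_cancel₀ h1, C_1]⟩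

lemma poly_eq_of_same_roots [IsSepClosed Fs] {f g : Fs[X]}
    (hf0 : f ≠ 0) (hg0 : g ≠ 0) (hfs : f.Separable) (hgs : g.Separable)
    (hf1 : f.coeff 1 = 1) (hg1 : g.coeff 1 = 1)
    (h : ∀ x, f.eval x = 0 ↔ g.eval x = 0) : f = g := by
  have hfsp : f.Splits := IsSepClosed.splits_of_separable f hfs
  have hgsp : g.Splits := IsSepClosed.splits_of_separable g hgs
  have hroots : f.roots = g.roots := by
    rw [Multiset.Nodup.ext (nodup_roots hfs) (nodup_roots hgs)]
    intro a
    rw [mem_roots hf0, mem_roots hg0]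
    exact h a
  have hf' := hfsp.eq_prod_roots
  have hg' := hgsp.eq_prod_roots
  rw [hroots] at hf'
  set P : Fs[X] := (g.roots.map fun a => X - C a).prod with hP
  have hfc : f.leadingCoeff * P.coeff 1 = 1 := by
    rw [← coeff_C_mul, ← hf']; exact hf1
  have hgc : g.leadingCoeff * P.coeff 1 = 1 := by
    rw [← coeff_C_mul, ← hg']; exact hg1
  have hP1 : P.coeff 1 ≠ 0 := fun hz => by rw [hz, mul_zero] at hfc; exact one_ne_zero hfc.symm
  have : f.leadingCoeff = g.leadingCoeff := mul_right_cancel₀ hP1 (hfc.trans hgc.symm)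
  rw [hf', hg', this]

lemma pow_q_eq [ExpChar Fs p] (hpe : q = p ^ e) (g : Fs[X]) :
    g ^ q = (expand Fs q g).map ((frobenius Fs p) ^ e) := by
  rw [hpe, ← iterateFrobenius_eq_pow, map_iterateFrobenius_expand]

lemma pow_q_coeff_ne [ExpChar Fs p] (hpe : q = p ^ e) {g : Fs[X]} {m : ℕ}
    (hq1 : 1 < q) (hm : (g ^ q).coeff m ≠ 0) : q ∣ m ∧ g.coeff (m / q) ≠ 0 := by
  rw [pow_q_eq hpe, coeff_map] at hm
  have h2 : (expand Fs q g).coeff m ≠ 0 := fun hz => hm (by rw [hz, map_zero])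
  rw [coeff_expand (lt_trans one_pos hq1)] at h2
  by_cases hdvd : q ∣ m
  · rw [if_pos hdvd] at h2; exact ⟨hdvd, h2⟩
  · rw [if_neg hdvd] at h2; exact absurd rfl h2

lemma pow_q_coeff_one [ExpChar Fs p] (hpe : q = p ^ e) (hq1 : 1 < q) (g : Fs[X]) :
    (g ^ q).coeff 1 = 0 := by
  by_contra h
  obtain ⟨hdvd, -⟩ := pow_q_coeff_ne hpe hq1 h
  exact absurd (Nat.le_of_dvd one_pos hdvd) (by omega)

lemma exists_lin_poly [CharP Fs p] (hp : p.Prime) (hq : Fintype.card Fq = q) (hpe : q = p ^ e)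
    (n : ℕ) (W : Submodule Fq Fs) (b : Module.Basis (Fin n) Fq W) :
    ∃ f : Fs[X], (∀ m ∈ f.support, ∃ i : ℕ, m = q ^ i) ∧ f.coeff 1 ≠ 0 ∧
      ∀ x : Fs, f.eval x = 0 ↔ x ∈ W := by
  haveI : ExpChar Fs p := ExpChar.prime hp
  have hq1 : 1 < q := hq ▸ Fintype.one_lt_card
  induction n generalizing W with
  | zero =>
    refine ⟨X, ?_, by simp, ?_⟩
    · intro m hm
      rw [support_X, Finset.mem_singleton] at hm
      exact ⟨0, by simp [hm]⟩
    · intro x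
      simp only [eval_X]
      constructor
      · rintro rfl; exact W.zero_mem
      · intro hx
        haveI : Subsingleton W := b.repr.toEquiv.subsingleton
        have : (⟨x, hx⟩ : W) = 0 := Subsingleton.elim _ _
        exact congrArg Subtype.val this
  | succ n ih =>
    set v : Fin (n + 1) → Fs := fun i => (b i : Fs) with hv
    have hvW : ∀ i, v i ∈ W := fun i => (b i).2
    have hli : LinearIndependent Fq v :=
      b.linearIndependent.map' W.subtype (Submodule.ker_subtype W)
    have hli' : LinearIndependent Fq (v ∘ Fin.castSucc) :=
      hli.comp _ (Fin.castSucc_injective n)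
    set W' : Submodule Fq Fs := Submodule.span Fq (Set.range (v ∘ Fin.castSucc)) with hW'
    obtain ⟨g, hg_lin, hg1, hg_root⟩ := ih W' (Module.Basis.span hli')
    set w : Fs := v (Fin.last n) with hw
    have hwW : w ∈ W := hvW _
    have hW'W : W' ≤ W := by
      rw [hW', Submodule.span_le]; rintro _ ⟨i, rfl⟩; exact hvW _
    have hwns : w ∉ W' := by
      have h1 := hli.notMem_span_image (s := Set.range Fin.castSucc)
        (x := Fin.last n) (by rintro ⟨i, hi⟩; exact absurd hi (Fin.castSucc_lt_last i).ne)
      rw [hW', Set.range_comp]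
      exact h1
    set t : Fs := g.eval w with ht
    have ht0 : t ≠ 0 := fun h => hwns ((hg_root w).1 h)
    have hqq : t ^ q = t ^ (q - 1) * t := by
      rw [← pow_succ, Nat.sub_add_cancel (Nat.one_le_of_lt hq1)]
    set f : Fs[X] := g ^ q - C (t ^ (q - 1)) * g with hf
    have heval : ∀ x : Fs, f.eval x = (g.eval x) ^ q - t ^ (q - 1) * g.eval x := by
      intro x; rw [hf]; simp
    have hdecomp : ∀ x : Fs, x ∈ W →
        ∃ (c : Fq) (x' : Fs), x' ∈ W' ∧ x = algebraMap Fq Fs c * w + x' := by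
      intro x hx
      have hx' : (⟨x, hx⟩ : W) ∈ Submodule.span Fq (Set.range b) := by
        rw [b.span_eq]; trivial
      rw [Submodule.mem_span_range_iff_exists_fun] at hx'
      obtain ⟨c, hc⟩ := hx'
      refine ⟨c (Fin.last n), ∑ i : Fin n, c i.castSucc • v i.castSucc, ?_, ?_⟩
      · exact Submodule.sum_mem _ fun i _ =>
          Submodule.smul_mem _ _ (Submodule.subset_span ⟨i, rfl⟩)
      · have hval := congrArg (W.subtype) hc
        rw [map_sum] at hval
        simp only [map_smul, Submodule.coe_subtype] at hval
        rw [Fin.sum_univ_castSucc] at hval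
        rw [← hval]
        rw [Algebra.smul_def]
        ring
    refine ⟨f, ?_, ?_, ?_⟩
    · intro m hm
      rw [mem_support_iff, hf, coeff_sub, coeff_C_mul] at hm
      by_cases h1 : (g ^ q).coeff m = 0
      · rw [h1, zero_sub, neg_ne_zero] at hm
        exact hg_lin m (mem_support_iff.2 (right_ne_zero_of_mul hm))
      · obtain ⟨⟨k, hk⟩, h2⟩ := pow_q_coeff_ne hpe hq1 h1
        obtain ⟨i, hi⟩ := hg_lin (m / q) (mem_support_iff.2 h2)
        refine ⟨i + 1, ?_⟩
        rw [pow_succ, ← hi, hk, Nat.mul_div_cancel_left k (by omega), mul_comm]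
    · rw [hf, coeff_sub, coeff_C_mul, pow_q_coeff_one hpe hq1, zero_sub]
      exact neg_ne_zero.2 (mul_ne_zero (pow_ne_zero _ ht0) hg1)
    · intro x
      rw [heval x]
      constructor
      · intro hx0
        set y : Fs := g.eval x with hy
        have hyq : y ^ q = t ^ (q - 1) * y := sub_eq_zero.1 hx0
        have hu : (y / t) ^ q = y / t := by
          rw [div_pow, hyq, div_eq_div_iff (pow_ne_zero _ ht0) ht0, hqq]
          ring
        obtain ⟨c, hc⟩ := mem_range_of_pow_card hq hu
        have hyc : y = algebraMap Fq Fs c * t := by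
          rw [hc]; field_simp
        have hz : g.eval (algebraMap Fq Fs (-c) * w + x) = 0 := by
          rw [lin_eval hp hq hpe hg_lin (-c) w x, ← ht, ← hy, hyc, map_neg]
          ring
        have hzW' : algebraMap Fq Fs (-c) * w + x ∈ W' := (hg_root _).1 hz
        have : x = (algebraMap Fq Fs (-c) * w + x) + c • w := by
          rw [Algebra.smul_def, map_neg]; ring
        rw [this]
        exact W.add_mem (hW'W hzW') (W.smul_mem c hwW)
      · intro hx
        obtain ⟨c, x', hx', rfl⟩ := hdecomp x hx
        rw [lin_eval hp hq hpe hg_lin c w x', (hg_root x').2 hx', ← ht, add_zero,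
          mul_pow, ← map_pow, ← hq, FiniteField.pow_card, hq, hqq]
        ring

end OrepolyAux

section FixedAux

variable {F Fs : Type*} [Field F] [Field Fs] [Algebra F Fs] [IsSepClosure F Fs]

lemma fixed_mem_range {a : Fs} (h : ∀ σ : Fs ≃ₐ[F] Fs, σ a = a) :
    a ∈ (algebraMap F Fs).range := by
  classical
  haveI : IsGalois F Fs := inferInstance
  have hint : IsIntegral F a := Algebra.IsIntegral.isIntegral a
  have hsep : (minpoly F a).Separable := Algebra.IsSeparable.isSeparable F a
  have hsp : Splits ((minpoly F a).map (algebraMap F Fs)) := Normal.splits inferInstance a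
  rw [← minpoly.degree_eq_one_iff]
  by_contra hdeg
  have hd1 : 1 ≤ (minpoly F a).natDegree := (minpoly.natDegree_pos hint)
  have hd2 : 2 ≤ (minpoly F a).natDegree := by
    have hne1 : (minpoly F a).natDegree ≠ 1 := fun h1 =>
      hdeg ((degree_eq_iff_natDegree_eq (minpoly.ne_zero hint)).2 h1)
    omega
  set P := (minpoly F a).map (algebraMap F Fs) with hPdef
  have hP0 : P ≠ 0 := (Polynomial.map_ne_zero_iff (algebraMap F Fs).injective).2
    (minpoly.ne_zero hint)
  have hcard : Multiset.card P.roots = (minpoly F a).natDegree :=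
    by rw [← hsp.natDegree_eq_card_roots, natDegree_map]
  have hnodup : P.roots.Nodup := nodup_roots (hsep.map)
  have hfin : 1 < P.roots.toFinset.card := by
    rw [Multiset.toFinset_card_of_nodup hnodup, hcard]; omega
  obtain ⟨b, hbmem, hba⟩ := Finset.exists_mem_ne hfin a
  rw [Multiset.mem_toFinset, mem_roots hP0] at hbmem
  have hb : (Polynomial.aeval b) (minpoly F a) = 0 := by
    rw [Polynomial.aeval_def, ← eval_map]; exact hbmem
  obtain ⟨σ, hσ⟩ := minpoly.exists_algEquiv_of_root' hint.isAlgebraic hb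
  exact hba (hσ ▸ h σ)

end FixedAux

/-- The map sending a `q`-linearized polynomial `f ∈ F[X]` with coefficient of `X` equal to `1`
to its set of roots in a separable closure `Fs` of `F` is a bijection onto the collection of
finite-dimensional `𝔽_q`-linear subspaces of `Fs` stable under all `F`-automorphisms of `Fs`. -/
theorem orepoly_kernel_bijection
    (Fq : Type*) [Field Fq] [Fintype Fq] (q : ℕ) (hq : Fintype.card Fq = q)
    (F : Type*) [Field F] [Algebra Fq F]
    (Fs : Type*) [Field Fs] [Algebra F Fs] [IsSepClosure F Fs]
    [Algebra Fq Fs] [IsScalarTower Fq F Fs] :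
    Set.BijOn (fun f : Polynomial F => {x : Fs | Polynomial.aeval x f = 0})
      {f : Polynomial F | (∀ m ∈ f.support, ∃ i : ℕ, m = q ^ i) ∧ f.coeff 1 = 1}
      {S : Set Fs | ∃ V : Submodule Fq Fs, (V : Set Fs) = S ∧
        FiniteDimensional Fq V ∧ ∀ σ : Fs ≃ₐ[F] Fs, ∀ x ∈ V, σ x ∈ V} := by
  classical
  set p := ringChar Fq with hpdef
  haveI : CharP Fq p := ringChar.charP Fq
  obtain ⟨epos, hp, hcard⟩ := FiniteField.card Fq p
  set e : ℕ := (epos : ℕ) with hedef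
  have hpe : q = p ^ e := by rw [← hq]; exact hcard
  haveI : CharP Fs p := charP_of_injective_algebraMap (algebraMap Fq Fs).injective p
  haveI : ExpChar Fs p := ExpChar.prime hp
  have hq1 : 1 < q := hq ▸ Fintype.one_lt_card
  haveI : IsSepClosed Fs := IsSepClosure.sep_closed F
  set ψ := algebraMap F Fs with hψ
  have haev : ∀ (f : F[X]) (x : Fs), Polynomial.aeval x f = (f.map ψ).eval x := fun f x => by
    rw [Polynomial.aeval_def, eval_map]
  have hlinmap : ∀ f : F[X], (∀ m ∈ f.support, ∃ i : ℕ, m = q ^ i) →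
      ∀ m ∈ (f.map ψ).support, ∃ i : ℕ, m = q ^ i := fun f hf m hm =>
    hf m (support_map_subset ψ f hm)
  refine ⟨?_, ?_, ?_⟩
  · -- MapsTo
    rintro f ⟨hflin, hf1⟩
    simp only [Set.mem_setOf_eq]
    set fm := f.map ψ with hfm
    have hlin := hlinmap f hflin
    have hf0 : f ≠ 0 := fun h => by simp [h] at hf1
    have hfm0 : fm ≠ 0 := (Polynomial.map_ne_zero_iff ψ.injective).2 hf0
    have hS : ∀ x : Fs, Polynomial.aeval x f = 0 ↔ fm.eval x = 0 := fun x => by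
      rw [haev]
    have hadd : ∀ a b : Fs, Polynomial.aeval a f = 0 → Polynomial.aeval b f = 0 →
        Polynomial.aeval (a + b) f = 0 := by
      intro a b ha hb
      rw [hS] at ha hb ⊢
      have := lin_eval hp hq hpe hlin 1 a b
      rw [map_one, one_mul] at this
      rw [this, ha, hb]; ring
    have hzero : Polynomial.aeval (0 : Fs) f = 0 := by
      rw [hS]; exact lin_zero hq1 hlin
    have hsmul : ∀ (c : Fq) (x : Fs), Polynomial.aeval x f = 0 →
        Polynomial.aeval (c • x) f = 0 := by
      intro c x hx
      rw [hS] at hx ⊢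
      have := lin_eval hp hq hpe hlin c x 0
      rw [add_zero, lin_zero hq1 hlin, add_zero] at this
      rw [Algebra.smul_def, this, hx, mul_zero]
    set V : Submodule Fq Fs :=
      { carrier := {x : Fs | Polynomial.aeval x f = 0}
        add_mem' := fun {a b} ha hb => hadd a b ha hb
        zero_mem' := hzero
        smul_mem' := fun c x hx => hsmul c x hx } with hV
    refine ⟨V, rfl, ?_, ?_⟩
    · -- finite dimensional
      have hSfin : {x : Fs | Polynomial.aeval x f = 0}.Finite := by
        refine Set.Finite.subset fm.roots.toFinset.finite_toSet fun x hx => ?_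
        rw [Finset.mem_coe, Multiset.mem_toFinset, mem_roots hfm0]
        exact (hS x).1 hx
      have hfd : FiniteDimensional Fq
          (Submodule.span Fq {x : Fs | Polynomial.aeval x f = 0}) :=
        FiniteDimensional.span_of_finite Fq hSfin
      have heq : V = Submodule.span Fq {x : Fs | Polynomial.aeval x f = 0} := by
        apply le_antisymm
        · exact fun x hx => Submodule.subset_span hx
        · rw [Submodule.span_le]; exact fun x hx => hx
      rw [heq]
      exact hfd
    · intro σ x hx
      have hx' : Polynomial.aeval x f = 0 := hx
      show Polynomial.aeval (σ x) f = 0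
      rw [show σ x = σ.toAlgHom x from rfl, Polynomial.aeval_algHom_apply, hx', map_zero]
  · -- InjOn
    rintro f ⟨hflin, hf1⟩ g ⟨hglin, hg1⟩ heq
    set fm := f.map ψ with hfm
    set gm := g.map ψ with hgm
    have hfm1 : fm.coeff 1 = 1 := by rw [hfm, coeff_map, hf1, map_one]
    have hgm1 : gm.coeff 1 = 1 := by rw [hgm, coeff_map, hg1, map_one]
    have hfm0 : fm ≠ 0 := fun h => by rw [h, coeff_zero] at hfm1; exact one_ne_zero hfm1.symm
    have hgm0 : gm ≠ 0 := fun h => by rw [h, coeff_zero] at hgm1; exact one_ne_zero hgm1.symm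
    have hfms : fm.Separable :=
      sep_of_deriv_C (by rw [lin_deriv hp hpe hq1 (hlinmap f hflin), hfm1])
        (hfm1 ▸ one_ne_zero)
    have hgms : gm.Separable :=
      sep_of_deriv_C (by rw [lin_deriv hp hpe hq1 (hlinmap g hglin), hgm1])
        (hgm1 ▸ one_ne_zero)
    have hroots : ∀ x, fm.eval x = 0 ↔ gm.eval x = 0 := by
      intro x
      rw [← haev, ← haev]
      exact Set.ext_iff.1 heq x
    have : fm = gm := poly_eq_of_same_roots hfm0 hgm0 hfms hgms hfm1 hgm1 hroots
    exact Polynomial.map_injective ψ ψ.injective this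
  · -- SurjOn
    rintro S ⟨V, hVS, hfd, hstab⟩
    haveI := hfd
    obtain ⟨f₀, h₀lin, h₀1, h₀root⟩ :=
      exists_lin_poly hp hq hpe (Module.finrank Fq V) V (Module.finBasis Fq V)
    set f₁ : Fs[X] := C (f₀.coeff 1)⁻¹ * f₀ with hf₁
    have h₁lin : ∀ m ∈ f₁.support, ∃ i : ℕ, m = q ^ i := by
      intro m hm
      rw [mem_support_iff, hf₁, coeff_C_mul] at hm
      exact h₀lin m (mem_support_iff.2 (right_ne_zero_of_mul hm))
    have h₁1 : f₁.coeff 1 = 1 := by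
      rw [hf₁, coeff_C_mul, inv_mul_cancel₀ h₀1]
    have h₁root : ∀ x : Fs, f₁.eval x = 0 ↔ x ∈ V := by
      intro x
      rw [hf₁, eval_mul, eval_C, mul_eq_zero, ← h₀root x]
      simp [inv_eq_zero, h₀1]
    have h₁0 : f₁ ≠ 0 := fun h => by rw [h, coeff_zero] at h₁1; exact one_ne_zero h₁1.symm
    have h₁sep : f₁.Separable :=
      sep_of_deriv_C (by rw [lin_deriv hp hpe hq1 h₁lin, h₁1]) (h₁1 ▸ one_ne_zero)
    -- f₁ is fixed by every σ
    have hfix : ∀ σ : Fs ≃ₐ[F] Fs, f₁.map (σ : Fs →+* Fs) = f₁ := by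
      intro σ
      set fσ := f₁.map (σ : Fs →+* Fs) with hfσ
      have hev : ∀ x : Fs, fσ.eval x = σ (f₁.eval (σ.symm x)) := by
        intro x
        conv_lhs => rw [hfσ, eval_map, show x = σ (σ.symm x) from (σ.apply_symm_apply x).symm]
        exact Polynomial.eval₂_hom (σ : Fs →+* Fs) (σ.symm x)
      have hσlin : ∀ m ∈ fσ.support, ∃ i : ℕ, m = q ^ i := fun m hm =>
        h₁lin m (support_map_subset _ f₁ hm)
      have hσ1 : fσ.coeff 1 = 1 := by rw [hfσ, coeff_map, h₁1, map_one]
      have hσ0 : fσ ≠ 0 := fun h => by rw [h, coeff_zero] at hσ1; exact one_ne_zero hσ1.symm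
      have hσsep : fσ.Separable :=
        sep_of_deriv_C (by rw [lin_deriv hp hpe hq1 hσlin, hσ1]) (hσ1 ▸ one_ne_zero)
      refine poly_eq_of_same_roots hσ0 h₁0 hσsep h₁sep hσ1 h₁1 fun x => ?_
      rw [hev x, EmbeddingLike.map_eq_zero_iff, h₁root, h₁root]
      constructor
      · intro h
        have := hstab σ _ h
        rwa [σ.apply_symm_apply] at this
      · intro h
        exact hstab σ.symm _ h
    have hcoef : ∀ n : ℕ, f₁.coeff n ∈ Set.range ψ := by
      intro n
      have : ∀ σ : Fs ≃ₐ[F] Fs, σ (f₁.coeff n) = f₁.coeff n := by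
        intro σ
        conv_rhs => rw [← hfix σ]
        rw [coeff_map]
        rfl
      obtain ⟨a, ha⟩ := fixed_mem_range this
      exact ⟨a, ha⟩
    have hlift : f₁ ∈ Polynomial.lifts ψ := (Polynomial.lifts_iff_coeff_lifts f₁).2 hcoef
    obtain ⟨f, hfmap⟩ := (Polynomial.mem_lifts f₁).1 hlift
    have himg : (fun f : Polynomial F => {x : Fs | Polynomial.aeval x f = 0}) f = S := by
      ext x
      simp only [Set.mem_setOf_eq]
      rw [haev, hfmap, h₁root, ← hVS]
      rfl
    refine ⟨f, ⟨?_, ?_⟩, himg⟩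
    · intro m hm
      rw [mem_support_iff] at hm
      have : f₁.coeff m ≠ 0 := by
        rw [← hfmap, coeff_map]
        exact fun h => hm (ψ.injective (by rw [h, map_zero]))
      exact h₁lin m (mem_support_iff.2 this)
    · apply ψ.injective
      rw [map_one, show ψ (f.coeff 1) = f₁.coeff 1 from by rw [← hfmap, coeff_map], h₁1]
end

section
/- Let q be a prime power, F a field which is an 𝔽_q-algebra, and F^s a separable closure of F. Let f, g ∈ F[X] be q-linearized polynomials whose coefficients of X equal 1. Then f right-divides g in the Ore sense, i.e. there exists m ∈ F[X] with g = m ∘ f (polynomial composition), if and only if every root of f in F^s is a root of g. -/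
open Polynomial

lemma ore_div {F : Type*} [Field F] {p n q : ℕ} [Fact p.Prime] [CharP F p]
    (hq : q = p ^ n) (hn : 0 < n) (f : F[X])
    (hf : ∀ m ∈ f.support, ∃ i : ℕ, m = q ^ i) (hf1 : f.coeff 1 = 1) :
    ∀ g : F[X], (∀ m ∈ g.support, ∃ i : ℕ, m = q ^ i) →
      ∃ m r : F[X], g = m.comp f + r ∧ (∀ j ∈ r.support, ∃ i : ℕ, j = q ^ i) ∧
        r.natDegree < f.natDegree := by
  have hq2 : 2 ≤ q := by
    subst hq
    calc 2 ≤ p := (Fact.out : p.Prime).two_le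
    _ ≤ p ^ n := Nat.le_self_pow hn.ne' p
  have hfne : f ≠ 0 := fun h => by simp [h] at hf1
  have h1s : 1 ∈ f.support := by simp [mem_support_iff, hf1]
  have hdf : 1 ≤ f.natDegree := le_natDegree_of_mem_supp 1 h1s
  obtain ⟨d, hd⟩ := hf f.natDegree (natDegree_mem_support_of_nonzero hfne)
  suffices H : ∀ N : ℕ, ∀ g : F[X], g.natDegree ≤ N →
      (∀ m ∈ g.support, ∃ i : ℕ, m = q ^ i) →
      ∃ m r : F[X], g = m.comp f + r ∧ (∀ j ∈ r.support, ∃ i : ℕ, j = q ^ i) ∧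
        r.natDegree < f.natDegree by
    intro g hg; exact H g.natDegree g le_rfl hg
  intro N
  induction N using Nat.strong_induction_on with
  | _ N ih =>
  intro g hgN hg
  by_cases hlt : g.natDegree < f.natDegree
  · exact ⟨0, g, by simp, hg, hlt⟩
  push_neg at hlt
  have hgne : g ≠ 0 := by
    intro h; rw [h, natDegree_zero] at hlt; omega
  obtain ⟨e, he⟩ := hg g.natDegree (natDegree_mem_support_of_nonzero hgne)
  have hde : d ≤ e := by
    have := hlt; rw [hd, he] at this
    exact (pow_le_pow_iff_right₀ hq2).mp this
  set k := e - d with hk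
  -- f ^ (q ^ k) has q-power support
  have hfk : ∀ j ∈ (f ^ q ^ k).support, ∃ i : ℕ, j = q ^ i := by
    intro j hj
    have : f ^ q ^ k = Polynomial.map ((frobenius F p) ^ (n * k)) (expand F (p ^ (n * k)) f) := by
      rw [show (frobenius F p) ^ (n * k) = iterateFrobenius F p (n * k) from RingHom.ext fun x => by rw [RingHom.coe_pow, iterateFrobenius_def]; exact iterate_frobenius p (n * k) x, map_iterateFrobenius_expand, hq, ← pow_mul]
    rw [this, mem_support_iff, coeff_map] at hj
    have hq0 : 0 < q ^ k := pow_pos (by omega) k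
    have : (expand F (p ^ (n * k)) f).coeff j ≠ 0 := fun h => by simp [h] at hj
    rw [show p ^ (n * k) = q ^ k by rw [hq, ← pow_mul], coeff_expand hq0] at this
    split_ifs at this with hdvd
    · obtain ⟨i, hi⟩ := hf _ (mem_support_iff.mpr this)
      obtain ⟨c, hc⟩ := hdvd
      refine ⟨k + i, ?_⟩
      rw [hc, Nat.mul_div_cancel_left _ hq0] at hi
      rw [hc, hi, pow_add]
    · exact (this rfl).elim
  have hdegfk : (f ^ q ^ k).natDegree = q ^ e := by
    rw [natDegree_pow, hd, ← pow_add]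
    congr 1; omega
  have hlcfk : (f ^ q ^ k).leadingCoeff = f.leadingCoeff ^ q ^ k := leadingCoeff_pow f _
  set c : F := g.leadingCoeff / (f.leadingCoeff ^ q ^ k) with hc
  have hlcf : f.leadingCoeff ≠ 0 := leadingCoeff_ne_zero.mpr hfne
  have hcne : c ≠ 0 := div_ne_zero (leadingCoeff_ne_zero.mpr hgne) (pow_ne_zero _ hlcf)
  set h : F[X] := g - C c * f ^ q ^ k with hh
  have hdegcfk : (C c * f ^ q ^ k).degree = g.degree := by
    rw [degree_C_mul hcne, degree_eq_natDegree (pow_ne_zero _ hfne),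
      degree_eq_natDegree hgne, hdegfk, he]
  have hdlt : h.degree < g.degree := by
    apply degree_sub_lt hdegcfk.symm hgne
    rw [leadingCoeff_mul, leadingCoeff_C, hlcfk, hc, div_mul_cancel₀]
    exact pow_ne_zero _ hlcf
  set m₁ : F[X] := C c * X ^ q ^ k with hm₁
  have hcomp : m₁.comp f = C c * f ^ q ^ k := by
    rw [hm₁, mul_comp, C_comp, X_pow_comp]
  by_cases hh0 : h = 0
  · refine ⟨m₁, 0, ?_, by simp, by rw [natDegree_zero]; omega⟩
    have : g = C c * f ^ q ^ k := by
      have := hh ▸ hh0; linear_combination (this : h = 0)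
    rw [hcomp, add_zero, ← this]
  · have hhN : h.natDegree < N := lt_of_lt_of_le (natDegree_lt_natDegree hh0 hdlt) hgN
    have hhsupp : ∀ j ∈ h.support, ∃ i : ℕ, j = q ^ i := by
      intro j hj
      rw [mem_support_iff, hh, coeff_sub] at hj
      by_cases hgc : g.coeff j ≠ 0
      · exact hg j (mem_support_iff.mpr hgc)
      · push_neg at hgc
        have : (C c * f ^ q ^ k).coeff j ≠ 0 := fun h0 => hj (by rw [hgc, h0, sub_zero])
        rw [coeff_C_mul] at this
        exact hfk j (mem_support_iff.mpr fun h0 => this (by rw [h0, mul_zero]))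
    obtain ⟨m', r, hdiv, hrs, hrd⟩ := ih h.natDegree hhN h le_rfl hhsupp
    refine ⟨m' + m₁, r, ?_, hrs, hrd⟩
    rw [add_comp, hcomp]
    have hg' : g = h + C c * f ^ q ^ k := by rw [hh]; ring
    rw [hg', hdiv]; ring

/-- For `q`-linearized polynomials `f, g ∈ F[X]` with coefficient of `X` equal to `1`,
`f` right-divides `g` in the Ore sense (`g = m ∘ f` for some `m`) if and only if every root
of `f` in a separable closure `Fs` of `F` is a root of `g`. -/
theorem orepoly_rightDvd_iff_roots_subset
    (Fq : Type*) [Field Fq] [Fintype Fq] (q : ℕ) (hq : Fintype.card Fq = q)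
    (F : Type*) [Field F] [Algebra Fq F]
    (Fs : Type*) [Field Fs] [Algebra F Fs] [IsSepClosure F Fs]
    (f g : Polynomial F)
    (hf : ∀ m ∈ f.support, ∃ i : ℕ, m = q ^ i) (hf1 : f.coeff 1 = 1)
    (hg : ∀ m ∈ g.support, ∃ i : ℕ, m = q ^ i) (hg1 : g.coeff 1 = 1) :
    (∃ m : Polynomial F, g = m.comp f) ↔
      ∀ x : Fs, Polynomial.aeval x f = 0 → Polynomial.aeval x g = 0 := by
  classical
  set p := ringChar Fq with hp
  haveI : CharP Fq p := ringChar.charP Fq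
  obtain ⟨n, hpp, hcard⟩ := FiniteField.card Fq p
  haveI : Fact p.Prime := ⟨hpp⟩
  haveI : CharP F p := charP_of_injective_algebraMap (algebraMap Fq F).injective p
  have hqpn : q = p ^ (n : ℕ) := by rw [← hq, hcard]
  have hn : 0 < (n : ℕ) := n.pos
  have hq2 : 2 ≤ q := by
    rw [hqpn]
    calc 2 ≤ p := hpp.two_le
    _ ≤ p ^ (n : ℕ) := Nat.le_self_pow hn.ne' p
  -- constant coefficients vanish
  have hc0 : ∀ (h : Polynomial F), (∀ m ∈ h.support, ∃ i : ℕ, m = q ^ i) → h.coeff 0 = 0 := by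
    intro h hh
    by_contra h0
    obtain ⟨i, hi⟩ := hh 0 (Polynomial.mem_support_iff.mpr h0)
    have : 0 < q ^ i := pow_pos (by omega) i
    omega
  have haev0 : ∀ (h : Polynomial F), h.coeff 0 = 0 → Polynomial.aeval (0 : Fs) h = 0 := by
    intro h h0
    rw [Polynomial.aeval_def, Polynomial.eval₂_at_zero, h0, map_zero]
  constructor
  · rintro ⟨m, rfl⟩ x hx
    have hm0 : Polynomial.aeval (0 : Fs) m = 0 := by
      have := haev0 _ (hc0 _ hg)
      rwa [Polynomial.aeval_comp, haev0 f (hc0 f hf)] at this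
    rw [Polynomial.aeval_comp, hx, hm0]
  · intro hroots
    obtain ⟨m, r, hdiv, hrs, hrd⟩ := ore_div hqpn hn f hf hf1 g hg
    suffices hr0 : r = 0 by
      exact ⟨m, by rw [hdiv, hr0, add_zero]⟩
    -- roots of f are roots of r
    have hm0 : Polynomial.aeval (0 : Fs) m = 0 := by
      have h1 := haev0 _ (hc0 _ hg)
      rw [hdiv, map_add, Polynomial.aeval_comp, haev0 f (hc0 f hf),
        haev0 r (hc0 r hrs), add_zero] at h1
      exact h1
    have hroot_r : ∀ x : Fs, Polynomial.aeval x f = 0 → Polynomial.aeval x r = 0 := by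
      intro x hx
      have := hroots x hx
      rwa [hdiv, map_add, Polynomial.aeval_comp, hx, hm0, zero_add] at this
    -- f is separable
    have hfne : f ≠ 0 := fun h => by simp [h] at hf1
    have hder : Polynomial.derivative f = 1 := by
      ext j
      rw [Polynomial.coeff_derivative]
      rcases j with _ | j
      · simp [hf1]
      · rw [Polynomial.coeff_one]
        simp only [Nat.succ_ne_zero, if_false]
        by_cases hcj : f.coeff (j + 1 + 1) = 0
        · rw [hcj, zero_mul]
        · obtain ⟨i, hi⟩ := hf _ (Polynomial.mem_support_iff.mpr hcj)
          have hi1 : 1 ≤ i := by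
            rcases Nat.eq_zero_or_pos i with h0 | h1
            · rw [h0, pow_zero] at hi; omega
            · exact h1
          have : ((j + 1 + 1 : ℕ) : F) = 0 := by
            rw [hi, Nat.cast_pow, hqpn, Nat.cast_pow, CharP.cast_eq_zero F p,
              zero_pow (by omega : (n:ℕ) ≠ 0), zero_pow (by omega : i ≠ 0)]
          push_cast at this ⊢
          simp [this]
    have hsep : f.Separable := by
      rw [Polynomial.separable_def, hder]; exact isCoprime_one_right
    haveI : IsSepClosed Fs := IsSepClosure.sep_closed F
    have hsplit : (f.map (algebraMap F Fs)).Splits := IsSepClosed.splits_codomain f hsep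
    set fs := f.map (algebraMap F Fs) with hfs
    have hfsne : fs ≠ 0 := Polynomial.map_ne_zero hfne
    have hnodup : fs.roots.Nodup := Polynomial.nodup_roots (hsep.map)
    have hScard : fs.roots.toFinset.card = f.natDegree := by
      rw [Multiset.toFinset_card_of_nodup hnodup,
        ← hsplit.natDegree_eq_card_roots, hfs, Polynomial.natDegree_map]
    by_contra hr0
    set rs := r.map (algebraMap F Fs) with hrs'
    have hrsne : rs ≠ 0 := Polynomial.map_ne_zero hr0
    have hsub : fs.roots.toFinset ⊆ rs.roots.toFinset := by
      intro x hx
      rw [Multiset.mem_toFinset, Polynomial.mem_roots hfsne] at hx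
      have hxf : Polynomial.aeval x f = 0 := by
        rw [Polynomial.aeval_def, ← Polynomial.eval_map]; exact hx
      have hxr := hroot_r x hxf
      rw [Multiset.mem_toFinset, Polynomial.mem_roots hrsne]
      show Polynomial.eval x rs = 0
      rwa [Polynomial.eval_map, ← Polynomial.aeval_def]
    have : f.natDegree ≤ r.natDegree := by
      calc f.natDegree = fs.roots.toFinset.card := hScard.symm
      _ ≤ rs.roots.toFinset.card := Finset.card_le_card hsub
      _ ≤ Multiset.card rs.roots := Multiset.toFinset_card_le _
      _ ≤ rs.natDegree := Polynomial.card_roots' rs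
      _ = r.natDegree := Polynomial.natDegree_map_eq_of_injective (algebraMap F Fs).injective r
    omega
end

section
/- Let q be a prime power, F a field which is an 𝔽_q-algebra, z ∈ F with z^{q^n} ≠ z for every n ≥ 1, r ≥ 1, and g₁,…,g_r ∈ F. Define c : ℕ → F by c₀ = 1 and, for n ≥ 1, c_n = (z^{q^n} − z)^{−1} · Σ_{i=1}^{min(n,r)} g_i · c_{n−i}^{q^i}. Let E ∈ F[[X]] be the formal power series whose coefficient of X^{q^n} is c_n for every n ≥ 0 and whose coefficients in all other degrees vanish. Then, as formal power series, E(zX) = z·E(X) + Σ_{i=1}^{r} g_i · E(X)^{q^i}, where E(zX) denotes the rescaling of E by z. (This is the exponential of the Drinfeld module φ_T = z + g₁τ + ⋯ + g_rτ^r over an A-field of A-characteristic zero, satisfying e_φ(Tx) = φ_T(e_φ(x)).) -/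
open PowerSeries

lemma ps_coeff_pow_char {F : Type*} [Field F] (p : ℕ) [hp : Fact p.Prime] [CharP F p]
    (f : PowerSeries F) (k : ℕ) :
    PowerSeries.coeff k (f ^ p) =
      if p ∣ k then (PowerSeries.coeff (k / p) f) ^ p else 0 := by
  classical
  set t := PowerSeries.trunc (k + 1) f with ht
  have hdvd : (PowerSeries.X : PowerSeries F) ^ (k + 1) ∣ f - (t : PowerSeries F) := by
    rw [PowerSeries.X_pow_dvd_iff]
    intro m hm
    simp [map_sub, ht, Polynomial.coeff_coe, PowerSeries.coeff_trunc, hm]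
  have h1 : PowerSeries.coeff k (f ^ p) = PowerSeries.coeff k ((t : PowerSeries F) ^ p) := by
    have hd : (PowerSeries.X : PowerSeries F) ^ (k + 1) ∣ f ^ p - (t : PowerSeries F) ^ p :=
      dvd_trans hdvd (sub_dvd_pow_sub_pow _ _ p)
    have := (PowerSeries.X_pow_dvd_iff.mp hd) k (Nat.lt_succ_self k)
    rw [map_sub, sub_eq_zero] at this
    exact this
  rw [h1, ← Polynomial.coe_pow, Polynomial.coeff_coe, ← Polynomial.map_frobenius_expand,
    Polynomial.coeff_map, Polynomial.coeff_expand hp.out.pos]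
  rw [apply_ite (frobenius F p), map_zero]
  congr 1
  rw [frobenius_def]
  congr 1
  rw [← Polynomial.coeff_coe, Polynomial.coeff_coe, PowerSeries.coeff_trunc,
    if_pos (Nat.lt_succ_of_le (Nat.div_le_self k p))]

lemma ps_coeff_pow_char_pow {F : Type*} [Field F] (p : ℕ) [hp : Fact p.Prime] [CharP F p]
    (f : PowerSeries F) (m k : ℕ) :
    PowerSeries.coeff k (f ^ p ^ m) =
      if p ^ m ∣ k then (PowerSeries.coeff (k / p ^ m) f) ^ p ^ m else 0 := by
  classical
  induction m generalizing k with
  | zero => simp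
  | succ m ih =>
      have : f ^ p ^ (m + 1) = (f ^ p ^ m) ^ p := by
        rw [← pow_mul, pow_succ]
      rw [this, ps_coeff_pow_char p _ k]
      by_cases hpk : p ∣ k
      · rw [if_pos hpk, ih]
        by_cases h2 : p ^ m ∣ k / p
        · have hdvd : p ^ (m + 1) ∣ k := by
            obtain ⟨u, hu⟩ := hpk
            obtain ⟨v, hv⟩ := h2
            refine ⟨v, ?_⟩
            rw [hu, Nat.mul_div_cancel_left u hp.out.pos] at hv
            rw [hu, hv, pow_succ]
            ring
          rw [if_pos h2, if_pos hdvd, ← pow_mul, ← pow_succ,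
            Nat.div_div_eq_div_mul, ← pow_succ']
        · have : ¬ p ^ (m + 1) ∣ k := by
            intro hcon
            apply h2
            obtain ⟨u, hu⟩ := hcon
            refine ⟨u, ?_⟩
            rw [hu, pow_succ, mul_comm (p ^ m) p, mul_assoc,
              Nat.mul_div_cancel_left _ hp.out.pos]
          rw [if_neg h2, if_neg this, zero_pow hp.out.pos.ne']
      · have : ¬ p ^ (m + 1) ∣ k := fun hcon =>
          hpk (dvd_trans (dvd_pow_self p (Nat.succ_ne_zero m)) hcon)
        rw [if_neg hpk, if_neg this]

/-- The exponential of the Drinfeld module `φ_T = z + g₁τ + ⋯ + g_rτ^r` over an `A`-field of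
`A`-characteristic zero: the power series `E` supported in degrees `q^n`, with recursively
defined coefficients `c_n`, satisfies `E(zX) = z·E(X) + Σ_{i=1}^{r} g_i·E(X)^{q^i}`. -/
theorem drinfeld_exponential_functional_equation
    (Fq : Type*) [Field Fq] [Fintype Fq] (q : ℕ) (hq : Fintype.card Fq = q)
    (F : Type*) [Field F] [Algebra Fq F]
    (z : F) (hz : ∀ n : ℕ, 1 ≤ n → z ^ q ^ n ≠ z)
    (r : ℕ) (hr : 1 ≤ r) (g : ℕ → F)
    (c : ℕ → F) (hc0 : c 0 = 1)
    (hc : ∀ n : ℕ, 1 ≤ n →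
      c n = (z ^ q ^ n - z)⁻¹ * ∑ i ∈ Finset.Icc 1 (min n r), g i * c (n - i) ^ q ^ i)
    (E : PowerSeries F)
    (hE : ∀ n : ℕ, PowerSeries.coeff (q ^ n) E = c n)
    (hE' : ∀ k : ℕ, (∀ n : ℕ, k ≠ q ^ n) → PowerSeries.coeff k E = 0) :
    PowerSeries.rescale z E =
      PowerSeries.C z * E + ∑ i ∈ Finset.Icc 1 r, PowerSeries.C (g i) * E ^ q ^ i := by
  classical
  -- characteristic setup
  set p := ringChar Fq with hp
  haveI hpF : Fact p.Prime := ⟨CharP.char_is_prime Fq p⟩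
  haveI : CharP F p := charP_of_injective_ringHom (algebraMap Fq F).injective p
  obtain ⟨s, hs⟩ : ∃ s : ℕ, 0 < s ∧ q = p ^ s := by
    obtain ⟨n, _, hcard⟩ := FiniteField.card Fq p
    exact ⟨n, n.2, by rw [← hq, hcard]⟩
  obtain ⟨hs0, hqp⟩ := hs
  have hq1 : 1 < q := by
    rw [← hq]; exact Fintype.one_lt_card
  -- coefficient formula for E ^ q ^ i
  have key : ∀ (i k : ℕ), PowerSeries.coeff k (E ^ q ^ i) =
      if q ^ i ∣ k then (PowerSeries.coeff (k / q ^ i) E) ^ q ^ i else 0 := by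
    intro i k
    have h1 : q ^ i = p ^ (s * i) := by rw [hqp, ← pow_mul]
    rw [h1]
    exact ps_coeff_pow_char_pow p E (s * i) k
  ext k
  rw [PowerSeries.coeff_rescale, map_add, PowerSeries.coeff_C_mul, map_sum]
  by_cases hk : ∃ n : ℕ, k = q ^ n
  · obtain ⟨n, rfl⟩ := hk
    rw [hE n]
    have hterm : ∀ i ∈ Finset.Icc 1 r,
        PowerSeries.coeff (q ^ n) (PowerSeries.C (g i) * E ^ q ^ i) =
          if i ≤ n then g i * c (n - i) ^ q ^ i else 0 := by
      intro i hi
      simp only [Finset.mem_Icc] at hi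
      rw [PowerSeries.coeff_C_mul, key i]
      by_cases hin : i ≤ n
      · rw [if_pos (pow_dvd_pow q hin), if_pos hin,
          Nat.pow_div hin (by omega), hE (n - i)]
      · rw [if_neg, if_neg hin, mul_zero]
        intro hcon
        exact hin ((Nat.pow_dvd_pow_iff_le_right hq1).mp hcon)
    rw [Finset.sum_congr rfl hterm]
    have hsum : ∑ i ∈ Finset.Icc 1 r, (if i ≤ n then g i * c (n - i) ^ q ^ i else 0)
        = ∑ i ∈ Finset.Icc 1 (min n r), g i * c (n - i) ^ q ^ i := by
      rw [← Finset.sum_filter]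
      apply Finset.sum_congr _ (fun _ _ => rfl)
      ext j
      simp only [Finset.mem_filter, Finset.mem_Icc, le_min_iff]
      omega
    rw [hsum]
    by_cases hn : 1 ≤ n
    · have hne : z ^ q ^ n - z ≠ 0 := sub_ne_zero.mpr (hz n hn)
      have hS : ∑ i ∈ Finset.Icc 1 (min n r), g i * c (n - i) ^ q ^ i
          = (z ^ q ^ n - z) * c n := by
        rw [hc n hn, ← mul_assoc, mul_inv_cancel₀ hne, one_mul]
      rw [hS]
      ring
    · have hn0 : n = 0 := by omega
      subst hn0
      simp
  · push_neg at hk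
    rw [hE' k hk, mul_zero, mul_zero, zero_add]
    refine (Finset.sum_eq_zero ?_).symm
    intro i hi
    rw [PowerSeries.coeff_C_mul, key i]
    by_cases hdvd : q ^ i ∣ k
    · rw [if_pos hdvd, hE' (k / q ^ i), zero_pow, mul_zero]
      · exact (pow_pos (by omega) i).ne'
      · intro m hm
        apply hk (i + m)
        rw [pow_add, ← hm, Nat.mul_div_cancel' hdvd]
    · rw [if_neg hdvd, mul_zero]
end

section
/- Let q be a prime power, F a field which is an 𝔽_q-algebra, z ∈ F with z^{q^n} ≠ z for every n ≥ 1, r ≥ 1, and g₁,…,g_r ∈ F. Define ℓ : ℕ → F by ℓ₀ = 1 and, for n ≥ 1, ℓ_n = (z − z^{q^n})^{−1} · Σ_{i=1}^{min(n,r)} g_i^{q^{n−i}} · ℓ_{n−i}. Let L ∈ F[[X]] be the formal power series whose coefficient of X^{q^n} is ℓ_n for every n ≥ 0 and whose coefficients in all other degrees vanish, and let φ_T(X) = zX + g₁X^q + ⋯ + g_rX^{q^r} ∈ F[X]. Then the formal substitution of φ_T(X) into L satisfies L(φ_T(X)) = z·L(X) as formal power series. (This is the logarithm ℓ_φ of the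 Drinfeld module φ, satisfying ℓ_φ ∘ φ_T = z·ℓ_φ.) -/
/-- The logarithm of the Drinfeld module `φ_T = z + g₁τ + ⋯ + g_rτ^r`: the power series `L`
supported in degrees `q^n` with recursively defined coefficients `ℓ_n` satisfies
`L(φ_T(X)) = z·L(X)` as formal power series.  The substitution `L(φ_T(X)) = Σ_n ℓ_n·φ_T^{q^n}`
is expressed coefficientwise: since `φ_T` has zero constant term, its `q^n`-th power has
vanishing coefficients below degree `q^n > k` for `n > k`, so for each degree `k` the
substitution is computed by the finite sum over `n ≤ k`. -/
theorem drinfeld_logarithm_functional_equation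
    (Fq : Type*) [Field Fq] [Fintype Fq] (q : ℕ) (hq : Fintype.card Fq = q)
    (F : Type*) [Field F] [Algebra Fq F]
    (z : F) (hz : ∀ n : ℕ, 1 ≤ n → z ^ q ^ n ≠ z)
    (r : ℕ) (hr : 1 ≤ r) (g : ℕ → F)
    (l : ℕ → F) (hl0 : l 0 = 1)
    (hl : ∀ n : ℕ, 1 ≤ n →
      l n = (z - z ^ q ^ n)⁻¹ * ∑ i ∈ Finset.Icc 1 (min n r), g i ^ q ^ (n - i) * l (n - i))
    (L : PowerSeries F)
    (hL : ∀ n : ℕ, PowerSeries.coeff (R := F) (q ^ n) L = l n)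
    (hL' : ∀ k : ℕ, (∀ n : ℕ, k ≠ q ^ n) → PowerSeries.coeff (R := F) k L = 0)
    (φT : Polynomial F)
    (hφT : φT = Polynomial.C z * Polynomial.X +
      ∑ i ∈ Finset.Icc 1 r, Polynomial.C (g i) * Polynomial.X ^ q ^ i) :
    ∀ k : ℕ,
      PowerSeries.coeff (R := F) k
        (∑ n ∈ Finset.range (k + 1), PowerSeries.C (R := F) (l n) * (φT : PowerSeries F) ^ q ^ n) =
      z * PowerSeries.coeff (R := F) k L := by
  -- characteristic setup
  have hq2 : 2 ≤ q := hq ▸ Fintype.one_lt_card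
  set p := ringChar Fq with hpdef
  haveI : CharP Fq p := ringChar.charP Fq
  obtain ⟨m, hp, hcard⟩ := FiniteField.card Fq p
  have hqc : q = p ^ (m : ℕ) := hq ▸ hcard
  haveI : Fact p.Prime := ⟨hp⟩
  haveI : CharP F p := charP_of_injective_algebraMap (algebraMap Fq F).injective p
  haveI : ExpChar F p := ExpChar.prime hp
  haveI : ExpChar (Polynomial F) p := ExpChar.prime hp
  -- key computation of φT ^ q^n
  have key : ∀ n : ℕ, φT ^ q ^ n =
      Polynomial.C (z ^ q ^ n) * Polynomial.X ^ q ^ n +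
      ∑ i ∈ Finset.Icc 1 r, Polynomial.C (g i ^ q ^ n) * Polynomial.X ^ q ^ (n + i) := by
    intro n
    have hqn : q ^ n = p ^ (m * n) := by rw [hqc, ← pow_mul]
    have hfrob : ∀ x : Polynomial F, x ^ q ^ n = iterateFrobenius (Polynomial F) p (m * n) x := by
      intro x; rw [iterateFrobenius_def, hqn]
    rw [hφT, hfrob, map_add, map_mul, map_sum]
    simp only [map_mul, map_pow, iterateFrobenius_def, ← hqn]
    simp only [Polynomial.C_pow, ← pow_mul, pow_add]
  -- coefficientwise
  have hcoeff : ∀ n k : ℕ, (φT ^ q ^ n).coeff k =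
      (if k = q ^ n then z ^ q ^ n else 0) +
      ∑ i ∈ Finset.Icc 1 r, (if k = q ^ (n + i) then g i ^ q ^ n else 0) := by
    intro n k
    rw [key n, Polynomial.coeff_add, Polynomial.finset_sum_coeff]
    simp only [Polynomial.coeff_C_mul, Polynomial.coeff_X_pow, mul_ite, mul_one, mul_zero]
  intro k
  rw [map_sum]
  simp only [← Polynomial.coe_pow, PowerSeries.coeff_C_mul, Polynomial.coeff_coe, hcoeff]
  by_cases hk : ∃ M, k = q ^ M
  · obtain ⟨M, rfl⟩ := hk
    have hinj : ∀ a b : ℕ, q ^ a = q ^ b → a = b := fun a b h =>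
      Nat.pow_right_injective hq2 h
    have hMk : M ≤ q ^ M := (Nat.lt_pow_self (n := M) hq2).le
    rw [hL M]
    simp only [mul_add, Finset.sum_add_distrib, Finset.mul_sum]
    have hA : ∑ n ∈ Finset.range (q ^ M + 1),
        l n * (if q ^ M = q ^ n then z ^ q ^ n else 0) = l M * z ^ q ^ M := by
      rw [Finset.sum_eq_single M]
      · rw [if_pos rfl]
      · intro n _ hn
        rw [if_neg (fun h => hn (hinj n M h.symm)), mul_zero]
      · intro h
        exact absurd (Finset.mem_range.2 (Nat.lt_succ_of_le hMk)) h
    have hB : ∑ n ∈ Finset.range (q ^ M + 1), ∑ i ∈ Finset.Icc 1 r,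
        l n * (if q ^ M = q ^ (n + i) then g i ^ q ^ n else 0) =
        ∑ i ∈ Finset.Icc 1 (min M r), g i ^ q ^ (M - i) * l (M - i) := by
      rw [Finset.sum_comm]
      have step : ∀ i ∈ Finset.Icc 1 r,
          (∑ n ∈ Finset.range (q ^ M + 1),
            l n * (if q ^ M = q ^ (n + i) then g i ^ q ^ n else 0)) =
          (if i ≤ M then g i ^ q ^ (M - i) * l (M - i) else 0) := by
        intro i hi
        by_cases hiM : i ≤ M
        · rw [if_pos hiM, Finset.sum_eq_single (M - i)]
          · rw [if_pos (by rw [Nat.sub_add_cancel hiM]), mul_comm]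
          · intro n _ hn
            rw [if_neg (fun h => hn (by have := hinj M (n + i) h; omega)), mul_zero]
          · intro h
            exact absurd (Finset.mem_range.2 (by omega)) h
        · rw [if_neg hiM]
          apply Finset.sum_eq_zero
          intro n _
          rw [if_neg (fun h => hiM (by have := hinj M (n + i) h; omega)), mul_zero]
      rw [Finset.sum_congr rfl step, ← Finset.sum_filter]
      congr 1
      ext i
      simp only [Finset.mem_filter, Finset.mem_Icc, le_min_iff]
      omega
    rw [hA, hB]
    rcases Nat.eq_zero_or_pos M with hM | hM
    · subst hM
      simp [hl0]
    · have hT : ∑ i ∈ Finset.Icc 1 (min M r), g i ^ q ^ (M - i) * l (M - i) =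
          (z - z ^ q ^ M) * l M := by
        rw [hl M hM, ← mul_assoc, mul_inv_cancel₀ (sub_ne_zero.2 (fun h => hz M hM h.symm)),
          one_mul]
      rw [hT]; ring
  · push_neg at hk
    rw [hL' k hk, mul_zero]
    apply Finset.sum_eq_zero
    intro n _
    rw [if_neg (hk n), Finset.sum_eq_zero (fun i _ => by rw [if_neg (hk (n + i))]),
      add_zero, mul_zero]
end

section
/- Let q be a prime power, F a field which is an 𝔽_q-algebra, z ∈ F with z^{q^n} ≠ z for every n ≥ 1, r ≥ 1, and g₁,…,g_r ∈ F. Let E ∈ F[[X]] be the exponential series with coefficients c₀ = 1 and c_n = (z^{q^n} − z)^{−1} Σ_{i=1}^{min(n,r)} g_i c_{n−i}^{q^i} placed in degrees q^n, and let L ∈ F[[X]] be the logarithm series with coefficients ℓ₀ = 1 and ℓ_n = (z − z^{q^n})^{−1} Σ_{i=1}^{min(n,r)} g_i^{q^{n−i}} ℓ_{n−i} placed in degrees q^n. Then E and L are mutually inverse under formal composition: L(E(X)) = X and E(L(X)) = X as formal power series (both substitutions are well defined since E and L have zero constant coefficient). -/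
open Finset PowerSeries

/-- Coefficients of powers only depend on lower coefficients. -/
private lemma coeff_pow_congr {R : Type*} [CommSemiring R] {k : ℕ} {f g : PowerSeries R}
    (h : ∀ i, i ≤ k → PowerSeries.coeff i f = PowerSeries.coeff i g) (N : ℕ) :
    ∀ j, j ≤ k → PowerSeries.coeff j (f ^ N) = PowerSeries.coeff j (g ^ N) := by
  induction N with
  | zero => intro j hj; simp
  | succ N ih =>
    intro j hj
    rw [pow_succ, pow_succ, PowerSeries.coeff_mul, PowerSeries.coeff_mul]
    refine Finset.sum_congr rfl fun x hx => ?_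
    rw [HasAntidiagonal.mem_antidiagonal] at hx
    rw [ih x.1 (by omega), h x.2 (by omega)]

private lemma frobenius_pow_apply {F : Type*} [Field F] (p : ℕ) [ExpChar F p] :
    ∀ (m : ℕ) (x : F), (frobenius F p ^ m) x = x ^ p ^ m := by
  intro m
  induction m with
  | zero => intro x; simp
  | succ n ihn =>
    intro x
    rw [pow_succ, RingHom.mul_def, RingHom.comp_apply, ihn, frobenius_def, ← pow_mul,
      ← pow_succ']

/-- Coefficients of `p^m`-th powers of power series in characteristic `p`. -/
private lemma coeff_pow_frobenius {F : Type*} [Field F] (p : ℕ) [ExpChar F p]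
    (f : PowerSeries F) (m k : ℕ) :
    PowerSeries.coeff k (f ^ p ^ m) =
      if p ^ m ∣ k then (PowerSeries.coeff (k / p ^ m) f) ^ p ^ m else 0 := by
  have hp : 0 < p ^ m := expChar_pow_pos F p m
  set P : Polynomial F := PowerSeries.trunc (k + 1) f with hP
  have hcoe : ∀ i, i ≤ k →
      PowerSeries.coeff i f = PowerSeries.coeff i (P : PowerSeries F) := by
    intro i hi
    rw [Polynomial.coeff_coe, hP, PowerSeries.coeff_trunc, if_pos (by omega)]
  have h1 : PowerSeries.coeff k (f ^ p ^ m) =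
      PowerSeries.coeff k ((P : PowerSeries F) ^ p ^ m) :=
    coeff_pow_congr hcoe (p ^ m) k le_rfl
  rw [h1, ← Polynomial.coe_pow, Polynomial.coeff_coe,
    ← Polynomial.map_iterateFrobenius_expand p P m, Polynomial.coeff_map,
    Polynomial.coeff_expand hp]
  split_ifs with hd
  · rw [iterateFrobenius_def, hcoe (k / p ^ m) (Nat.div_le_self k _), Polynomial.coeff_coe]
  · rw [map_zero]

/-- The key convolution identity: `ℓ ∘ e = id`, coefficientwise. -/
private lemma convS {F : Type*} [Field F] (q : ℕ) (φ : ℕ → F →+* F)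
    (hφ : ∀ n x, φ n x = x ^ q ^ n)
    (z : F) (hz : ∀ n : ℕ, 1 ≤ n → z ^ q ^ n ≠ z)
    (r : ℕ) (g c l : ℕ → F)
    (hc : ∀ n : ℕ, 1 ≤ n →
      c n = (z ^ q ^ n - z)⁻¹ * ∑ i ∈ Finset.Icc 1 (min n r), g i * c (n - i) ^ q ^ i)
    (hl : ∀ n : ℕ, 1 ≤ n →
      l n = (z - z ^ q ^ n)⁻¹ * ∑ i ∈ Finset.Icc 1 (min n r), g i ^ q ^ (n - i) * l (n - i)) :
    ∀ k : ℕ, 1 ≤ k → ∑ n ∈ Finset.range (k + 1), l n * c (k - n) ^ q ^ n = 0 := by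
  have hpow : ∀ (x : F) (a b : ℕ), (x ^ q ^ a) ^ q ^ b = x ^ q ^ (a + b) := by
    intro x a b; rw [← pow_mul, ← pow_add]
  have key1 : ∀ m, 1 ≤ m → (z ^ q ^ m - z) * c m
      = ∑ i ∈ Finset.Icc 1 (min m r), g i * c (m - i) ^ q ^ i := by
    intro m hm
    rw [hc m hm, ← mul_assoc, mul_inv_cancel₀ (sub_ne_zero.2 (hz m hm)), one_mul]
  have key1' : ∀ n m, 1 ≤ m → (z ^ q ^ (m + n) - z ^ q ^ n) * c m ^ q ^ n
      = ∑ i ∈ Finset.Icc 1 (min m r), g i ^ q ^ n * c (m - i) ^ q ^ (i + n) := by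
    intro n m hm
    have h := congrArg (φ n) (key1 m hm)
    rw [map_mul, map_sub, map_sum] at h
    simp only [map_mul, mul_pow, hφ, hpow] at h
    exact h
  have key2 : ∀ n, 1 ≤ n → (z - z ^ q ^ n) * l n
      = ∑ i ∈ Finset.Icc 1 (min n r), g i ^ q ^ (n - i) * l (n - i) := by
    intro n hn
    rw [hl n hn, ← mul_assoc, mul_inv_cancel₀ (sub_ne_zero.2 (hz n hn).symm), one_mul]
  intro k hk
  have hzk : z ^ q ^ k - z ≠ 0 := sub_ne_zero.2 (hz k hk)
  have step : (z ^ q ^ k - z) * (∑ n ∈ Finset.range (k + 1), l n * c (k - n) ^ q ^ n)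
      = (∑ n ∈ Finset.range (k + 1), l n * ((z ^ q ^ k - z ^ q ^ n) * c (k - n) ^ q ^ n))
        - ∑ n ∈ Finset.range (k + 1), ((z - z ^ q ^ n) * l n) * c (k - n) ^ q ^ n := by
    rw [Finset.mul_sum, ← Finset.sum_sub_distrib]
    refine Finset.sum_congr rfl fun n _ => ?_
    ring
  have stepA : ∑ n ∈ Finset.range (k + 1), l n * ((z ^ q ^ k - z ^ q ^ n) * c (k - n) ^ q ^ n)
      = ∑ n ∈ Finset.range (k + 1), ∑ i ∈ Finset.Icc 1 (min (k - n) r),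
          l n * (g i ^ q ^ n * c (k - n - i) ^ q ^ (i + n)) := by
    refine Finset.sum_congr rfl fun n hn => ?_
    rw [Finset.mem_range] at hn
    rcases eq_or_lt_of_le (Nat.lt_succ_iff.1 hn) with h | h
    · subst h
      rw [Nat.sub_self, Finset.Icc_eq_empty (by omega), Finset.sum_empty, sub_self,
        zero_mul, mul_zero]
    · have hm : 1 ≤ k - n := by omega
      have e1 : (k - n) + n = k := by omega
      rw [← Finset.mul_sum, ← key1' n (k - n) hm, e1]
  have stepB : ∑ n ∈ Finset.range (k + 1), ((z - z ^ q ^ n) * l n) * c (k - n) ^ q ^ n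
      = ∑ n ∈ Finset.range (k + 1), ∑ i ∈ Finset.Icc 1 (min n r),
          (g i ^ q ^ (n - i) * l (n - i)) * c (k - n) ^ q ^ n := by
    refine Finset.sum_congr rfl fun n _ => ?_
    rcases Nat.eq_zero_or_pos n with h | h
    · subst h
      rw [Finset.Icc_eq_empty (by omega), Finset.sum_empty, pow_zero, pow_one, sub_self,
        zero_mul, zero_mul]
    · rw [key2 n h, Finset.sum_mul]
  have keyAB : ∑ n ∈ Finset.range (k + 1), ∑ i ∈ Finset.Icc 1 (min (k - n) r),
        l n * (g i ^ q ^ n * c (k - n - i) ^ q ^ (i + n))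
      = ∑ n ∈ Finset.range (k + 1), ∑ i ∈ Finset.Icc 1 (min n r),
          (g i ^ q ^ (n - i) * l (n - i)) * c (k - n) ^ q ^ n := by
    rw [Finset.sum_sigma', Finset.sum_sigma']
    refine Finset.sum_nbij' (fun x => ⟨x.1 + x.2, x.2⟩) (fun x => ⟨x.1 - x.2, x.2⟩)
      ?_ ?_ ?_ ?_ ?_
    · rintro ⟨n, i⟩ hx
      simp only [Finset.mem_sigma, Finset.mem_range, Finset.mem_Icc, le_min_iff] at hx ⊢
      omega
    · rintro ⟨n, i⟩ hx
      simp only [Finset.mem_sigma, Finset.mem_range, Finset.mem_Icc, le_min_iff] at hx ⊢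
      omega
    · rintro ⟨n, i⟩ hx
      simp only [Finset.mem_sigma, Finset.mem_range, Finset.mem_Icc, le_min_iff] at hx
      simp only [Sigma.mk.inj_iff, heq_eq_eq, and_true]
      omega
    · rintro ⟨n, i⟩ hx
      simp only [Finset.mem_sigma, Finset.mem_range, Finset.mem_Icc, le_min_iff] at hx
      simp only [Sigma.mk.inj_iff, heq_eq_eq, and_true]
      omega
    · rintro ⟨n, i⟩ hx
      simp only [Finset.mem_sigma, Finset.mem_range, Finset.mem_Icc, le_min_iff] at hx
      have e1 : n + i - i = n := by omega
      have e2 : k - (n + i) = k - n - i := by omega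
      simp only [e1, e2]
      ring
  have hfin : (z ^ q ^ k - z) * (∑ n ∈ Finset.range (k + 1), l n * c (k - n) ^ q ^ n) = 0 := by
    rw [step, stepA, stepB, keyAB, sub_self]
  exact (mul_eq_zero.1 hfin).resolve_left hzk

/-- The reverse convolution identity: `e ∘ ℓ = id`, coefficientwise. -/
private lemma convT {F : Type*} [Field F] (q : ℕ) (hq1 : 1 ≤ q) (φ : ℕ → F →+* F)
    (hφ : ∀ n x, φ n x = x ^ q ^ n)
    (z : F) (hz : ∀ n : ℕ, 1 ≤ n → z ^ q ^ n ≠ z)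
    (r : ℕ) (g c l : ℕ → F) (hc0 : c 0 = 1) (hl0 : l 0 = 1)
    (hc : ∀ n : ℕ, 1 ≤ n →
      c n = (z ^ q ^ n - z)⁻¹ * ∑ i ∈ Finset.Icc 1 (min n r), g i * c (n - i) ^ q ^ i)
    (hl : ∀ n : ℕ, 1 ≤ n →
      l n = (z - z ^ q ^ n)⁻¹ * ∑ i ∈ Finset.Icc 1 (min n r), g i ^ q ^ (n - i) * l (n - i)) :
    ∀ k : ℕ, 1 ≤ k → ∑ n ∈ Finset.range (k + 1), c n * l (k - n) ^ q ^ n = 0 := by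
  have hpow : ∀ (x : F) (a b : ℕ), (x ^ q ^ a) ^ q ^ b = x ^ q ^ (a + b) := by
    intro x a b; rw [← pow_mul, ← pow_add]
  have hS := convS q φ hφ z hz r g c l hc hl
  intro k
  induction k using Nat.strong_induction_on with
  | _ k ih =>
  intro hk
  set f : ℕ → F := fun n =>
    l n * (∑ m ∈ Finset.range (k - n + 1), c m * l (k - n - m) ^ q ^ m) ^ q ^ n with hf
  have hmid : ∀ n, 1 ≤ n → n < k → f n = 0 := by
    intro n h1 h2
    have : ∑ m ∈ Finset.range (k - n + 1), c m * l (k - n - m) ^ q ^ m = 0 :=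
      ih (k - n) (by omega) (by omega)
    rw [hf]
    simp only [this]
    rw [zero_pow (by positivity), mul_zero]
  have G1 : ∑ n ∈ Finset.range (k + 1), f n
      = (∑ n ∈ Finset.range (k + 1), c n * l (k - n) ^ q ^ n) + l k := by
    have hsplit : ∑ n ∈ Finset.range (k + 1), f n = f 0 + f k := by
      rw [Finset.sum_range_succ]
      congr 1
      obtain ⟨k', rfl⟩ : ∃ k', k = k' + 1 := ⟨k - 1, by omega⟩
      rw [Finset.sum_range_succ', Finset.sum_eq_zero, zero_add]
      intro i hi
      rw [Finset.mem_range] at hi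
      exact hmid (i + 1) (by omega) (by omega)
    rw [hsplit]
    have hf0 : f 0 = ∑ n ∈ Finset.range (k + 1), c n * l (k - n) ^ q ^ n := by
      rw [hf]
      simp only [Nat.sub_zero, pow_zero, pow_one, hl0, one_mul]
    have hfk : f k = l k := by
      rw [hf]
      simp only [Nat.sub_self]
      rw [Finset.sum_range_one]
      simp [hc0, hl0]
    rw [hf0, hfk, add_comm]
  have expand : ∀ n, (∑ m ∈ Finset.range (k - n + 1), c m * l (k - n - m) ^ q ^ m) ^ q ^ n
      = ∑ m ∈ Finset.range (k - n + 1), c m ^ q ^ n * l (k - n - m) ^ q ^ (m + n) := by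
    intro n
    have h : φ n (∑ m ∈ Finset.range (k - n + 1), c m * l (k - n - m) ^ q ^ m)
        = ∑ m ∈ Finset.range (k - n + 1), φ n (c m * l (k - n - m) ^ q ^ m) :=
      map_sum _ _ _
    simp only [map_mul, mul_pow, hφ, hpow] at h
    exact h
  have G2 : ∑ n ∈ Finset.range (k + 1), f n = l k := by
    have hdouble : ∑ n ∈ Finset.range (k + 1), f n
        = ∑ n ∈ Finset.range (k + 1), ∑ m ∈ Finset.range (k - n + 1),
            l n * (c m ^ q ^ n * l (k - n - m) ^ q ^ (m + n)) := by
      refine Finset.sum_congr rfl fun n _ => ?_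
      rw [hf]
      simp only [expand n, Finset.mul_sum]
    have hregroup : ∑ n ∈ Finset.range (k + 1), ∑ m ∈ Finset.range (k - n + 1),
          l n * (c m ^ q ^ n * l (k - n - m) ^ q ^ (m + n))
        = ∑ d ∈ Finset.range (k + 1), ∑ n ∈ Finset.range (k - d + 1),
            (l n * c (k - d - n) ^ q ^ n) * l d ^ q ^ (k - d) := by
      rw [Finset.sum_sigma', Finset.sum_sigma']
      refine Finset.sum_nbij' (fun x => ⟨k - x.1 - x.2, x.1⟩) (fun x => ⟨x.2, k - x.1 - x.2⟩)
        ?_ ?_ ?_ ?_ ?_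
      · rintro ⟨n, m⟩ hx
        simp only [Finset.mem_sigma, Finset.mem_range] at hx ⊢
        omega
      · rintro ⟨d, n⟩ hx
        simp only [Finset.mem_sigma, Finset.mem_range] at hx ⊢
        omega
      · rintro ⟨n, m⟩ hx
        simp only [Finset.mem_sigma, Finset.mem_range] at hx
        simp only [Sigma.mk.inj_iff, heq_eq_eq, true_and, and_true]
        omega
      · rintro ⟨d, n⟩ hx
        simp only [Finset.mem_sigma, Finset.mem_range] at hx
        simp only [Sigma.mk.inj_iff, heq_eq_eq, true_and, and_true]
        omega
      · rintro ⟨n, m⟩ hx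
        simp only [Finset.mem_sigma, Finset.mem_range] at hx
        have e2 : k - (k - n - m) = m + n := by omega
        have e3 : m + n - n = m := by omega
        simp only [e2, e3]
        ring
    have heval : ∑ d ∈ Finset.range (k + 1), ∑ n ∈ Finset.range (k - d + 1),
          (l n * c (k - d - n) ^ q ^ n) * l d ^ q ^ (k - d) = l k := by
      rw [Finset.sum_range_succ]
      have hz0 : ∑ d ∈ Finset.range k, ∑ n ∈ Finset.range (k - d + 1),
            (l n * c (k - d - n) ^ q ^ n) * l d ^ q ^ (k - d) = 0 := by
        refine Finset.sum_eq_zero fun d hd => ?_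
        rw [Finset.mem_range] at hd
        rw [← Finset.sum_mul, hS (k - d) (by omega), zero_mul]
      rw [hz0, zero_add, Nat.sub_self, Finset.sum_range_one]
      simp [hc0, hl0]
    rw [hdouble, hregroup, heval]
  have h := G1.symm.trans G2
  -- (∑ ... + l k) = l k
  exact add_eq_right.1 h

/-- The exponential `E` and logarithm `L` of the Drinfeld module `φ_T = z + g₁τ + ⋯ + g_rτ^r`
are mutually inverse under formal composition: `L(E(X)) = X` and `E(L(X)) = X`.  Both `E` and
`L` have zero constant coefficient and coefficient `1` in degree `1`, so `E^{q^n}` (resp.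
`L^{q^n}`) has vanishing coefficients in degrees `≤ k` for `n > k`; the compositions
`L(E(X)) = Σ_n ℓ_n E^{q^n}` and `E(L(X)) = Σ_n c_n L^{q^n}` are therefore expressed
coefficientwise by the finite sums over `n ≤ k` in each degree `k`. -/
theorem drinfeld_exponential_logarithm_inverse
    (Fq : Type*) [Field Fq] [Fintype Fq] (q : ℕ) (hq : Fintype.card Fq = q)
    (F : Type*) [Field F] [Algebra Fq F]
    (z : F) (hz : ∀ n : ℕ, 1 ≤ n → z ^ q ^ n ≠ z)
    (r : ℕ) (hr : 1 ≤ r) (g : ℕ → F)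
    (c : ℕ → F) (hc0 : c 0 = 1)
    (hc : ∀ n : ℕ, 1 ≤ n →
      c n = (z ^ q ^ n - z)⁻¹ * ∑ i ∈ Finset.Icc 1 (min n r), g i * c (n - i) ^ q ^ i)
    (l : ℕ → F) (hl0 : l 0 = 1)
    (hl : ∀ n : ℕ, 1 ≤ n →
      l n = (z - z ^ q ^ n)⁻¹ * ∑ i ∈ Finset.Icc 1 (min n r), g i ^ q ^ (n - i) * l (n - i))
    (E : PowerSeries F)
    (hE : ∀ n : ℕ, PowerSeries.coeff (q ^ n) E = c n)
    (hE' : ∀ k : ℕ, (∀ n : ℕ, k ≠ q ^ n) → PowerSeries.coeff k E = 0)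
    (L : PowerSeries F)
    (hL : ∀ n : ℕ, PowerSeries.coeff (q ^ n) L = l n)
    (hL' : ∀ k : ℕ, (∀ n : ℕ, k ≠ q ^ n) → PowerSeries.coeff k L = 0) :
    (∀ k : ℕ,
      PowerSeries.coeff k
        (∑ n ∈ Finset.range (k + 1), PowerSeries.C (l n) * E ^ q ^ n) =
      PowerSeries.coeff k (PowerSeries.X : PowerSeries F)) ∧
    (∀ k : ℕ,
      PowerSeries.coeff k
        (∑ n ∈ Finset.range (k + 1), PowerSeries.C (c n) * L ^ q ^ n) =
      PowerSeries.coeff k (PowerSeries.X : PowerSeries F)) := by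
  have hq2 : 2 ≤ q := hq ▸ Fintype.one_lt_card
  -- characteristic setup
  set p : ℕ := ringChar Fq with hpdef
  haveI hcp : CharP Fq p := ringChar.charP Fq
  haveI hfp : Fact p.Prime := ⟨CharP.char_is_prime Fq p⟩
  obtain ⟨e, hp, hcard⟩ := FiniteField.card Fq p
  have hqpe : q = p ^ (e : ℕ) := by rw [← hq, hcard]
  haveI : CharP F p := charP_of_injective_algebraMap (algebraMap Fq F).injective p
  haveI : ExpChar F p := ExpChar.prime hfp.out
  set φ : ℕ → F →+* F := fun n => iterateFrobenius F p ((e : ℕ) * n) with hφdef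
  have hφ : ∀ n x, φ n x = x ^ q ^ n := by
    intro n x
    rw [hφdef]
    simp only [iterateFrobenius_def]
    rw [pow_mul, ← hqpe]
  -- coefficients of q^n-th powers
  have hcoeffpow : ∀ (D : PowerSeries F) (n k : ℕ),
      PowerSeries.coeff k (D ^ q ^ n) =
        if q ^ n ∣ k then (PowerSeries.coeff (k / q ^ n) D) ^ q ^ n else 0 := by
    intro D n k
    have hqn : q ^ n = p ^ ((e : ℕ) * n) := by rw [pow_mul, ← hqpe]
    rw [hqn]
    exact coeff_pow_frobenius p D ((e : ℕ) * n) k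
  -- the main coefficientwise computation
  have main : ∀ (D : PowerSeries F) (a b : ℕ → F),
      (∀ n, PowerSeries.coeff (q ^ n) D = a n) →
      (∀ k, (∀ n, k ≠ q ^ n) → PowerSeries.coeff k D = 0) →
      a 0 = 1 → b 0 = 1 →
      (∀ k, 1 ≤ k → ∑ n ∈ Finset.range (k + 1), b n * a (k - n) ^ q ^ n = 0) →
      ∀ k, PowerSeries.coeff k
          (∑ n ∈ Finset.range (k + 1), PowerSeries.C (b n) * D ^ q ^ n) =
        PowerSeries.coeff k (PowerSeries.X : PowerSeries F) := by
    intro D a b hDa hD0 ha0 hb0 hconv k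
    rw [map_sum]
    have hterm : ∀ n, PowerSeries.coeff k (PowerSeries.C (b n) * D ^ q ^ n)
        = b n * (if q ^ n ∣ k then (PowerSeries.coeff (k / q ^ n) D) ^ q ^ n else 0) := by
      intro n
      rw [PowerSeries.coeff_C_mul, hcoeffpow]
    simp only [hterm]
    by_cases hpow : ∃ s, k = q ^ s
    · obtain ⟨s, rfl⟩ := hpow
      have hsk : s < q ^ s := Nat.lt_pow_self (n := s) hq2
      have hvanish : ∀ n ∈ Finset.range (q ^ s + 1), n ∉ Finset.range (s + 1) →
          b n * (if q ^ n ∣ q ^ s then (PowerSeries.coeff (q ^ s / q ^ n) D) ^ q ^ n else 0)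
            = 0 := by
        intro n _ hn
        rw [Finset.mem_range, not_lt] at hn
        have hnd : ¬ q ^ n ∣ q ^ s := by
          intro hdvd
          have h1 := Nat.le_of_dvd (pow_pos (by omega : 0 < q) s) hdvd
          exact absurd h1 (not_le.2 (Nat.pow_lt_pow_right hq2 (by omega)))
        rw [if_neg hnd, mul_zero]
      rw [← Finset.sum_subset (Finset.range_subset_range.2 (by omega : s + 1 ≤ q ^ s + 1)) hvanish]
      have heval : ∀ n ∈ Finset.range (s + 1),
          b n * (if q ^ n ∣ q ^ s then (PowerSeries.coeff (q ^ s / q ^ n) D) ^ q ^ n else 0)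
            = b n * a (s - n) ^ q ^ n := by
        intro n hn
        rw [Finset.mem_range] at hn
        have hdvd : q ^ n ∣ q ^ s := pow_dvd_pow q (by omega)
        rw [if_pos hdvd, Nat.pow_div (by omega) (by omega), hDa (s - n)]
      rw [Finset.sum_congr rfl heval]
      rcases Nat.eq_zero_or_pos s with hs | hs
      · subst hs
        simp [hb0, ha0]
      · have hne : ¬ (q ^ s = 1) := by
          have : q ≤ q ^ s := Nat.le_self_pow (by omega) q
          omega
        rw [hconv s hs, PowerSeries.coeff_X, if_neg hne]
    · push_neg at hpow
      have hzero : ∀ n ∈ Finset.range (k + 1),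
          b n * (if q ^ n ∣ k then (PowerSeries.coeff (k / q ^ n) D) ^ q ^ n else 0) = 0 := by
        intro n _
        split_ifs with hdvd
        · have hD : PowerSeries.coeff (k / q ^ n) D = 0 := by
            apply hD0
            intro m hm
            apply hpow (n + m)
            obtain ⟨j, hj⟩ := hdvd
            have hqn : 0 < q ^ n := pow_pos (by omega : 0 < q) n
            have : k / q ^ n = j := by rw [hj, Nat.mul_div_cancel_left _ hqn]
            rw [pow_add, hj, this.symm.trans hm]
          rw [hD, zero_pow (pow_pos (by omega : 0 < q) n).ne', mul_zero]
        · rw [mul_zero]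
      have hne : ¬ (k = 1) := by
        have := hpow 0
        rw [pow_zero] at this
        exact this
      rw [Finset.sum_eq_zero hzero, PowerSeries.coeff_X, if_neg hne]
  exact ⟨main E c l hE hE' hc0 hl0 (convS q φ hφ z hz r g c l hc hl),
    main L l c hL hL' hl0 hc0 (convT q (by omega) φ hφ z hz r g c l hc0 hl0 hc hl)⟩
end

section
/- Let q be a prime power, F a field which is an 𝔽_q-algebra, F^s a separable closure of F, z ∈ F, r ≥ 1 and g₁,…,g_r ∈ F with g_r ≠ 0. Endow F^s with the 𝔽_q[T]-module structure in which T acts by the 𝔽_q-linear map x ↦ zx + g₁x^q + ⋯ + g_r x^{q^r}. Let l ∈ 𝔽_q[T] be an irreducible polynomial with l(z) ≠ 0 (i.e. l is different from the A-characteristic), and let n ≥ 1. Then the l^n-torsion submodule of F^s is a free module of rank r over 𝔽_q[T]/(l^n); equivalently, it is isomorphic as an 𝔽_q[T]-module to (𝔽_q[T]/(l^n))^r. -/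
open Polynomial
set_option linter.unusedSectionVars false

section DrinfeldAux

variable {Fq : Type*} [Field Fq] [instFin : Fintype Fq] {q : ℕ}
  {F : Type*} [Field F] [instA : Algebra Fq F]
  {Fs : Type*} [Field Fs] [instB : Algebra F Fs] [instS : IsSepClosure F Fs]
  [instC : Algebra Fq Fs] [instT : IsScalarTower Fq F Fs]

variable (hq : Fintype.card Fq = q)

include instT hq

lemma algFqFs (c : Fq) : algebraMap F Fs (algebraMap Fq F c) = algebraMap Fq Fs c :=
  (IsScalarTower.algebraMap_apply Fq F Fs c).symm

lemma exists_char : ∃ p m : ℕ, p.Prime ∧ 1 ≤ m ∧ q = p ^ m ∧ CharP Fs p := by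
  obtain ⟨p, hc⟩ := CharP.exists Fq
  haveI := hc
  obtain ⟨m, hp, hcard⟩ := FiniteField.card Fq p
  haveI : CharP Fs p := charP_of_injective_ringHom (algebraMap Fq Fs).injective p
  exact ⟨p, m, hp, m.2, by rw [← hq, hcard], inferInstance⟩

lemma q_pow_add (i : ℕ) (x y : Fs) : (x + y) ^ q ^ i = x ^ q ^ i + y ^ q ^ i := by
  obtain ⟨p, m, hp, hm, hqp, hchar⟩ := exists_char (Fq := Fq) (F := F) (Fs := Fs) hq
  haveI := hchar
  haveI := Fact.mk hp
  rw [hqp, ← pow_mul, add_pow_char_pow]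

lemma q_pow_scalar (i : ℕ) (c : Fq) :
    (algebraMap Fq Fs c) ^ q ^ i = algebraMap Fq Fs c := by
  rw [← map_pow, ← hq, FiniteField.pow_card_pow]

omit instT hq in
lemma two_le_q (hq : Fintype.card Fq = q) : 2 ≤ q := hq ▸ Fintype.one_lt_card

variable (z : F) (r : ℕ) (g : ℕ → F)

/-- The `Fq`-linear map `x ↦ z x + ∑ g i x^{q^i}`. -/
noncomputable def ellL : Fs →ₗ[Fq] Fs where
  toFun x := algebraMap F Fs z * x +
    ∑ i ∈ Finset.Icc 1 r, algebraMap F Fs (g i) * x ^ q ^ i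
  map_add' x y := by
    simp only [q_pow_add (F := F) hq, mul_add, Finset.sum_add_distrib]; ring
  map_smul' c x := by
    simp only [Algebra.smul_def, RingHom.id_apply]
    rw [mul_add, Finset.mul_sum]
    congr 1
    · ring
    · refine Finset.sum_congr rfl fun i _ => ?_
      rw [mul_pow, q_pow_scalar (F := F) hq]
      ring

lemma ellL_apply (x : Fs) : ellL hq z r g x = algebraMap F Fs z * x +
    ∑ i ∈ Finset.Icc 1 r, algebraMap F Fs (g i) * x ^ q ^ i := rfl

/-- `ψ b x = aeval (ellL) b x`. -/
lemma psi_eq_aeval (b : Polynomial Fq) (x : Fs) :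
    ∑ i ∈ b.support, algebraMap F Fs (algebraMap Fq F (b.coeff i)) *
      ((ellL (Fs := Fs) hq z r g : Fs → Fs)^[i] x) = aeval (ellL (Fs := Fs) hq z r g) b x := by
  rw [aeval_def, eval₂_eq_sum, Polynomial.sum_def, LinearMap.coe_sum,
    Finset.sum_apply]
  refine Finset.sum_congr rfl fun i _ => ?_
  rw [Module.End.mul_apply, Module.algebraMap_end_apply, Module.End.pow_apply,
    Algebra.smul_def, algFqFs hq]

/-- Polynomial model of `ℓfun`. -/
noncomputable def PT (q' : ℕ) (z : F) (r : ℕ) (g : ℕ → F) : Polynomial Fs :=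
  C (algebraMap F Fs z) * X +
    ∑ i ∈ Finset.Icc 1 r, C (algebraMap F Fs (g i)) * X ^ q' ^ i

/-- Iterated composition of `PT`. -/
noncomputable def PTiter (q' : ℕ) (z : F) (r : ℕ) (g : ℕ → F) : ℕ → Polynomial Fs
  | 0 => X
  | (i + 1) => (PT q' z r g).comp (PTiter q' z r g i)

/-- Polynomial model of `ψ b`. -/
noncomputable def Pb (q' : ℕ) (z : F) (r : ℕ) (g : ℕ → F) (b : Polynomial Fq) : Polynomial Fs :=
  ∑ i ∈ b.support, C (algebraMap F Fs (algebraMap Fq F (b.coeff i))) * PTiter q' z r g i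

lemma eval_PT (x : Fs) : (PT q z r g).eval x = ellL hq z r g x := by
  simp [PT, ellL_apply, eval_finset_sum]

lemma eval_PTiter (i : ℕ) (x : Fs) :
    (PTiter q z r g i).eval x = (⇑(ellL (Fs := Fs) hq z r g))^[i] x := by
  induction i with
  | zero => simp [PTiter]
  | succ i ih =>
    rw [PTiter, eval_comp, ih, eval_PT hq, Function.iterate_succ_apply']

lemma eval_Pb (b : Polynomial Fq) (x : Fs) :
    (Pb q z r g b).eval x = aeval (ellL (Fs := Fs) hq z r g) b x := by
  rw [← psi_eq_aeval hq, Pb, eval_finset_sum]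
  exact Finset.sum_congr rfl fun i _ => by rw [eval_mul, eval_C, eval_PTiter hq]

lemma coeff_PT_top (hr : 1 ≤ r) :
    (PT (Fs := Fs) q z r g).coeff (q ^ r) = algebraMap F Fs (g r) := by
  have h2 : 2 ≤ q := two_le_q hq
  have hne1 : q ^ r ≠ 1 := (one_lt_pow₀ (by omega : (1:ℕ) < q) (by omega)).ne'
  rw [PT, coeff_add, coeff_C_mul, coeff_X, if_neg (by omega), mul_zero, zero_add,
    finset_sum_coeff]
  rw [Finset.sum_eq_single r]
  · rw [coeff_C_mul, coeff_X_pow, if_pos rfl, mul_one]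
  · intro i hi hir
    rw [coeff_C_mul, coeff_X_pow, if_neg, mul_zero]
    exact fun h => hir (Nat.pow_right_injective h2 h).symm
  · intro h
    exact absurd (Finset.mem_Icc.mpr ⟨hr, le_refl r⟩) h

lemma natDegree_PT_le : (PT (Fs := Fs) q z r g).natDegree ≤ q ^ r := by
  have h2 : 2 ≤ q := two_le_q hq
  have h1 : 1 ≤ q ^ r := Nat.one_le_pow _ _ (by omega)
  refine le_trans (natDegree_add_le _ _) (max_le (le_trans (natDegree_C_mul_le _ _) (by simp [h1])) ?_)
  refine natDegree_sum_le_of_forall_le _ _ fun i hi => ?_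
  refine le_trans (natDegree_C_mul_le _ _) ?_
  simpa using Nat.pow_le_pow_right (by omega) (Finset.mem_Icc.mp hi).2

lemma natDegree_PT (hr : 1 ≤ r) (hgr : g r ≠ 0) :
    (PT (Fs := Fs) q z r g).natDegree = q ^ r := by
  refine le_antisymm (natDegree_PT_le hq z r g) (le_natDegree_of_ne_zero ?_)
  rw [coeff_PT_top hq z r g hr]
  exact fun h => hgr ((_root_.map_eq_zero (algebraMap F Fs)).mp h)

lemma leadingCoeff_PT (hr : 1 ≤ r) (hgr : g r ≠ 0) :
    (PT (Fs := Fs) q z r g).leadingCoeff = algebraMap F Fs (g r) := by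
  rw [leadingCoeff, natDegree_PT hq z r g hr hgr, coeff_PT_top hq z r g hr]

lemma natDegree_PTiter (hr : 1 ≤ r) (hgr : g r ≠ 0) (i : ℕ) :
    (PTiter (Fs := Fs) q z r g i).natDegree = q ^ (r * i) := by
  induction i with
  | zero => simp [PTiter]
  | succ i ih =>
    rw [PTiter, natDegree_comp, ih, natDegree_PT hq z r g hr hgr, ← pow_add]
    ring_nf

lemma PTiter_natDegree_ne_zero (hr : 1 ≤ r) (hgr : g r ≠ 0) (i : ℕ) :
    (PTiter (Fs := Fs) q z r g i).natDegree ≠ 0 := by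
  have h2 : 2 ≤ q := two_le_q hq
  rw [natDegree_PTiter hq z r g hr hgr]
  positivity

lemma leadingCoeff_PTiter_ne_zero (hr : 1 ≤ r) (hgr : g r ≠ 0) (i : ℕ) :
    (PTiter (Fs := Fs) q z r g i).leadingCoeff ≠ 0 := by
  induction i with
  | zero => simp [PTiter]
  | succ i ih =>
    rw [PTiter, leadingCoeff_comp (PTiter_natDegree_ne_zero hq z r g hr hgr i),
      leadingCoeff_PT hq z r g hr hgr]
    exact mul_ne_zero (fun h => hgr ((_root_.map_eq_zero (algebraMap F Fs)).mp h)) (pow_ne_zero _ ih)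

lemma coeff_Pb_top (hr : 1 ≤ r) (hgr : g r ≠ 0) (b : Polynomial Fq) (hb : b ≠ 0) :
    (Pb (Fs := Fs) q z r g b).coeff (q ^ (r * b.natDegree)) =
      algebraMap F Fs (algebraMap Fq F b.leadingCoeff) *
        (PTiter (Fs := Fs) q z r g b.natDegree).leadingCoeff := by
  have h2 : 2 ≤ q := two_le_q hq
  rw [Pb, finset_sum_coeff, Finset.sum_eq_single b.natDegree]
  · rw [coeff_C_mul, ← natDegree_PTiter (Fs := Fs) hq z r g hr hgr b.natDegree]; rfl
  · intro i hi hine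
    have hilt : i < b.natDegree := lt_of_le_of_ne (le_natDegree_of_mem_supp i hi) hine
    rw [coeff_C_mul, coeff_eq_zero_of_natDegree_lt
      (p := PTiter (Fs := Fs) q z r g i) (n := q ^ (r * b.natDegree)) (by
      rw [natDegree_PTiter hq z r g hr hgr]
      exact pow_lt_pow_right₀ (by omega : (1:ℕ) < q)
        (mul_lt_mul_of_pos_left hilt (by omega : (0:ℕ) < r))), mul_zero]
  · intro h
    exact absurd (natDegree_mem_support_of_nonzero hb) h

lemma natDegree_Pb (hr : 1 ≤ r) (hgr : g r ≠ 0) (b : Polynomial Fq) (hb : b ≠ 0) :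
    (Pb (Fs := Fs) q z r g b).natDegree = q ^ (r * b.natDegree) := by
  have h2 : 2 ≤ q := two_le_q hq
  refine le_antisymm ?_ (le_natDegree_of_ne_zero ?_)
  · refine natDegree_sum_le_of_forall_le _ _ fun i hi => ?_
    refine le_trans (natDegree_C_mul_le _ _) ?_
    rw [natDegree_PTiter hq z r g hr hgr]
    exact Nat.pow_le_pow_right (by omega)
      (Nat.mul_le_mul_left r (le_natDegree_of_mem_supp i hi))
  · rw [coeff_Pb_top hq z r g hr hgr b hb]
    refine mul_ne_zero ?_ (leadingCoeff_PTiter_ne_zero hq z r g hr hgr _)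
    simp only [ne_eq, _root_.map_eq_zero]
    exact leadingCoeff_ne_zero.mpr hb

lemma Pb_ne_zero (hr : 1 ≤ r) (hgr : g r ≠ 0) (b : Polynomial Fq) (hb : b ≠ 0) :
    Pb (Fs := Fs) q z r g b ≠ 0 := by
  intro h
  have h1 := coeff_Pb_top (Fs := Fs) hq z r g hr hgr b hb
  rw [h, coeff_zero] at h1
  have h2 : algebraMap F Fs (algebraMap Fq F b.leadingCoeff) ≠ 0 := by
    simp only [ne_eq, _root_.map_eq_zero]
    exact leadingCoeff_ne_zero.mpr hb
  exact mul_ne_zero h2 (leadingCoeff_PTiter_ne_zero hq z r g hr hgr _) h1.symm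

lemma derivative_PT : derivative (PT (Fs := Fs) q z r g) = C (algebraMap F Fs z) := by
  obtain ⟨p, m, hp, hm, hqp, hchar⟩ := exists_char (Fq := Fq) (F := F) (Fs := Fs) hq
  haveI := hchar
  rw [PT, derivative_add, derivative_C_mul_X, derivative_sum]
  rw [Finset.sum_eq_zero, add_zero]
  intro i hi
  rw [derivative_C_mul, derivative_X_pow]
  have hi1 : 1 ≤ i := (Finset.mem_Icc.mp hi).1
  have hdvd : p ∣ q ^ i := by
    rw [hqp, ← pow_mul]
    exact dvd_pow_self p (by positivity)
  have : ((q ^ i : ℕ) : Fs) = 0 := (CharP.cast_eq_zero_iff Fs p _).mpr hdvd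
  rw [this, map_zero, zero_mul, mul_zero]

lemma derivative_PTiter (i : ℕ) :
    derivative (PTiter (Fs := Fs) q z r g i) = C ((algebraMap F Fs z) ^ i) := by
  induction i with
  | zero => simp [PTiter]
  | succ i ih =>
    rw [PTiter, derivative_comp, derivative_PT hq, ih, C_comp, ← C_mul, ← pow_succ]

lemma derivative_Pb (b : Polynomial Fq) :
    derivative (Pb (Fs := Fs) q z r g b) =
      C (algebraMap F Fs (aeval z b)) := by
  rw [Pb, derivative_sum]
  have : ∀ i ∈ b.support,
      derivative (C (algebraMap F Fs (algebraMap Fq F (b.coeff i))) * PTiter (Fs := Fs) q z r g i)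
        = C (algebraMap F Fs (algebraMap Fq F (b.coeff i) * z ^ i)) := by
    intro i _
    rw [derivative_C_mul, derivative_PTiter hq, ← C_mul, ← map_pow, ← map_mul]
  rw [Finset.sum_congr rfl this, ← map_sum C _ b.support,
    ← map_sum (algebraMap F Fs) _ b.support]
  congr 2
  rw [aeval_def, eval₂_eq_sum, Polynomial.sum_def]

lemma separable_Pb (b : Polynomial Fq) (hbz : aeval z b ≠ 0) :
    (Pb (Fs := Fs) q z r g b).Separable := by
  refine ⟨0, C ((algebraMap F Fs (aeval z b))⁻¹), ?_⟩
  rw [derivative_Pb hq, zero_mul, zero_add, ← C_mul,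
    inv_mul_cancel₀ (by simpa using hbz), C_1]

lemma ker_eq_rootSet (hr : 1 ≤ r) (hgr : g r ≠ 0) (b : Polynomial Fq) (hb : b ≠ 0) :
    (LinearMap.ker (aeval (ellL (Fs := Fs) hq z r g) b) : Set Fs) =
      (Pb (Fs := Fs) q z r g b).rootSet Fs := by
  ext x
  rw [SetLike.mem_coe, LinearMap.mem_ker, mem_rootSet]
  constructor
  · intro hx
    refine ⟨Pb_ne_zero hq z r g hr hgr b hb, ?_⟩
    rw [coe_aeval_eq_eval, eval_Pb hq]
    exact hx
  · intro ⟨_, hx⟩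
    rw [coe_aeval_eq_eval, eval_Pb hq] at hx
    exact hx

lemma finite_ker (hr : 1 ≤ r) (hgr : g r ≠ 0) (b : Polynomial Fq) (hb : b ≠ 0) :
    (LinearMap.ker (aeval (ellL (Fs := Fs) hq z r g) b) : Set Fs).Finite := by
  rw [ker_eq_rootSet hq z r g hr hgr b hb]
  exact Set.toFinite _

lemma card_ker (hr : 1 ≤ r) (hgr : g r ≠ 0) (b : Polynomial Fq) (hb : b ≠ 0)
    (hbz : aeval z b ≠ 0) :
    Nat.card (LinearMap.ker (aeval (ellL (Fs := Fs) hq z r g) b)) =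
      q ^ (r * b.natDegree) := by
  haveI : IsSepClosed Fs := IsSepClosure.sep_closed F
  have hsep := separable_Pb (Fs := Fs) hq z r g b hbz
  have hsplit : Splits ((Pb (Fs := Fs) q z r g b).map (algebraMap Fs Fs)) := by
    have := IsSepClosed.splits_codomain (f := RingHom.id Fs) _ hsep
    simpa using this
  have hcard := card_rootSet_eq_natDegree hsep hsplit
  have hset := ker_eq_rootSet (Fs := Fs) hq z r g hr hgr b hb
  refine Eq.trans (Nat.card_congr (Equiv.setCongr hset)) ?_
  rw [Nat.card_eq_fintype_card, hcard, natDegree_Pb hq z r g hr hgr b hb]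

lemma finrank_ker (hr : 1 ≤ r) (hgr : g r ≠ 0) (b : Polynomial Fq) (hb : b ≠ 0)
    (hbz : aeval z b ≠ 0) :
    Module.finrank Fq (LinearMap.ker (aeval (ellL (Fs := Fs) hq z r g) b)) =
      r * b.natDegree := by
  haveI : Finite ↥(LinearMap.ker (aeval (ellL (Fs := Fs) hq z r g) b)) :=
    (finite_ker hq z r g hr hgr b hb).to_subtype
  haveI : Fintype ↥(LinearMap.ker (aeval (ellL (Fs := Fs) hq z r g) b)) :=
    Fintype.ofFinite _
  have hbasis := Module.finBasis Fq ↥(LinearMap.ker (aeval (ellL (Fs := Fs) hq z r g) b))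
  have hcard : Fintype.card ↥(LinearMap.ker (aeval (ellL (Fs := Fs) hq z r g) b)) =
      Fintype.card Fq ^ Module.finrank Fq
        ↥(LinearMap.ker (aeval (ellL (Fs := Fs) hq z r g) b)) := by
    simpa using Module.card_fintype hbasis
  have h2 := card_ker (Fs := Fs) hq z r g hr hgr b hb hbz
  rw [Nat.card_eq_fintype_card, hcard, hq] at h2
  exact Nat.pow_right_injective (two_le_q hq) h2

omit hq instT in
lemma pow_restrict_coe (N : Submodule Fq Fs) (f : Fs →ₗ[Fq] Fs)
    (hN : ∀ x ∈ N, f x ∈ N) (n : ℕ) (x : N) :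
    ((((f.restrict fun x hx => hN x hx) ^ n) x : N) : Fs) = (f ^ n) (x : Fs) := by
  induction n generalizing x with
  | zero => simp
  | succ n ih =>
    rw [pow_succ, pow_succ, Module.End.mul_apply, Module.End.mul_apply, ih,
      LinearMap.restrict_coe_apply]

omit hq instT in
lemma aeval_restrict_coe (N : Submodule Fq Fs) (f : Fs →ₗ[Fq] Fs)
    (hN : ∀ x ∈ N, f x ∈ N) (b : Polynomial Fq) (x : N) :
    ((aeval (f.restrict fun x hx => hN x hx) b x : N) : Fs) = aeval f b (x : Fs) := by
  induction b using Polynomial.induction_on' with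
  | add p' q' hp' hq' =>
    rw [map_add, map_add, LinearMap.add_apply, LinearMap.add_apply,
      Submodule.coe_add, hp', hq']
  | monomial n a =>
    rw [aeval_monomial, aeval_monomial, Module.End.mul_apply, Module.End.mul_apply,
      Module.algebraMap_end_apply, Module.algebraMap_end_apply,
      SetLike.val_smul, pow_restrict_coe]

lemma exists_basis_ker_l (hr : 1 ≤ r) (hgr : g r ≠ 0) (l : Polynomial Fq)
    (hl : Irreducible l) (hlz : aeval z l ≠ 0) :
    ∃ w : Fin r → Fs,
      (∀ i, aeval (ellL (Fs := Fs) hq z r g) l (w i) = 0) ∧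
      ∀ x : Fs, aeval (ellL (Fs := Fs) hq z r g) l x = 0 →
        ∃ b : Fin r → Polynomial Fq,
          x = ∑ i, aeval (ellL (Fs := Fs) hq z r g) (b i) (w i) := by
  classical
  set f := ellL (Fs := Fs) hq z r g with hf
  set N : Submodule Fq Fs := LinearMap.ker (aeval f l) with hN
  have hcomm : ∀ (a b' : Polynomial Fq) (x : Fs),
      aeval f a (aeval f b' x) = aeval f b' (aeval f a x) := by
    intro a b' x
    rw [← Module.End.mul_apply, ← map_mul, mul_comm, map_mul, Module.End.mul_apply]
  have hNinv : ∀ x ∈ N, f x ∈ N := by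
    intro x hx
    rw [hN, LinearMap.mem_ker] at hx ⊢
    rw [show f x = aeval f (X : Polynomial Fq) x from by rw [aeval_X],
      hcomm, hx, map_zero]
  let f₁ : N →ₗ[Fq] N := f.restrict fun x hx => hNinv x hx
  letI : Module (Polynomial Fq) N :=
    Module.compHom N (aeval f₁ : Polynomial Fq →ₐ[Fq] Module.End Fq N).toRingHom
  have hsmul : ∀ (b : Polynomial Fq) (x : N), b • x = aeval f₁ b x := fun _ _ => rfl
  have hsmulcoe : ∀ (b : Polynomial Fq) (x : N), ((b • x : N) : Fs) = aeval f b (x : Fs) := by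
    intro b x
    rw [hsmul, aeval_restrict_coe]
  have htor : Module.IsTorsionBy (Polynomial Fq) N l := by
    intro x
    apply Subtype.ext
    rw [hsmulcoe]
    exact x.2
  letI : Module (AdjoinRoot l) N := htor.module
  haveI : Fact (Irreducible l) := ⟨hl⟩
  have hlne : l ≠ 0 := hl.ne_zero
  haveI : Finite ↥N := (finite_ker hq z r g hr hgr l hlne).to_subtype
  haveI : Fintype ↥N := Fintype.ofFinite _
  haveI : Fintype (AdjoinRoot l) :=
    Module.fintypeOfFintype (AdjoinRoot.powerBasis hlne).basis
  have hcardA : Fintype.card (AdjoinRoot l) = q ^ l.natDegree := by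
    have := Module.card_fintype (AdjoinRoot.powerBasis hlne).basis
    simp [hq, AdjoinRoot.powerBasis] at this
    rw [this]; congr 1; exact (Fintype.card_congr (Equiv.refl _)).trans (Fintype.card_fin l.natDegree)
  have hB := Module.finBasis (AdjoinRoot l) N
  have hcardN : Fintype.card N = Fintype.card (AdjoinRoot l) ^
      Module.finrank (AdjoinRoot l) N := by
    simpa using Module.card_fintype hB
  have hcardN' : Fintype.card N = q ^ (r * l.natDegree) := by
    rw [← Nat.card_eq_fintype_card]
    exact card_ker (Fs := Fs) hq z r g hr hgr l hlne hlz
  have hdpos : 0 < l.natDegree := hl.natDegree_pos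
  have hrank : Module.finrank (AdjoinRoot l) N = r := by
    rw [hcardN', hcardA, ← pow_mul] at hcardN
    have := Nat.pow_right_injective (two_le_q (Fq := Fq) hq) hcardN
    have h2 : l.natDegree * r = l.natDegree * Module.finrank (AdjoinRoot l) N := by
      rw [mul_comm l.natDegree r]; exact this
    exact (Nat.eq_of_mul_eq_mul_left hdpos h2).symm
  let B := hB.reindex (finCongr hrank)
  refine ⟨fun i => (B i : Fs), fun i => (B i).2, ?_⟩
  intro x hx
  set xN : N := ⟨x, hx⟩ with hxN
  have hrepr : (∑ i, B.repr xN i • B i : N) = xN := B.sum_repr xN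
  have hlift : ∀ i : Fin r, ∃ b : Polynomial Fq,
      Ideal.Quotient.mk (Ideal.span {l}) b = B.repr xN i :=
    fun i => Ideal.Quotient.mk_surjective _
  choose b hb using hlift
  refine ⟨b, ?_⟩
  have : ∀ i : Fin r, (B.repr xN i • B i : N) = b i • B i := by
    intro i
    rw [← hb i]
    exact (Module.IsTorsionBy.mk_smul htor (b i) (B i)).symm ▸ rfl
  calc x = ((∑ i, B.repr xN i • B i : N) : Fs) := by rw [hrepr]
    _ = ∑ i, ((B.repr xN i • B i : N) : Fs) := by
        rw [Submodule.coe_sum]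
    _ = ∑ i, aeval f (b i) ((B i : N) : Fs) := by
        refine Finset.sum_congr rfl fun i _ => ?_
        rw [this i, hsmulcoe]

end DrinfeldAux

set_option maxHeartbeats 1000000 in
/-- For a Drinfeld module `φ_T = z + g₁τ + ⋯ + g_rτ^r` of rank `r` over an `A`-field `(F, z)`,
and an irreducible `l ∈ 𝔽_q[T]` different from the `A`-characteristic (`l(z) ≠ 0`), the
`l^n`-torsion submodule of the separable closure `Fs` is free of rank `r` over `𝔽_q[T]/(l^n)`:
it admits elements `v₁,…,v_r` such that every torsion point is an `𝔽_q[T]`-combination of the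
`vᵢ`, with coefficients unique modulo `l^n`. -/
theorem drinfeld_torsion_free_of_rank
    (Fq : Type*) [Field Fq] [Fintype Fq] (q : ℕ) (hq : Fintype.card Fq = q)
    (F : Type*) [Field F] [Algebra Fq F]
    (Fs : Type*) [Field Fs] [Algebra F Fs] [IsSepClosure F Fs]
    (z : F) (r : ℕ) (hr : 1 ≤ r) (g : ℕ → F) (hgr : g r ≠ 0)
    (l : Polynomial Fq) (hl : Irreducible l) (hlz : Polynomial.aeval z l ≠ 0)
    (n : ℕ) (hn : 1 ≤ n) :
    let ℓfun : Fs → Fs := fun x =>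
      algebraMap F Fs z * x + ∑ i ∈ Finset.Icc 1 r, algebraMap F Fs (g i) * x ^ q ^ i
    let ψ : Polynomial Fq → Fs → Fs := fun b x =>
      ∑ i ∈ b.support, algebraMap F Fs (algebraMap Fq F (b.coeff i)) * (ℓfun^[i] x)
    ∃ v : Fin r → Fs,
      (∀ i, ψ (l ^ n) (v i) = 0) ∧
      (∀ x : Fs, ψ (l ^ n) x = 0 → ∃ b : Fin r → Polynomial Fq, x = ∑ i, ψ (b i) (v i)) ∧
      (∀ b c : Fin r → Polynomial Fq,
        (∑ i, ψ (b i) (v i)) = (∑ i, ψ (c i) (v i)) → ∀ i, l ^ n ∣ (b i - c i)) := by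
  classical
  letI : Algebra Fq Fs := ((algebraMap F Fs).comp (algebraMap Fq F)).toAlgebra
  letI : IsScalarTower Fq F Fs := IsScalarTower.of_algebraMap_eq fun c => rfl
  intro ℓfun ψ
  set f := ellL (Fs := Fs) hq z r g with hfdef
  have hψ : ∀ (b : Polynomial Fq) (x : Fs), ψ b x = aeval f b x :=
    fun b x => psi_eq_aeval hq z r g b x
  simp only [hψ]
  clear_value ℓfun ψ
  clear hψ
  -- basic facts
  have h2q : 2 ≤ q := two_le_q (Fq := Fq) hq
  have hlne : l ≠ 0 := hl.ne_zero
  have hd : 0 < l.natDegree := hl.natDegree_pos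
  have hlmne : ∀ m : ℕ, l ^ m ≠ 0 := fun m => pow_ne_zero _ hlne
  have hlmz : ∀ m : ℕ, aeval z (l ^ m) ≠ 0 := fun m => by
    rw [map_pow]; exact pow_ne_zero _ hlz
  have hmul : ∀ (a b : Polynomial Fq) (x : Fs),
      aeval f (a * b) x = aeval f a (aeval f b x) := fun a b x => by
    rw [map_mul, Module.End.mul_apply]
  -- finrank of kernels
  have hfinK : ∀ m : ℕ, (LinearMap.ker (aeval f (l ^ m)) : Set Fs).Finite :=
    fun m => finite_ker hq z r g hr hgr _ (hlmne m)
  haveI : ∀ m : ℕ, Finite ↥(LinearMap.ker (aeval f (l ^ m))) :=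
    fun m => (hfinK m).to_subtype
  have hrankK : ∀ m : ℕ,
      Module.finrank Fq (LinearMap.ker (aeval f (l ^ m))) = r * (m * l.natDegree) :=
    fun m => by
      rw [finrank_ker hq z r g hr hgr _ (hlmne m) (hlmz m), natDegree_pow]
  -- monotonicity of kernels
  have hkmono : ∀ s t : ℕ, s ≤ t →
      LinearMap.ker (aeval f (l ^ s)) ≤ LinearMap.ker (aeval f (l ^ t)) := by
    intro s t hst x hx
    rw [LinearMap.mem_ker] at hx ⊢
    rw [show l ^ t = l ^ (t - s) * l ^ s from by rw [← pow_add]; congr 1; omega,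
      hmul, hx, map_zero]
  -- surjectivity by counting
  have hsurj : ∀ s t : ℕ, s + t = n → ∀ y : Fs, aeval f (l ^ s) y = 0 →
      ∃ x : Fs, aeval f (l ^ n) x = 0 ∧ aeval f (l ^ t) x = y := by
    intro s t hst y hy
    set M := LinearMap.ker (aeval f (l ^ n)) with hM
    haveI : Finite ↥M := (hfinK n).to_subtype
    set Fmap : M →ₗ[Fq] Fs := (aeval f (l ^ t)).comp M.subtype with hFmap
    have hrange : LinearMap.range Fmap ≤ LinearMap.ker (aeval f (l ^ s)) := by
      rintro _ ⟨x, rfl⟩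
      rw [LinearMap.mem_ker, hFmap, LinearMap.comp_apply, ← hmul, ← pow_add, hst]
      exact x.2
    have hker : LinearMap.ker Fmap = Submodule.comap M.subtype
        (LinearMap.ker (aeval f (l ^ t))) := by
      ext x
      simp [hFmap, LinearMap.mem_ker]
    have hkerrank : Module.finrank Fq (LinearMap.ker Fmap) = r * (t * l.natDegree) := by
      rw [hker, ← hrankK t]
      exact LinearEquiv.finrank_eq
        (Submodule.comapSubtypeEquivOfLe (hkmono t n (by omega)))
    have hrn := LinearMap.finrank_range_add_finrank_ker Fmap
    rw [hkerrank, hrankK n] at hrn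
    have hrangerank : Module.finrank Fq (LinearMap.range Fmap) = r * (s * l.natDegree) := by
      have hexp : r * (n * l.natDegree) = r * (s * l.natDegree) + r * (t * l.natDegree) := by
        subst hst; ring
      omega
    have hEQ : LinearMap.range Fmap = LinearMap.ker (aeval f (l ^ s)) :=
      Submodule.eq_of_le_of_finrank_eq hrange (by rw [hrangerank, hrankK s])
    have hy' : y ∈ LinearMap.range Fmap := by rw [hEQ, LinearMap.mem_ker]; exact hy
    obtain ⟨x, hx⟩ := hy'
    exact ⟨(x : Fs), x.2, hx⟩
  -- basis of the l-torsion
  obtain ⟨w, hw0, hwspan⟩ := exists_basis_ker_l (Fs := Fs) hq z r g hr hgr l hl hlz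
  -- lift the basis along aeval f (l^(n-1))
  have hvex : ∀ i : Fin r, ∃ x : Fs, aeval f (l ^ n) x = 0 ∧
      aeval f (l ^ (n - 1)) x = w i := by
    intro i
    refine hsurj 1 (n - 1) (by omega) (w i) ?_
    rw [pow_one]; exact hw0 i
  choose v hv0 hvlift using hvex
  -- single descent step
  have hD : ∀ y : Fs, aeval f (l ^ n) y = 0 →
      ∃ b : Fin r → Polynomial Fq, ∃ y' : Fs, aeval f (l ^ n) y' = 0 ∧
        y = (∑ i, aeval f (b i) (v i)) + aeval f l y' := by
    intro y hy
    have hu : aeval f l (aeval f (l ^ (n - 1)) y) = 0 := by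
      rw [← hmul, ← pow_succ']
      rw [show n - 1 + 1 = n from by omega]
      exact hy
    obtain ⟨b, hb⟩ := hwspan _ hu
    have hsum : aeval f (l ^ (n - 1)) ((∑ i, aeval f (b i) (v i))) =
        ∑ i, aeval f (b i) (w i) := by
      rw [map_sum]
      refine Finset.sum_congr rfl fun i _ => ?_
      rw [← hmul, mul_comm, hmul, hvlift i]
    have hdiff : aeval f (l ^ (n - 1)) (y - ∑ i, aeval f (b i) (v i)) = 0 := by
      rw [map_sub, hsum, ← hb, sub_self]
    obtain ⟨y', hy'0, hy'⟩ := hsurj (n - 1) 1 (by omega) _ hdiff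
    refine ⟨b, y', hy'0, ?_⟩
    rw [pow_one] at hy'
    rw [hy']; ring
  -- iterate the descent
  have hIter : ∀ m : ℕ, ∀ y : Fs, aeval f (l ^ n) y = 0 →
      ∃ b : Fin r → Polynomial Fq, ∃ y' : Fs, aeval f (l ^ n) y' = 0 ∧
        y = (∑ i, aeval f (b i) (v i)) + aeval f (l ^ m) y' := by
    intro m
    induction m with
    | zero =>
      intro y hy
      refine ⟨0, y, hy, ?_⟩
      simp
    | succ m ih =>
      intro y hy
      obtain ⟨b, y', hy'0, hy'⟩ := ih y hy
      obtain ⟨c, y'', hy''0, hy''⟩ := hD y' hy'0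
      refine ⟨fun i => b i + l ^ m * c i, y'', hy''0, ?_⟩
      rw [hy', hy'', map_add]
      have h1 : aeval f (l ^ m) (∑ i, aeval f (c i) (v i)) =
          ∑ i, aeval f (l ^ m * c i) (v i) := by
        rw [map_sum]
        exact Finset.sum_congr rfl fun i _ => (hmul _ _ _).symm
      have h2 : aeval f (l ^ m) (aeval f l y'') = aeval f (l ^ (m + 1)) y'' := by
        rw [← hmul, ← pow_succ]
      rw [h1, h2]
      have h3 : ∀ i : Fin r, aeval f (b i + l ^ m * c i) (v i) =
          aeval f (b i) (v i) + aeval f (l ^ m * c i) (v i) := by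
        intro i
        rw [map_add, LinearMap.add_apply]
      rw [Finset.sum_congr rfl fun i _ => h3 i, Finset.sum_add_distrib]
      ring
  -- spanning
  have hspan : ∀ x : Fs, aeval f (l ^ n) x = 0 →
      ∃ b : Fin r → Polynomial Fq, x = ∑ i, aeval f (b i) (v i) := by
    intro x hx
    obtain ⟨b, y', hy'0, hy'⟩ := hIter n x hx
    exact ⟨b, by rw [hy', hy'0, add_zero]⟩
  refine ⟨v, hv0, hspan, ?_⟩
  -- uniqueness modulo l^n, by a counting argument
  intro b c hbc i
  -- module structure on the l^n-torsion over the quotient ring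
  set M := LinearMap.ker (aeval f (l ^ n)) with hM
  have hcomm : ∀ (a b' : Polynomial Fq) (x : Fs),
      aeval f a (aeval f b' x) = aeval f b' (aeval f a x) := by
    intro a b' x
    rw [← hmul, mul_comm, hmul]
  have hMinv : ∀ x ∈ M, f x ∈ M := by
    intro x hx
    rw [hM, LinearMap.mem_ker] at hx ⊢
    rw [show f x = aeval f (X : Polynomial Fq) x from by rw [aeval_X],
      hcomm, hx, map_zero]
  letI : Module (Polynomial Fq) M :=
    Module.compHom M (aeval (f.restrict fun x hx => hMinv x hx) :
      Polynomial Fq →ₐ[Fq] Module.End Fq M).toRingHom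
  have hsmulcoe : ∀ (b : Polynomial Fq) (x : M), ((b • x : M) : Fs) = aeval f b (x : Fs) :=
    fun b x => aeval_restrict_coe M f hMinv b x
  have htor : Module.IsTorsionBy (Polynomial Fq) M (l ^ n) := by
    intro x
    apply Subtype.ext
    rw [hsmulcoe]
    exact x.2
  letI : Module (Polynomial Fq ⧸ Ideal.span {l ^ n}) M := htor.module
  have hmksmul : ∀ (b : Polynomial Fq) (x : M),
      ((Ideal.Quotient.mk (Ideal.span {l ^ n}) b • x : M) : Fs) = aeval f b (x : Fs) := by
    intro b x
    rw [show (Ideal.Quotient.mk (Ideal.span {l ^ n}) b • x : M) = b • x from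
      Module.IsTorsionBy.mk_smul htor b x, hsmulcoe]
  set vM : Fin r → M := fun i => ⟨v i, hv0 i⟩ with hvM
  set T : (Fin r → (Polynomial Fq ⧸ Ideal.span {l ^ n})) → M := fun cc => ∑ i, cc i • vM i with hT
  haveI : Finite ↥M := (hfinK n).to_subtype
  haveI : Fintype ↥M := Fintype.ofFinite _
  haveI hFinA : Fintype (AdjoinRoot (l ^ n)) :=
    Module.fintypeOfFintype (AdjoinRoot.powerBasis (hlmne n)).basis
  letI : Fintype (Polynomial Fq ⧸ Ideal.span {l ^ n}) := hFinA
  have hTcoe : ∀ cc : Fin r → (Polynomial Fq ⧸ Ideal.span {l ^ n}),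
      ((T cc : M) : Fs) = ∑ i, ((cc i • vM i : M) : Fs) := by
    intro cc
    rw [hT]
    exact map_sum M.subtype _ _
  have hTsurj : Function.Surjective T := by
    intro x
    obtain ⟨b, hb⟩ := hspan (x : Fs) x.2
    refine ⟨fun i => Ideal.Quotient.mk (Ideal.span {l ^ n}) (b i), ?_⟩
    apply Subtype.ext
    rw [hTcoe, Finset.sum_congr rfl fun i _ => hmksmul (b i) (vM i)]
    exact hb.symm
  have hcardA : Fintype.card (Polynomial Fq ⧸ Ideal.span {l ^ n}) = q ^ (l ^ n).natDegree := by
    have h : Fintype.card (AdjoinRoot (l ^ n)) = q ^ (l ^ n).natDegree := by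
      have := Module.card_fintype (AdjoinRoot.powerBasis (hlmne n)).basis
      simpa [hq, AdjoinRoot.powerBasis] using this
    exact h
  have hcardM : Fintype.card ↥M = q ^ (r * (l ^ n).natDegree) := by
    rw [← Nat.card_eq_fintype_card]
    exact card_ker (Fs := Fs) hq z r g hr hgr _ (hlmne n) (hlmz n)
  have hcardeq : Fintype.card (Fin r → (Polynomial Fq ⧸ Ideal.span {l ^ n})) = Fintype.card ↥M := by
    rw [Fintype.card_fun, hcardA, hcardM, Fintype.card_fin, ← pow_mul, mul_comm]
  have hTbij : Function.Bijective T :=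
    (Fintype.bijective_iff_surjective_and_card T).mpr ⟨hTsurj, hcardeq⟩
  -- conclude
  have hTb : T (fun i => Ideal.Quotient.mk (Ideal.span {l ^ n}) (b i)) =
      T (fun i => Ideal.Quotient.mk (Ideal.span {l ^ n}) (c i)) := by
    apply Subtype.ext
    rw [hTcoe, hTcoe, Finset.sum_congr rfl fun i _ => hmksmul (b i) (vM i),
      Finset.sum_congr rfl fun i _ => hmksmul (c i) (vM i)]
    exact hbc
  have := congr_fun (hTbij.injective hTb) i
  rw [Ideal.Quotient.eq] at this
  exact (Ideal.mem_span_singleton).mp this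
end

section
/- Let p be a prime, q a power of p, and F a separably closed field of characteristic p. Let g₁, h₁ ∈ F and g₂, h₂ ∈ F with g₂ ≠ 0 and h₂ ≠ 0. Then there exists u ∈ F, u ≠ 0, such that h₁ = u^{q−1}·g₁ and h₂ = u^{q²−1}·g₂ if and only if g₁^{q+1}·h₂ = h₁^{q+1}·g₂. (Equivalently: two rank-2 Drinfeld modules φ_T = z + g₁τ + g₂τ² and ψ_T = z + h₁τ + h₂τ² over F are isomorphic if and only if they have the same j-invariant g₁^{q+1}/g₂ = h₁^{q+1}/h₂.) -/
/-- Two rank-2 Drinfeld modules `φ_T = z + g₁τ + g₂τ²` and `ψ_T = z + h₁τ + h₂τ²` over a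
separably closed field `F` of characteristic `p` are isomorphic (i.e. there is `u ≠ 0` with
`h₁ = u^{q-1}g₁` and `h₂ = u^{q²-1}g₂`) if and only if they have the same `j`-invariant, i.e.
`g₁^{q+1}·h₂ = h₁^{q+1}·g₂`. -/
theorem rank_two_isomorphic_iff_j_invariant
    (p k : ℕ) (hp : p.Prime) (hk : k ≠ 0) (q : ℕ) (hq : q = p ^ k)
    (F : Type*) [Field F] [IsSepClosed F] [CharP F p]
    (g₁ g₂ h₁ h₂ : F) (hg₂ : g₂ ≠ 0) (hh₂ : h₂ ≠ 0) :
    (∃ u : F, u ≠ 0 ∧ h₁ = u ^ (q - 1) * g₁ ∧ h₂ = u ^ (q ^ 2 - 1) * g₂) ↔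
      g₁ ^ (q + 1) * h₂ = h₁ ^ (q + 1) * g₂ := by
  have hq2 : 2 ≤ q := by
    rw [hq]
    calc 2 ≤ p := hp.two_le
    _ = p ^ 1 := (pow_one p).symm
    _ ≤ p ^ k := Nat.pow_le_pow_right hp.pos (Nat.one_le_iff_ne_zero.mpr hk)
  have hqF : (q : F) = 0 := by
    rw [hq, Nat.cast_pow, CharP.cast_eq_zero F p, zero_pow hk]
  have hqq : 1 < q ^ 2 := one_lt_pow₀ (by omega) (by norm_num)
  have hmul : (q - 1) * (q + 1) = q ^ 2 - 1 := by
    have h1 : 1 ≤ q := le_trans one_le_two hq2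
    zify [h1, hqq.le]
    ring
  have hcast1 : ((q - 1 : ℕ) : F) ≠ 0 := by
    have : ((q - 1 : ℕ) : F) = (q : F) - 1 := by
      push_cast [Nat.cast_sub (le_trans one_le_two hq2)]; ring
    rw [this, hqF]
    simp
  have hcast2 : ((q ^ 2 - 1 : ℕ) : F) ≠ 0 := by
    have : ((q ^ 2 - 1 : ℕ) : F) = (q : F) ^ 2 - 1 := by
      push_cast [Nat.cast_sub (Nat.one_le_two_pow.trans (Nat.pow_le_pow_left hq2 2))]; ring
    rw [this, hqF]
    simp
  constructor
  · rintro ⟨u, hu, rfl, rfl⟩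
    rw [mul_pow, ← pow_mul, mul_comm (q - 1), ← hmul, mul_comm (q + 1)]
    ring
  · intro hj
    by_cases hg₁ : g₁ = 0
    · have hh₁ : h₁ = 0 := by
        by_contra hh₁
        rw [hg₁] at hj
        have : h₁ ^ (q + 1) * g₂ = 0 := by rw [← hj]; ring
        exact (mul_ne_zero (pow_ne_zero _ hh₁) hg₂) this
      haveI : NeZero ((q ^ 2 - 1 : ℕ) : F) := ⟨hcast2⟩
      obtain ⟨u, hu⟩ := IsSepClosed.exists_pow_nat_eq (h₂ / g₂) (q ^ 2 - 1)
      have hune : u ≠ 0 := by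
        rintro rfl
        rw [zero_pow (Nat.sub_ne_zero_of_lt hqq)] at hu
        exact hh₂ (by field_simp at hu; simpa using hu.symm)
      exact ⟨u, hune, by rw [hg₁, hh₁, mul_zero], by rw [hu]; field_simp⟩
    · have hh₁ : h₁ ≠ 0 := by
        rintro rfl
        rw [zero_pow (by omega : q + 1 ≠ 0), zero_mul] at hj
        exact (mul_ne_zero (pow_ne_zero _ hg₁) hh₂) hj
      haveI : NeZero ((q - 1 : ℕ) : F) := ⟨hcast1⟩
      obtain ⟨u, hu⟩ := IsSepClosed.exists_pow_nat_eq (h₁ / g₁) (q - 1)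
      have hune : u ≠ 0 := by
        rintro rfl
        rw [zero_pow (by omega : q - 1 ≠ 0)] at hu
        exact hh₁ (by field_simp at hu; simpa using hu.symm)
      refine ⟨u, hune, by rw [hu]; field_simp, ?_⟩
      have : u ^ (q ^ 2 - 1) = (h₁ / g₁) ^ (q + 1) := by
        rw [← hu, ← pow_mul, hmul]
      rw [this, div_pow]
      field_simp
      linear_combination hj
end

section
/- Let p be a prime, q a power of p, F a separably closed field of characteristic p, r ≥ 1, and g₁,…,g_r, h₁,…,h_r ∈ F with g_r ≠ 0 and h_r ≠ 0. Then the following are equivalent: (i) there exists u ∈ F, u ≠ 0, with u^{q^i}·h_i = u·g_i for all 1 ≤ i ≤ r; (ii) for every ℓ with 1 ≤ ℓ ≤ r−1, every nondecreasing tuple (k₁,…,k_ℓ) of integers with 1 ≤ k₁ ≤ ⋯ ≤ k_ℓ ≤ r−1, and every tuple of integers (s₁,…,s_ℓ, s_r) satisfying 0 ≤ s_i ≤ (q^r−1)/(q^{gcd(k_i,r)}−1) for each i, s₁(q^{k₁}−1) + ⋯ + s_ℓ(q^{k_ℓ}−1) = s_r(q^r−1), and gcd(s₁,…,s_ℓ,s_r)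 = 1, one has g_{k₁}^{s₁}⋯g_{k_ℓ}^{s_ℓ}·h_r^{s_r} = h_{k₁}^{s₁}⋯h_{k_ℓ}^{s_ℓ}·g_r^{s_r}. (This says two rank-r Drinfeld modules over a separably closed field are isomorphic if and only if all their basic Potemine J-invariants coincide.) -/
namespace PotemineAux

/-- Bezout for finsets. -/
lemma finset_bezout (s : Finset ℕ) (f : ℕ → ℕ) :
    ∃ t : ℕ → ℤ, ∑ i ∈ s, t i * (f i : ℤ) = ((s.gcd f : ℕ) : ℤ) := by
  classical
  induction s using Finset.induction_on with
  | empty => exact ⟨0, by simp⟩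
  | insert a s' ha ih =>
    obtain ⟨t, ht⟩ := ih
    refine ⟨fun i => if i = a then Nat.gcdA (f a) (s'.gcd f) else Nat.gcdB (f a) (s'.gcd f) * t i,
      ?_⟩
    rw [Finset.sum_insert ha]
    dsimp only
    rw [if_pos rfl]
    have h2 : ∑ i ∈ s', (if i = a then Nat.gcdA (f a) (s'.gcd f)
        else Nat.gcdB (f a) (s'.gcd f) * t i) * (f i : ℤ)
        = Nat.gcdB (f a) (s'.gcd f) * ∑ i ∈ s', t i * (f i : ℤ) := by
      rw [Finset.mul_sum]
      refine Finset.sum_congr rfl fun i hi => ?_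
      have : i ≠ a := fun h => ha (h ▸ hi)
      rw [if_neg this]; ring
    rw [h2, ht, Finset.gcd_insert]
    have h3 : ((GCDMonoid.gcd (f a) (s'.gcd f) : ℕ) : ℤ) = ((Nat.gcd (f a) (s'.gcd f) : ℕ) : ℤ) :=
      rfl
    rw [h3, Nat.gcd_eq_gcd_ab]
    ring

/-- gcd of `q^m - 1` and `q^n - 1`. -/
lemma gcd_pow_sub_one (q : ℕ) (hq : 1 ≤ q) :
    ∀ m n : ℕ, Nat.gcd (q ^ m - 1) (q ^ n - 1) = q ^ Nat.gcd m n - 1 := by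
  intro m
  induction m using Nat.strong_induction_on with
  | _ m ih =>
    intro n
    rcases Nat.eq_zero_or_pos m with hm | hmpos
    · subst hm; simp
    have hdvd : q ^ m - 1 ∣ (q ^ m) ^ (n / m) - 1 := by
      simpa using Nat.sub_dvd_pow_sub_pow (q ^ m) 1 (n / m)
    have h1 : 1 ≤ q ^ (n % m) := Nat.one_le_pow _ _ hq
    have h2 : 1 ≤ (q ^ m) ^ (n / m) := Nat.one_le_pow _ _ (Nat.one_le_pow _ _ hq)
    have h3 : 1 ≤ q ^ n := Nat.one_le_pow _ _ hq
    have hm1 : 1 ≤ q ^ m := Nat.one_le_pow _ _ hq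
    have hqn : q ^ n = (q ^ m) ^ (n / m) * q ^ (n % m) := by
      rw [← pow_mul, ← pow_add, Nat.div_add_mod]
    have key : q ^ n - 1 = (q ^ (n % m) - 1) + (q ^ m - 1) *
        (q ^ (n % m) * (((q ^ m) ^ (n / m) - 1) / (q ^ m - 1))) := by
      rw [Nat.mul_comm (q ^ (n % m)), ← Nat.mul_assoc, Nat.mul_div_cancel' hdvd]
      have hqnZ : (q : ℤ) ^ n = ((q : ℤ) ^ m) ^ (n / m) * (q : ℤ) ^ (n % m) := by
        exact_mod_cast hqn
      zify [h1, h2, h3, hm1]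
      linear_combination hqnZ
    rw [key, Nat.gcd_add_mul_left_right, Nat.gcd_comm,
      ih (n % m) (Nat.mod_lt n hmpos) m, ← Nat.gcd_rec]

/-- product of zpows of a fixed base. -/
lemma prod_zpow_sum {F : Type*} [Field F] {ι : Type*} (s : Finset ι) (x : F) (hx : x ≠ 0)
    (f : ι → ℤ) : ∏ i ∈ s, x ^ f i = x ^ (∑ i ∈ s, f i) := by
  classical
  induction s using Finset.cons_induction with
  | empty => simp
  | cons a s ha ih => rw [Finset.prod_cons, Finset.sum_cons, ih, zpow_add₀ hx]

lemma div_dvd_div {e a b : ℕ} (he : e ≠ 0) (hea : e ∣ a) (hab : a ∣ b) : a / e ∣ b / e := by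
  obtain ⟨x, rfl⟩ := hea
  obtain ⟨y, rfl⟩ := hab
  rw [Nat.mul_div_cancel_left _ (Nat.pos_of_ne_zero he), Nat.mul_assoc,
    Nat.mul_div_cancel_left _ (Nat.pos_of_ne_zero he)]
  exact Dvd.intro _ rfl

lemma mul_div_swap {d a b : ℕ} (hd : 0 < d) (hda : d ∣ a) (hdb : d ∣ b) :
    a * (b / d) = b * (a / d) := by
  obtain ⟨x, rfl⟩ := hda
  obtain ⟨y, rfl⟩ := hdb
  rw [Nat.mul_div_cancel_left _ hd, Nat.mul_div_cancel_left _ hd]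
  ring

end PotemineAux

namespace PotemineAux

lemma key_abstract {F : Type*} [Field F] (S' : Finset ℕ) (ν M : ℕ → ℕ) (nr : ℕ)
    (ζ : ℕ → F)
    (hM : ∀ k ∈ S', 0 < M k ∧ nr ∣ M k * ν k)
    (hζ : ∀ k ∈ S', ζ k ≠ 0)
    (hpure : ∀ tb : ℕ → ℕ, (∀ k ∈ S', tb k ≤ M k) → ∀ m : ℕ,
      (∑ k ∈ S', tb k * ν k = m * nr) → ∏ k ∈ S', ζ k ^ tb k = 1)
    (hnr : 0 < nr)
    (t : ℕ → ℤ) (hdvd : (nr : ℤ) ∣ ∑ k ∈ S', t k * (ν k : ℤ)) :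
    ∏ k ∈ S', ζ k ^ t k = 1 := by
  classical
  have htor : ∀ k ∈ S', ζ k ^ M k = 1 := by
    intro k hk
    have hb : ∀ j ∈ S', (if j = k then M k else 0) ≤ M j := by
      intro j hj
      split_ifs with hjk
      · subst hjk; exact le_rfl
      · exact Nat.zero_le _
    have h1 := hpure (fun j => if j = k then M k else 0) hb (M k * ν k / nr)
      (by
        rw [Nat.div_mul_cancel (hM k hk).2, Finset.sum_eq_single_of_mem k hk]
        · simp
        · intro b _ hbk; simp [hbk])
    rw [Finset.prod_eq_single_of_mem k hk] at h1
    · simpa using h1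
    · intro b _ hbk; simp [hbk]
  set t' : ℕ → ℕ := fun k => (t k % (M k : ℤ)).toNat with ht'
  have hstep : ∀ k ∈ S', ζ k ^ t k = ζ k ^ (t' k : ℤ) ∧
      ((t' k : ℤ) - t k) = (M k : ℤ) * (-(t k / (M k : ℤ)))
      ∧ t' k ≤ M k := by
    intro k hk
    have hMk : (0 : ℤ) < (M k : ℤ) := by exact_mod_cast (hM k hk).1
    have hmod : (t k % (M k : ℤ)) = (t' k : ℤ) :=
      (Int.toNat_of_nonneg (Int.emod_nonneg _ hMk.ne')).symm
    have hdm : t k = (M k : ℤ) * (t k / (M k : ℤ)) + (t' k : ℤ) := by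
      rw [← hmod, Int.mul_ediv_add_emod]
    refine ⟨?_, by rw [mul_neg]; omega, ?_⟩
    · calc ζ k ^ t k = ζ k ^ ((M k : ℤ) * (t k / (M k : ℤ)) + (t' k : ℤ)) := by rw [← hdm]
        _ = (ζ k ^ (M k : ℤ)) ^ (t k / (M k : ℤ)) * ζ k ^ (t' k : ℤ) := by
            rw [zpow_add₀ (hζ k hk), zpow_mul]
        _ = ζ k ^ (t' k : ℤ) := by
            rw [zpow_natCast, htor k hk, one_zpow, one_mul]
    · have := Int.emod_lt_of_pos (t k) hMk
      omega
  have hdvd2 : (nr : ℤ) ∣ ∑ k ∈ S', (t' k : ℤ) * (ν k : ℤ) := by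
    have hsplit : ∑ k ∈ S', (t' k : ℤ) * (ν k : ℤ)
        = (∑ k ∈ S', t k * (ν k : ℤ)) + ∑ k ∈ S', ((t' k : ℤ) - t k) * (ν k : ℤ) := by
      rw [← Finset.sum_add_distrib]
      exact Finset.sum_congr rfl fun k _ => by ring
    rw [hsplit]
    refine dvd_add hdvd (Finset.dvd_sum fun k hk => ?_)
    rw [(hstep k hk).2.1]
    have h2 : (nr : ℤ) ∣ (M k : ℤ) * (ν k : ℤ) := by
      exact_mod_cast Int.natCast_dvd_natCast.mpr (hM k hk).2
    calc (nr : ℤ) ∣ (M k : ℤ) * (ν k : ℤ) := h2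
      _ ∣ (M k : ℤ) * -(t k / (M k : ℤ)) * (ν k : ℤ) := ⟨-(t k / (M k : ℤ)), by ring⟩
  have hdvdN : nr ∣ ∑ k ∈ S', t' k * ν k := by
    have : ((∑ k ∈ S', t' k * ν k : ℕ) : ℤ) = ∑ k ∈ S', (t' k : ℤ) * (ν k : ℤ) := by push_cast; rfl
    exact_mod_cast this ▸ hdvd2
  have hsum : ∑ k ∈ S', t' k * ν k = (∑ k ∈ S', t' k * ν k) / nr * nr :=
    (Nat.div_mul_cancel hdvdN).symm
  calc ∏ k ∈ S', ζ k ^ t k = ∏ k ∈ S', ζ k ^ (t' k : ℤ) :=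
        Finset.prod_congr rfl fun k hk => (hstep k hk).1
    _ = ∏ k ∈ S', ζ k ^ t' k := Finset.prod_congr rfl fun k _ => zpow_natCast _ _
    _ = 1 := hpure t' (fun k hk => (hstep k hk).2.2) _ hsum

lemma assemble {F : Type*} [Field F] (S' : Finset ℕ) (ν : ℕ → ℕ) (nr : ℕ) (r : ℕ)
    (c ζ : ℕ → F) (hrS : r ∉ S')
    (hν : ∀ k ∈ insert r S', 0 < ν k) (hνr : ν r = nr)
    (hc : ∀ k ∈ insert r S', c k ≠ 0)
    (hroot : ∀ x : F, x ≠ 0 → ∀ d, d ∣ nr → ∃ z, z ≠ 0 ∧ z ^ d = x)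
    (w : F) (hw0 : w ≠ 0) (hw : w ^ nr = c r)
    (hζc : ∀ k ∈ S', c k = ζ k * w ^ ν k)
    (key : ∀ t : ℕ → ℤ, ((nr : ℤ) ∣ ∑ k ∈ S', t k * (ν k : ℤ)) →
      ∏ k ∈ S', ζ k ^ t k = 1) :
    ∃ u : F, u ≠ 0 ∧ ∀ j ∈ insert r S', u ^ ν j = c j := by
  classical
  set A := insert r S' with hA
  have hnr0 : 0 < nr := hνr ▸ hν r (Finset.mem_insert_self r S')
  have hDnr : A.gcd ν ∣ nr := hνr ▸ Finset.gcd_dvd (Finset.mem_insert_self r S')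
  set D := A.gcd ν with hD
  have hD0 : D ≠ 0 := by
    intro h0
    have := Finset.gcd_eq_zero_iff.mp h0 r (Finset.mem_insert_self r S')
    rw [hνr] at this; omega
  obtain ⟨t, ht⟩ := finset_bezout A ν
  have hv0 : (∏ i ∈ A, c i ^ t i) ≠ 0 :=
    Finset.prod_ne_zero_iff.mpr fun i hi => zpow_ne_zero _ (hc i hi)
  set v := ∏ i ∈ A, c i ^ t i with hv
  obtain ⟨u, hu0, hu⟩ := hroot v hv0 D hDnr
  -- the mixed-relation lemma
  have mixed : ∀ a : ℕ → ℤ, (∑ i ∈ A, a i * (ν i : ℤ)) = 0 → ∏ i ∈ A, c i ^ a i = 1 := by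
    intro a hsum
    rw [hA, Finset.sum_insert hrS] at hsum
    have hdvd : (nr : ℤ) ∣ ∑ k ∈ S', a k * (ν k : ℤ) := by
      refine ⟨-a r, ?_⟩
      rw [hνr] at hsum; linarith [hsum]
    have hkey := key a hdvd
    have hSprod : ∏ k ∈ S', c k ^ a k = w ^ (∑ k ∈ S', a k * (ν k : ℤ)) := by
      calc ∏ k ∈ S', c k ^ a k = ∏ k ∈ S', (ζ k ^ a k * (w ^ ν k) ^ a k) := by
            refine Finset.prod_congr rfl fun k hk => ?_
            rw [hζc k hk, mul_zpow]
        _ = (∏ k ∈ S', ζ k ^ a k) * ∏ k ∈ S', (w ^ ν k) ^ a k := Finset.prod_mul_distrib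
        _ = ∏ k ∈ S', (w ^ ν k) ^ a k := by rw [hkey, one_mul]
        _ = ∏ k ∈ S', w ^ (a k * (ν k : ℤ)) := by
            refine Finset.prod_congr rfl fun k _ => ?_
            rw [← zpow_natCast w (ν k), ← zpow_mul, mul_comm]
        _ = w ^ (∑ k ∈ S', a k * (ν k : ℤ)) := prod_zpow_sum _ _ hw0 _
    have hwr : w ^ ((nr : ℤ) * a r) = c r ^ a r := by
      rw [zpow_mul, zpow_natCast, hw]
    calc ∏ i ∈ A, c i ^ a i = c r ^ a r * ∏ k ∈ S', c k ^ a k := by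
          rw [hA, Finset.prod_insert hrS]
      _ = c r ^ a r * w ^ (∑ k ∈ S', a k * (ν k : ℤ)) := by rw [hSprod]
      _ = c r ^ a r * w ^ (-(a r * (nr : ℤ))) := by
          congr 1
          rw [hνr] at hsum
          congr 1
          linarith [hsum]
      _ = c r ^ a r * c r ^ (-(a r)) := by
          congr 1
          rw [zpow_neg, zpow_neg, mul_comm (a r), zpow_mul, zpow_natCast, hw]
      _ = 1 := by
          rw [← zpow_add₀ (hc r (Finset.mem_insert_self r S')), add_neg_cancel, zpow_zero]
  refine ⟨u, hu0, ?_⟩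
  intro j hj
  have hDj : D ∣ ν j := Finset.gcd_dvd hj
  have h1 : u ^ ν j = v ^ (ν j / D) := by
    rw [← hu, ← pow_mul, Nat.mul_div_cancel' hDj]
  set N := ν j / D with hN
  have hND : (N : ℤ) * (D : ℤ) = (ν j : ℤ) := by
    exact_mod_cast congrArg (Nat.cast : ℕ → ℤ) (Nat.div_mul_cancel hDj)
  have h2 : v ^ N = ∏ i ∈ A, c i ^ (t i * (N : ℤ)) := by
    rw [hv, ← Finset.prod_pow]
    refine Finset.prod_congr rfl fun i hi => ?_
    rw [← zpow_natCast (c i ^ t i) N, ← zpow_mul]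
  have h3 : ∏ i ∈ A, c i ^ (t i * (N : ℤ) - (if i = j then 1 else 0)) = 1 := by
    refine mixed _ ?_
    have : ∑ i ∈ A, (t i * (N : ℤ) - (if i = j then 1 else 0)) * (ν i : ℤ)
        = (∑ i ∈ A, t i * (ν i : ℤ)) * (N : ℤ)
          - ∑ i ∈ A, (if i = j then 1 else 0) * (ν i : ℤ) := by
      rw [Finset.sum_mul, ← Finset.sum_sub_distrib]
      exact Finset.sum_congr rfl fun i _ => by ring
    have hδ : ∑ i ∈ A, (if i = j then (1:ℤ) else 0) * (ν i : ℤ) = (ν j : ℤ) := by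
      rw [Finset.sum_eq_single_of_mem j hj]
      · simp
      · intro b _ hbj; simp [hbj]
    rw [this, ht, hδ]
    have hgd : ((A.gcd ν : ℕ) : ℤ) = (D : ℤ) := rfl
    rw [hgd]
    linarith [hND]
  have h4 : ∏ i ∈ A, c i ^ (t i * (N : ℤ) - (if i = j then 1 else 0))
      = v ^ N * (c j)⁻¹ := by
    calc ∏ i ∈ A, c i ^ (t i * (N : ℤ) - (if i = j then 1 else 0))
        = ∏ i ∈ A, (c i ^ (t i * (N : ℤ)) * (c i ^ (if i = j then (1:ℤ) else 0))⁻¹) := by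
          refine Finset.prod_congr rfl fun i hi => ?_
          rw [zpow_sub₀ (hc i hi), div_eq_mul_inv]
      _ = (∏ i ∈ A, c i ^ (t i * (N : ℤ))) * (∏ i ∈ A, c i ^ (if i = j then (1:ℤ) else 0))⁻¹ := by
          rw [Finset.prod_mul_distrib, Finset.prod_inv_distrib]
      _ = v ^ N * (c j)⁻¹ := by
          rw [← h2]
          congr 2
          calc ∏ i ∈ A, c i ^ (if i = j then (1:ℤ) else 0)
              = ∏ i ∈ A, (if i = j then c i else 1) := by
                refine Finset.prod_congr rfl fun i _ => ?_
                split_ifs <;> simp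
            _ = c j := by rw [Finset.prod_ite_eq' A j (fun i => c i), if_pos hj]
  rw [h1, ← mul_inv_eq_one₀ (hc j hj)]
  rw [← h4, h3]


end PotemineAux

/-- Two rank-`r` Drinfeld modules `φ_T = z + g₁τ + ⋯ + g_rτ^r` and
`ψ_T = z + h₁τ + ⋯ + h_rτ^r` over a separably closed field are isomorphic (i.e. there is
`u ≠ 0` with `u^{q^i}·h_i = u·g_i` for all `i`) if and only if all their basic Potemine
`J`-invariants coincide. -/
theorem potemine_j_invariants_classify_isomorphism
    (p e : ℕ) (hp : p.Prime) (he : e ≠ 0) (q : ℕ) (hq : q = p ^ e)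
    (F : Type*) [Field F] [IsSepClosed F] [CharP F p]
    (r : ℕ) (hr : 1 ≤ r) (g h : ℕ → F) (hgr : g r ≠ 0) (hhr : h r ≠ 0) :
    (∃ u : F, u ≠ 0 ∧ ∀ i ∈ Finset.Icc 1 r, u ^ q ^ i * h i = u * g i) ↔
      (∀ l : ℕ, 1 ≤ l → l ≤ r - 1 →
        ∀ k : Fin l → ℕ, Monotone k → (∀ i, 1 ≤ k i ∧ k i ≤ r - 1) →
        ∀ s : Fin l → ℕ, ∀ sr : ℕ,
          (∀ i, s i ≤ (q ^ r - 1) / (q ^ Nat.gcd (k i) r - 1)) →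
          (∑ i, s i * (q ^ k i - 1)) = sr * (q ^ r - 1) →
          Nat.gcd (Finset.univ.gcd s) sr = 1 →
          (∏ i, g (k i) ^ s i) * h r ^ sr = (∏ i, h (k i) ^ s i) * g r ^ sr) := by
  classical
  have hq2 : 2 ≤ q := by
    rw [hq]
    calc 2 ≤ p := hp.two_le
      _ ≤ p ^ e := Nat.le_self_pow he p
  have hq1 : ∀ i : ℕ, 1 ≤ q ^ i := fun i => Nat.one_le_pow _ _ (by omega)
  have hqk2 : ∀ k : ℕ, 1 ≤ k → 2 ≤ q ^ k := fun k hk =>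
    le_trans hq2 (Nat.le_self_pow (by omega) q)
  have hνpos : ∀ k, 1 ≤ k → 0 < q ^ k - 1 := fun k hk => by have := hqk2 k hk; omega
  constructor
  · -- isomorphism implies equality of J-invariants
    rintro ⟨u, hu0, hueq⟩ l hl1 hl2 k hkmono hkb s sr hsb hssum hsgcd
    have hEi : ∀ i : Fin l, (u ^ q ^ k i * h (k i)) ^ s i = (u * g (k i)) ^ s i := fun i => by
      rw [hueq (k i) (Finset.mem_Icc.mpr ⟨(hkb i).1, le_trans (hkb i).2 (by omega)⟩)]
    have hEr : (u ^ q ^ r * h r) ^ sr = (u * g r) ^ sr := by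
      rw [hueq r (Finset.mem_Icc.mpr ⟨hr, le_rfl⟩)]
    have hprod : u ^ (∑ i, q ^ k i * s i) * ∏ i, h (k i) ^ s i
        = u ^ (∑ i, s i) * ∏ i, g (k i) ^ s i := by
      calc u ^ (∑ i, q ^ k i * s i) * ∏ i, h (k i) ^ s i
          = ∏ i, (u ^ q ^ k i * h (k i)) ^ s i := by
            rw [← Finset.prod_pow_eq_pow_sum, ← Finset.prod_mul_distrib]
            exact Finset.prod_congr rfl fun i _ => by rw [mul_pow, pow_mul]
        _ = ∏ i, (u * g (k i)) ^ s i := Finset.prod_congr rfl fun i _ => hEi i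
        _ = u ^ (∑ i, s i) * ∏ i, g (k i) ^ s i := by
            rw [← Finset.prod_pow_eq_pow_sum, ← Finset.prod_mul_distrib]
            exact Finset.prod_congr rfl fun i _ => by rw [mul_pow]
    have hprodr : u ^ (q ^ r * sr) * h r ^ sr = u ^ sr * g r ^ sr := by
      calc u ^ (q ^ r * sr) * h r ^ sr = (u ^ q ^ r * h r) ^ sr := by rw [mul_pow, pow_mul]
        _ = (u * g r) ^ sr := hEr
        _ = u ^ sr * g r ^ sr := mul_pow _ _ _
    have hcomb : u ^ ((∑ i, q ^ k i * s i) + sr) * ((∏ i, h (k i) ^ s i) * g r ^ sr)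
        = u ^ ((∑ i, s i) + q ^ r * sr) * ((∏ i, g (k i) ^ s i) * h r ^ sr) := by
      rw [pow_add, pow_add]
      have hcg := congrArg₂ (· * ·) hprod hprodr.symm
      linear_combination hcg
    have hexp : (∑ i, q ^ k i * s i) + sr = (∑ i, s i) + q ^ r * sr := by
      have hA : (∑ i, q ^ k i * s i) = (∑ i, s i * (q ^ k i - 1)) + ∑ i, s i := by
        rw [← Finset.sum_add_distrib]
        refine Finset.sum_congr rfl fun i _ => ?_
        obtain ⟨x, hx⟩ : ∃ x, q ^ k i = x + 1 := ⟨q ^ k i - 1, by have := hq1 (k i); omega⟩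
        rw [hx, Nat.add_sub_cancel]; ring
      have hB : q ^ r * sr = sr * (q ^ r - 1) + sr := by
        obtain ⟨x, hx⟩ : ∃ x, q ^ r = x + 1 := ⟨q ^ r - 1, by have := hq1 r; omega⟩
        rw [hx, Nat.add_sub_cancel]; ring
      omega
    rw [hexp] at hcomb
    exact (mul_left_cancel₀ (pow_ne_zero _ hu0) hcomb).symm
  · -- equality of J-invariants implies isomorphism
    intro hJ
    -- characteristic facts
    have hqF : (q : F) = 0 := by
      have h1 : ((p : ℕ) : F) = 0 := CharP.cast_eq_zero F p
      rw [hq]; push_cast; rw [h1]; exact zero_pow he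
    have hcast : ∀ k : ℕ, 1 ≤ k → ((q ^ k - 1 : ℕ) : F) = -1 := by
      intro k hk
      rw [Nat.cast_sub (hq1 k)]
      push_cast
      rw [hqF, zero_pow (by omega : k ≠ 0)]
      ring
    have hndvd : ∀ d : ℕ, d ∣ q ^ r - 1 → (d : F) ≠ 0 := by
      intro d hd hd0
      have hpd : p ∣ d := (CharP.cast_eq_zero_iff F p d).mp hd0
      have h2 : ((q ^ r - 1 : ℕ) : F) = 0 :=
        (CharP.cast_eq_zero_iff F p _).mpr (hpd.trans hd)
      rw [hcast r hr] at h2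
      exact (by norm_num : (-1 : F) ≠ 0) h2
    have hroot : ∀ x : F, x ≠ 0 → ∀ d, d ∣ q ^ r - 1 → ∃ z, z ≠ 0 ∧ z ^ d = x := by
      intro x hx d hd
      haveI : NeZero ((d : ℕ) : F) := ⟨hndvd d hd⟩
      obtain ⟨z, hz⟩ := IsSepClosed.exists_pow_nat_eq x d
      have hd0 : d ≠ 0 := by
        rintro rfl
        rw [Nat.zero_dvd] at hd
        have := hνpos r hr; omega
      refine ⟨z, ?_, hz⟩
      rintro rfl
      rw [zero_pow hd0] at hz
      exact hx hz.symm
    -- dd divisibility facts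
    have hdd : ∀ k : ℕ, 1 ≤ k → (q ^ Nat.gcd k r - 1 ∣ q ^ k - 1) ∧
        (q ^ Nat.gcd k r - 1 ∣ q ^ r - 1) ∧ 0 < q ^ Nat.gcd k r - 1 := by
      intro k hk
      have hdvd : ∀ a b : ℕ, a ∣ b → q ^ a - 1 ∣ q ^ b - 1 := by
        intro a b hab
        obtain ⟨c, rfl⟩ := hab
        simpa [← pow_mul] using Nat.sub_dvd_pow_sub_pow (q ^ a) 1 c
      have hgpos : 0 < Nat.gcd k r := Nat.pos_of_ne_zero fun h0 => by
        have := Nat.eq_zero_of_gcd_eq_zero_left h0; omega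
      exact ⟨hdvd _ _ (Nat.gcd_dvd_left k r), hdvd _ _ (Nat.gcd_dvd_right k r),
        hνpos _ hgpos⟩
    have hspos : ∀ k, 1 ≤ k → 0 < (q ^ r - 1) / (q ^ Nat.gcd k r - 1) := fun k hk =>
      Nat.div_pos (Nat.le_of_dvd (hνpos r hr) (hdd k hk).2.1) (hdd k hk).2.2
    -- the set of relevant indices
    set S' := (Finset.Icc 1 (r - 1)).filter (fun k => g k ≠ 0) with hS'
    have hmemS : ∀ k, k ∈ S' ↔ (1 ≤ k ∧ k ≤ r - 1 ∧ g k ≠ 0) := by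
      intro k
      rw [hS', Finset.mem_filter, Finset.mem_Icc, and_assoc]
    have hrS : r ∉ S' := by
      intro hmem
      have := (hmemS r).mp hmem
      omega
    -- single-index consequences of hJ
    have hJ1 : ∀ k, 1 ≤ k → k ≤ r - 1 →
        g k ^ ((q ^ r - 1) / (q ^ Nat.gcd k r - 1)) * h r ^ ((q ^ k - 1) / (q ^ Nat.gcd k r - 1))
        = h k ^ ((q ^ r - 1) / (q ^ Nat.gcd k r - 1))
          * g r ^ ((q ^ k - 1) / (q ^ Nat.gcd k r - 1)) := by
      intro k hk1 hk2
      have hr2 : 1 ≤ r - 1 := le_trans hk1 hk2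
      have hg2 : Nat.gcd (q ^ r - 1) (q ^ k - 1) = q ^ Nat.gcd k r - 1 := by
        rw [Nat.gcd_comm, PotemineAux.gcd_pow_sub_one q (by omega) k r]
      have inst := hJ 1 le_rfl hr2 (fun _ => k) monotone_const (fun _ => ⟨hk1, hk2⟩)
        (fun _ => (q ^ r - 1) / (q ^ Nat.gcd k r - 1)) ((q ^ k - 1) / (q ^ Nat.gcd k r - 1))
        (fun i => le_rfl) ?_ ?_
      · simpa using inst
      · rw [Fin.sum_univ_one]
        rw [mul_comm ((q ^ r - 1) / (q ^ Nat.gcd k r - 1)) _]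
        rw [PotemineAux.mul_div_swap (hdd k hk1).2.2 (hdd k hk1).1 (hdd k hk1).2.1]
        exact Nat.mul_comm _ _
      · have huniv : (Finset.univ.gcd fun _ : Fin 1 => (q ^ r - 1) / (q ^ Nat.gcd k r - 1))
            = (q ^ r - 1) / (q ^ Nat.gcd k r - 1) := by
          simp
        rw [huniv]
        have hpos : 0 < Nat.gcd (q ^ r - 1) (q ^ k - 1) := by
          rw [hg2]; exact (hdd k hk1).2.2
        have := Nat.coprime_div_gcd_div_gcd hpos
        rw [hg2] at this
        exact this
    have hgh : ∀ k, 1 ≤ k → k ≤ r - 1 → g k = 0 → h k = 0 := by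
      intro k hk1 hk2 hg0
      by_contra hh0
      have h1 := hJ1 k hk1 hk2
      rw [hg0, zero_pow (hspos k hk1).ne'] at h1
      rw [zero_mul] at h1
      exact (mul_ne_zero (pow_ne_zero _ hh0) (pow_ne_zero _ hgr)) h1.symm
    have hhS : ∀ k ∈ S', h k ≠ 0 := by
      intro k hk
      obtain ⟨hk1, hk2, hgk⟩ := (hmemS k).mp hk
      by_contra hh0
      have h1 := hJ1 k hk1 hk2
      rw [hh0, zero_pow (hspos k hk1).ne', zero_mul] at h1
      exact (mul_ne_zero (pow_ne_zero _ hgk) (pow_ne_zero _ hhr)) h1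
    have hcid : ∀ k ∈ S',
        (g k / h k) ^ ((q ^ r - 1) / (q ^ Nat.gcd k r - 1))
        = (g r / h r) ^ ((q ^ k - 1) / (q ^ Nat.gcd k r - 1)) := by
      intro k hk
      obtain ⟨hk1, hk2, hgk⟩ := (hmemS k).mp hk
      rw [div_pow, div_pow,
        div_eq_div_iff (pow_ne_zero _ (hhS k hk)) (pow_ne_zero _ hhr)]
      linear_combination hJ1 k hk1 hk2
    obtain ⟨w, hw0, hw⟩ := hroot (g r / h r) (div_ne_zero hgr hhr) (q ^ r - 1) dvd_rfl
    -- reindexing between `Fin (r-1)` and `Icc 1 (r-1)`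
    have hreidxN : ∀ f : ℕ → ℕ,
        (∑ i : Fin (r - 1), f ((i : ℕ) + 1)) = ∑ k ∈ Finset.Icc 1 (r - 1), f k := by
      intro f
      rw [Fin.sum_univ_eq_sum_range (fun i => f (i + 1)) (r - 1)]
      rw [← Finset.Ico_add_one_right_eq_Icc, Finset.sum_Ico_eq_sum_range]
      have h1 : r - 1 + 1 - 1 = r - 1 := by omega
      rw [h1]
      exact Finset.sum_congr rfl fun i _ => by rw [add_comm]
    have hreidxF : ∀ f : ℕ → F,
        (∏ i : Fin (r - 1), f ((i : ℕ) + 1)) = ∏ k ∈ Finset.Icc 1 (r - 1), f k := by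
      intro f
      rw [Fin.prod_univ_eq_prod_range (fun i => f (i + 1)) (r - 1)]
      rw [← Finset.Ico_add_one_right_eq_Icc, Finset.prod_Ico_eq_prod_range]
      have h1 : r - 1 + 1 - 1 = r - 1 := by omega
      rw [h1]
      exact Finset.prod_congr rfl fun i _ => by rw [add_comm]
    -- the bounded pure relation lemma, in zeta form
    have hpure : ∀ tb : ℕ → ℕ, (∀ k ∈ S', tb k ≤ (q ^ r - 1) / (q ^ Nat.gcd k r - 1)) →
        ∀ m : ℕ, (∑ k ∈ S', tb k * (q ^ k - 1) = m * (q ^ r - 1)) →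
        ∏ k ∈ S', ((g k / h k) * (w ^ (q ^ k - 1))⁻¹) ^ tb k = 1 := by
      intro tb hbd m hsum
      have hcform : ∏ k ∈ S', (g k / h k) ^ tb k = (g r / h r) ^ m := by
        by_cases htriv : ∀ k ∈ S', tb k = 0
        · have h0 : ∑ k ∈ S', tb k * (q ^ k - 1) = 0 :=
            Finset.sum_eq_zero fun k hk => by rw [htriv k hk, zero_mul]
          have hm0 : m = 0 := by
            rw [h0] at hsum
            rcases Nat.mul_eq_zero.mp hsum.symm with h1 | h1
            · exact h1
            · have := hνpos r hr; omega
          rw [hm0, pow_zero]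
          exact Finset.prod_eq_one fun k hk => by rw [htriv k hk, pow_zero]
        · push_neg at htriv
          obtain ⟨k₀, hk₀S, hk₀⟩ := htriv
          obtain ⟨hk₀1, hk₀2, -⟩ := (hmemS k₀).mp hk₀S
          have hr2 : 1 ≤ r - 1 := le_trans hk₀1 hk₀2
          set tt : ℕ → ℕ := fun k => if k ∈ S' then tb k else 0 with htt
          set G := (Finset.Icc 1 (r - 1)).gcd tt with hG
          have hG0 : G ≠ 0 := by
            intro h0
            have h1 := Finset.gcd_eq_zero_iff.mp h0 k₀ (Finset.mem_Icc.mpr ⟨hk₀1, hk₀2⟩)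
            rw [htt] at h1
            simp only [if_pos hk₀S] at h1
            exact hk₀ h1
          set E := Nat.gcd G m with hE
          have hE0 : E ≠ 0 := fun h0 => hG0 (Nat.gcd_eq_zero_iff.mp h0).1
          have hEG : E ∣ G := Nat.gcd_dvd_left _ _
          have hEm : E ∣ m := Nat.gcd_dvd_right _ _
          have hEt : ∀ k ∈ Finset.Icc 1 (r - 1), E ∣ tt k := fun k hk =>
            hEG.trans (Finset.gcd_dvd hk)
          have hmemI : ∀ i : Fin (r - 1), ((i : ℕ) + 1) ∈ Finset.Icc 1 (r - 1) := fun i =>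
            Finset.mem_Icc.mpr ⟨by omega, by have := i.isLt; omega⟩
          have hIccS : ∑ k ∈ Finset.Icc 1 (r - 1), tt k * (q ^ k - 1)
              = ∑ k ∈ S', tb k * (q ^ k - 1) := by
            rw [hS', Finset.sum_filter]
            refine Finset.sum_congr rfl fun k hk => ?_
            by_cases hgk : g k ≠ 0
            · rw [if_pos hgk]
              have hkS : k ∈ S' := by
                rw [hmemS]
                have := Finset.mem_Icc.mp hk
                exact ⟨this.1, this.2, hgk⟩
              rw [htt]; simp only [if_pos hkS]
            · rw [if_neg hgk]
              have hkS : k ∉ S' := fun hc => hgk ((hmemS k).mp hc).2.2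
              rw [htt]; simp only [if_neg hkS, zero_mul]
          have happ := hJ (r - 1) hr2 le_rfl (fun i : Fin (r - 1) => (i : ℕ) + 1)
            (fun i j hij => by
              dsimp only
              have h2 : (i : ℕ) ≤ (j : ℕ) := hij
              omega)
            (fun i => by
              exact ⟨by omega, by have := i.isLt; omega⟩)
            (fun i => tt ((i : ℕ) + 1) / E) (m / E) ?_ ?_ ?_
          rotate_left
          · -- bounds
            intro i
            refine le_trans (Nat.div_le_self _ _) ?_
            by_cases hmem : ((i : ℕ) + 1) ∈ S'
            · rw [htt]; simp only [if_pos hmem]; exact hbd _ hmem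
            · rw [htt]; simp only [if_neg hmem]; exact Nat.zero_le _
          · -- sum
            refine Nat.eq_of_mul_eq_mul_left (Nat.pos_of_ne_zero hE0) ?_
            calc E * ∑ i : Fin (r - 1), tt ((i : ℕ) + 1) / E * (q ^ ((i : ℕ) + 1) - 1)
                = ∑ i : Fin (r - 1), tt ((i : ℕ) + 1) * (q ^ ((i : ℕ) + 1) - 1) := by
                  rw [Finset.mul_sum]
                  refine Finset.sum_congr rfl fun i _ => ?_
                  rw [← Nat.mul_assoc, Nat.mul_div_cancel' (hEt _ (hmemI i))]
              _ = ∑ k ∈ Finset.Icc 1 (r - 1), tt k * (q ^ k - 1) :=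
                  hreidxN (fun k => tt k * (q ^ k - 1))
              _ = m * (q ^ r - 1) := by rw [hIccS, hsum]
              _ = E * (m / E * (q ^ r - 1)) := by
                  rw [← Nat.mul_assoc, Nat.mul_div_cancel' hEm]
          · -- gcd
            have huniv : (Finset.univ.gcd fun i : Fin (r - 1) => tt ((i : ℕ) + 1) / E)
                = G / E := by
              refine Nat.dvd_antisymm ?_ ?_
              · rw [Nat.dvd_div_iff_mul_dvd hEG]
                refine Finset.dvd_gcd fun k hk => ?_
                obtain ⟨hk1, hk2⟩ := Finset.mem_Icc.mp hk
                set i : Fin (r - 1) := ⟨k - 1, by omega⟩ with hi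
                have hki : (i : ℕ) + 1 = k := by
                  rw [hi]
                  show k - 1 + 1 = k
                  omega
                have h1 : (Finset.univ.gcd fun i : Fin (r - 1) => tt ((i : ℕ) + 1) / E)
                    ∣ tt k / E := by
                  have h2 : (Finset.univ.gcd fun i : Fin (r - 1) => tt ((i : ℕ) + 1) / E)
                      ∣ tt ((i : ℕ) + 1) / E :=
                    Finset.gcd_dvd (Finset.mem_univ i)
                  rwa [hki] at h2
                have h3 := mul_dvd_mul_left E h1
                rwa [Nat.mul_div_cancel' (hEt k hk)] at h3
              · refine Finset.dvd_gcd fun i _ => ?_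
                exact PotemineAux.div_dvd_div hE0 hEG (Finset.gcd_dvd (hmemI i))
            rw [huniv]
            exact Nat.coprime_div_gcd_div_gcd (Nat.pos_of_ne_zero (hE ▸ hE0))
          -- use the conclusion
          have hhprod : (∏ i : Fin (r - 1), h ((i : ℕ) + 1) ^ (tt ((i : ℕ) + 1) / E)) ≠ 0 := by
            rw [Finset.prod_ne_zero_iff]
            intro i _
            by_cases hmem : ((i : ℕ) + 1) ∈ S'
            · exact pow_ne_zero _ (hhS _ hmem)
            · have h1 : tt ((i : ℕ) + 1) = 0 := by rw [htt]; simp only [if_neg hmem]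
              rw [h1, Nat.zero_div, pow_zero]
              exact one_ne_zero
          have hcf1 : ∏ i : Fin (r - 1), (g ((i : ℕ) + 1) / h ((i : ℕ) + 1))
              ^ (tt ((i : ℕ) + 1) / E) = (g r / h r) ^ (m / E) := by
            have hsplit : ∏ i : Fin (r - 1), (g ((i : ℕ) + 1) / h ((i : ℕ) + 1))
                ^ (tt ((i : ℕ) + 1) / E)
                = (∏ i : Fin (r - 1), g ((i : ℕ) + 1) ^ (tt ((i : ℕ) + 1) / E))
                  / ∏ i : Fin (r - 1), h ((i : ℕ) + 1) ^ (tt ((i : ℕ) + 1) / E) := by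
              rw [← Finset.prod_div_distrib]
              exact Finset.prod_congr rfl fun i _ => div_pow _ _ _
            rw [hsplit, div_pow, div_eq_div_iff hhprod (pow_ne_zero _ hhr)]
            linear_combination happ
          have hcf2 : ∏ i : Fin (r - 1), (g ((i : ℕ) + 1) / h ((i : ℕ) + 1))
              ^ tt ((i : ℕ) + 1) = (g r / h r) ^ m := by
            calc ∏ i : Fin (r - 1), (g ((i : ℕ) + 1) / h ((i : ℕ) + 1)) ^ tt ((i : ℕ) + 1)
                = ∏ i : Fin (r - 1), ((g ((i : ℕ) + 1) / h ((i : ℕ) + 1))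
                    ^ (tt ((i : ℕ) + 1) / E)) ^ E := by
                  refine Finset.prod_congr rfl fun i _ => ?_
                  rw [← pow_mul, Nat.div_mul_cancel (hEt _ (hmemI i))]
              _ = (∏ i : Fin (r - 1), (g ((i : ℕ) + 1) / h ((i : ℕ) + 1))
                    ^ (tt ((i : ℕ) + 1) / E)) ^ E := Finset.prod_pow _ _ _
              _ = ((g r / h r) ^ (m / E)) ^ E := by rw [hcf1]
              _ = (g r / h r) ^ m := by rw [← pow_mul, Nat.div_mul_cancel hEm]
          have hprodS : ∏ k ∈ S', (g k / h k) ^ tb k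
              = ∏ k ∈ Finset.Icc 1 (r - 1), (g k / h k) ^ tt k := by
            rw [hS', Finset.prod_filter]
            refine Finset.prod_congr rfl fun k hk => ?_
            by_cases hgk : g k ≠ 0
            · rw [if_pos hgk]
              have hkS : k ∈ S' := by
                rw [hmemS]
                have := Finset.mem_Icc.mp hk
                exact ⟨this.1, this.2, hgk⟩
              rw [htt]; simp only [if_pos hkS]
            · rw [if_neg hgk]
              have hkS : k ∉ S' := fun hc => hgk ((hmemS k).mp hc).2.2
              rw [htt]; simp only [if_neg hkS, pow_zero]
          rw [hprodS, ← hreidxF (fun k => (g k / h k) ^ tt k)]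
          exact hcf2
      -- pass from the c-form to the zeta-form
      calc ∏ k ∈ S', ((g k / h k) * (w ^ (q ^ k - 1))⁻¹) ^ tb k
          = (∏ k ∈ S', (g k / h k) ^ tb k) * ∏ k ∈ S', ((w ^ (q ^ k - 1)) ^ tb k)⁻¹ := by
            rw [← Finset.prod_mul_distrib]
            exact Finset.prod_congr rfl fun k _ => by rw [mul_pow, inv_pow]
        _ = (g r / h r) ^ m * (∏ k ∈ S', w ^ ((q ^ k - 1) * tb k))⁻¹ := by
            rw [hcform, ← Finset.prod_inv_distrib]
            congr 1
            exact Finset.prod_congr rfl fun k _ => by rw [pow_mul]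
        _ = (g r / h r) ^ m * (w ^ (∑ k ∈ S', (q ^ k - 1) * tb k))⁻¹ := by
            rw [Finset.prod_pow_eq_pow_sum]
        _ = (g r / h r) ^ m * ((g r / h r) ^ m)⁻¹ := by
            have hsum2 : ∑ k ∈ S', (q ^ k - 1) * tb k = (q ^ r - 1) * m := by
              rw [mul_comm (q ^ r - 1) m, ← hsum]
              exact Finset.sum_congr rfl fun k _ => Nat.mul_comm _ _
            rw [hsum2, pow_mul, hw]
        _ = 1 := mul_inv_cancel₀ (pow_ne_zero _ (div_ne_zero hgr hhr))
    -- the key torsion lemma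
    have hkey : ∀ t : ℕ → ℤ,
        (((q ^ r - 1 : ℕ) : ℤ) ∣ ∑ k ∈ S', t k * ((q ^ k - 1 : ℕ) : ℤ)) →
        ∏ k ∈ S', ((g k / h k) * (w ^ (q ^ k - 1))⁻¹) ^ t k = 1 := by
      intro t ht
      refine PotemineAux.key_abstract S' (fun k => q ^ k - 1)
        (fun k => (q ^ r - 1) / (q ^ Nat.gcd k r - 1)) (q ^ r - 1)
        (fun k => (g k / h k) * (w ^ (q ^ k - 1))⁻¹) ?_ ?_ ?_ (hνpos r hr) t ht
      · intro k hk
        obtain ⟨hk1, hk2, hgk⟩ := (hmemS k).mp hk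
        refine ⟨hspos k hk1, ⟨(q ^ k - 1) / (q ^ Nat.gcd k r - 1), ?_⟩⟩
        rw [Nat.mul_comm ((q ^ r - 1) / (q ^ Nat.gcd k r - 1)) (q ^ k - 1)]
        exact PotemineAux.mul_div_swap (hdd k hk1).2.2 (hdd k hk1).1 (hdd k hk1).2.1
      · intro k hk
        obtain ⟨hk1, hk2, hgk⟩ := (hmemS k).mp hk
        exact mul_ne_zero (div_ne_zero hgk (hhS k hk))
          (inv_ne_zero (pow_ne_zero _ hw0))
      · exact hpure
    -- assemble the isomorphism
    obtain ⟨u, hu0, hu⟩ := PotemineAux.assemble S' (fun k => q ^ k - 1) (q ^ r - 1) r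
      (fun k => g k / h k) (fun k => (g k / h k) * (w ^ (q ^ k - 1))⁻¹) hrS
      (fun k hk => by
        rcases Finset.mem_insert.mp hk with hkr | hkS
        · subst hkr; exact hνpos k hr
        · exact hνpos k ((hmemS k).mp hkS).1)
      rfl
      (fun k hk => by
        rcases Finset.mem_insert.mp hk with hkr | hkS
        · subst hkr; exact div_ne_zero hgr hhr
        · exact div_ne_zero ((hmemS k).mp hkS).2.2 (hhS k hkS))
      hroot w hw0 hw
      (fun k hk => by
        rw [mul_assoc, inv_mul_cancel₀ (pow_ne_zero _ hw0), mul_one])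
      hkey
    refine ⟨u, hu0, ?_⟩
    have huse : ∀ j, j ∈ insert r S' → u ^ q ^ j * h j = u * g j := by
      intro j hj
      have h1 := hu j hj
      have hhj : h j ≠ 0 := by
        rcases Finset.mem_insert.mp hj with hjr | hjS
        · subst hjr; exact hhr
        · exact hhS j hjS
      have h2 : q ^ j = (q ^ j - 1) + 1 := by have := hq1 j; omega
      rw [h2, pow_succ, h1]
      calc g j / h j * u * h j = u * (g j / h j * h j) := by ring
        _ = u * g j := by rw [div_mul_cancel₀ _ hhj]
    intro i hi
    rw [Finset.mem_Icc] at hi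
    rcases eq_or_ne i r with hir | hir
    · subst hir; exact huse i (Finset.mem_insert_self _ _)
    · by_cases hgi : g i = 0
      · have hhi : h i = 0 := hgh i hi.1 (by omega) hgi
        rw [hgi, hhi, mul_zero, mul_zero]
      · exact huse i (Finset.mem_insert_of_mem ((hmemS i).mpr ⟨hi.1, by omega, hgi⟩))
end
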